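/- arXiv:1207.2143 — 13 statements merged into one kernel-verified Lean document; each statement's English description precedes it below -/
import Mathlib

section
/- Let H be a complex Hilbert space and let A, B, C be bounded linear operators on H. Suppose there are constants M > 0 and δ > 0 such that ‖exp(−t•A)‖ ≤ M·e^{−δt} for all t ≥ 0. Then for every x ≥ 0 the Bochner integral R_x = ∫_x^∞ exp(−t•A) ∘ B ∘ C ∘ exp(−t•A) dt converges in the bounded operators on H; it satisfies the norm bound ‖R_x‖ ≤ (M²·‖B‖·‖C‖/(2δ))·e^{−2δx}; it satisfies A ∘ R_x + R_x ∘ A = exp(−x•A) ∘ B ∘ C ∘ exp(−x•A) for every x ≥ 0; and the map x ↦ R_x is differentiable on (0,∞) with derivative dR_x/dx = −(A ∘ R_x + R_x ∘ A). -/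
/-!
The semigroup bound gives `‖e^{-tA} B C e^{-tA}‖ ≤ M² ‖B‖ ‖C‖ e^{-2δt}`, so the integrand is
integrable on every half-line and its integral obeys the stated bound. The integrand `f` solves
`f' = -(A f + f A)` and tends to `0` at infinity, so by the fundamental theorem of calculus on
`(x, ∞)` the operator `X ↦ A X + X A` maps `R_x = ∫_x^∞ f` to `f x`; and `R_x = R_0 - ∫_0^x f`
has derivative `-f x`.
-/

open MeasureTheory Set Filter Topology NormedSpace

section HalfLine

variable {E : Type*} [NormedAddCommGroup E]

theorem integrableOn_Ioi_of_norm_le_mul_exp {f : ℝ → E} {K c x : ℝ} (hc : 0 < c)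
    (hf : AEStronglyMeasurable f (volume.restrict (Ioi x)))
    (hle : ∀ t ∈ Ioi x, ‖f t‖ ≤ K * Real.exp (-c * t)) :
    IntegrableOn f (Ioi x) :=
  Integrable.mono' ((exp_neg_integrableOn_Ioi x hc).const_mul K) hf
    ((ae_restrict_iff' measurableSet_Ioi).2 (Eventually.of_forall hle))

variable [NormedSpace ℝ E]

theorem norm_integral_Ioi_le_of_norm_le_mul_exp {f : ℝ → E} {K c x : ℝ} (hc : 0 < c)
    (hle : ∀ t ∈ Ioi x, ‖f t‖ ≤ K * Real.exp (-c * t)) :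
    ‖∫ t in Ioi x, f t‖ ≤ K / c * Real.exp (-c * x) := by
  calc ‖∫ t in Ioi x, f t‖ ≤ ∫ t in Ioi x, K * Real.exp (-c * t) :=
        norm_integral_le_of_norm_le ((exp_neg_integrableOn_Ioi x hc).const_mul K)
          ((ae_restrict_iff' measurableSet_Ioi).2 (Eventually.of_forall hle))
    _ = K / c * Real.exp (-c * x) := by
        rw [integral_const_mul, integral_exp_mul_Ioi (neg_neg_iff_pos.2 hc)]
        field_simp

variable [CompleteSpace E]

theorem hasDerivAt_integral_Ioi {f : ℝ → E} {a x : ℝ} (hf : IntegrableOn f (Ioi a))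
    (hax : a < x) (hcont : ContinuousAt f x) :
    HasDerivAt (fun y => ∫ t in Ioi y, f t) (-f x) x := by
  have hsplit : (fun y => ∫ t in Ioi y, f t) =ᶠ[𝓝 x]
      fun y => (∫ t in Ioi a, f t) - ∫ t in a..y, f t := by
    filter_upwards [Ioi_mem_nhds hax] with y hy
    rw [← intervalIntegral.integral_Ioi_sub_Ioi hf (le_of_lt hy), sub_sub_cancel]
  refine HasDerivAt.congr_of_eventuallyEq ?_ hsplit
  refine (intervalIntegral.integral_hasDerivAt_right ?_ ?_ hcont).const_sub _
  · exact (intervalIntegrable_iff_integrableOn_Ioc_of_le hax.le).2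
      (hf.mono_set Ioc_subset_Ioi_self)
  · exact AEStronglyMeasurable.stronglyMeasurableAtFilter_of_mem hf.aestronglyMeasurable
      (Ioi_mem_nhds hax)

theorem ContinuousLinearMap.map_integral_Ioi_of_hasDerivAt_neg_map (L : E →L[ℝ] E)
    {f : ℝ → E} {x : ℝ} (hderiv : ∀ t ∈ Ici x, HasDerivAt f (-L (f t)) t)
    (hf : IntegrableOn f (Ioi x)) :
    L (∫ t in Ioi x, f t) = f x := by
  have hderiv' : ∀ t ∈ Ioi x, HasDerivAt f (-L (f t)) t :=
    fun t ht => hderiv t (Ioi_subset_Ici_self ht)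
  have hf' : IntegrableOn (fun t => -L (f t)) (Ioi x) := (L.integrable_comp hf).neg
  have hlim : Tendsto f atTop (𝓝 0) :=
    tendsto_zero_of_hasDerivAt_of_integrableOn_Ioi hderiv' hf' hf
  have hftc := integral_Ioi_of_hasDerivAt_of_tendsto
    (hderiv x self_mem_Ici).continuousAt.continuousWithinAt hderiv' hf' hlim
  rw [integral_neg, zero_sub, neg_inj] at hftc
  rw [← L.integral_comp_comm hf, hftc]

end HalfLine

section BanachAlgebra

variable {𝔸 : Type*} [NormedRing 𝔸] [NormedAlgebra ℝ 𝔸] [CompleteSpace 𝔸]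

theorem mul_integral_Ioi_add_integral_Ioi_mul (A : 𝔸) {f : ℝ → 𝔸} {x : ℝ}
    (hderiv : ∀ t ∈ Ici x, HasDerivAt f (-(A * f t + f t * A)) t)
    (hf : IntegrableOn f (Ioi x)) :
    A * (∫ t in Ioi x, f t) + (∫ t in Ioi x, f t) * A = f x :=
  (ContinuousLinearMap.mul ℝ 𝔸 A + (ContinuousLinearMap.mul ℝ 𝔸).flip A)
    |>.map_integral_Ioi_of_hasDerivAt_neg_map hderiv hf

theorem hasDerivAt_exp_neg_smul_mul_mul (A X : 𝔸) (t : ℝ) :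
    HasDerivAt (fun s : ℝ => exp (-(s • A)) * X * exp (-(s • A)))
      (-(A * (exp (-(t • A)) * X * exp (-(t • A))) +
        exp (-(t • A)) * X * exp (-(t • A)) * A)) t := by
  have hL : HasDerivAt (fun s : ℝ => exp (s • -A)) (-A * exp (t • -A)) t :=
    hasDerivAt_exp_smul_const' (-A) t
  have hR : HasDerivAt (fun s : ℝ => exp (s • -A)) (exp (t • -A) * -A) t :=
    hasDerivAt_exp_smul_const (-A) t
  simp only [smul_neg] at hL hR
  exact ((hL.mul_const X).mul hR).congr_deriv (by noncomm_ring)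

end BanachAlgebra

theorem lyapunov_integral_solution_general
    {H : Type*} [NormedAddCommGroup H] [InnerProductSpace ℂ H] [CompleteSpace H]
    (A B C : H →L[ℂ] H) (M δ : ℝ) (hδ : 0 < δ)
    (hA : ∀ t : ℝ, 0 ≤ t → ‖NormedSpace.exp (-(t • A))‖ ≤ M * Real.exp (-δ * t))
    (R : ℝ → (H →L[ℂ] H))
    (hR : ∀ x : ℝ, 0 ≤ x → R x = ∫ t in Set.Ioi x,
      NormedSpace.exp (-(t • A)) * B * C * NormedSpace.exp (-(t • A))) :
    (∀ x : ℝ, 0 ≤ x → MeasureTheory.IntegrableOn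
        (fun t : ℝ => NormedSpace.exp (-(t • A)) * B * C * NormedSpace.exp (-(t • A)))
        (Set.Ioi x)) ∧
    (∀ x : ℝ, 0 ≤ x →
        ‖R x‖ ≤ M ^ 2 * ‖B‖ * ‖C‖ / (2 * δ) * Real.exp (-(2 * δ) * x)) ∧
    (∀ x : ℝ, 0 ≤ x → A * R x + R x * A
        = NormedSpace.exp (-(x • A)) * B * C * NormedSpace.exp (-(x • A))) ∧
    (∀ x : ℝ, 0 < x → HasDerivAt R (-(A * R x + R x * A)) x) := by
  set f : ℝ → (H →L[ℂ] H) := fun t => exp (-(t • A)) * (B * C) * exp (-(t • A))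
  have hf : (fun t : ℝ => exp (-(t • A)) * B * C * exp (-(t • A))) = f := by
    simp only [f, mul_assoc]
  simp only [hf] at hR ⊢
  have hderiv (t : ℝ) : HasDerivAt f (-(A * f t + f t * A)) t :=
    hasDerivAt_exp_neg_smul_mul_mul A (B * C) t
  have hcont : Continuous f := continuous_iff_continuousAt.2 fun t => (hderiv t).continuousAt
  have hbound (x : ℝ) (hx : 0 ≤ x) (t : ℝ) (ht : t ∈ Ioi x) :
      ‖f t‖ ≤ M ^ 2 * ‖B‖ * ‖C‖ * Real.exp (-(2 * δ) * t) := by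
    have hEt := hA t (hx.trans ht.out.le)
    have hMe : 0 ≤ M * Real.exp (-δ * t) := (norm_nonneg _).trans hEt
    calc ‖f t‖ ≤ ‖exp (-(t • A))‖ * (‖B‖ * ‖C‖) * ‖exp (-(t • A))‖ :=
          norm_mul₃_le.trans (by gcongr; exact norm_mul_le B C)
      _ ≤ M * Real.exp (-δ * t) * (‖B‖ * ‖C‖) * (M * Real.exp (-δ * t)) := by
          gcongr
      _ = M ^ 2 * ‖B‖ * ‖C‖ * Real.exp (-(2 * δ) * t) := by
          rw [show -(2 * δ) * t = -δ * t + -δ * t by ring, Real.exp_add]; ring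
  have hint (x : ℝ) (hx : 0 ≤ x) : IntegrableOn f (Ioi x) :=
    integrableOn_Ioi_of_norm_le_mul_exp (by positivity) hcont.aestronglyMeasurable (hbound x hx)
  have hlyap (x : ℝ) (hx : 0 ≤ x) : A * R x + R x * A = f x := by
    rw [hR x hx]
    exact mul_integral_Ioi_add_integral_Ioi_mul A (fun t _ => hderiv t) (hint x hx)
  refine ⟨hint, fun x hx => ?_, hlyap, fun x hx => ?_⟩
  · rw [hR x hx]
    exact norm_integral_Ioi_le_of_norm_le_mul_exp (by positivity) (hbound x hx)
  · rw [hlyap x hx.le]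
    refine (hasDerivAt_integral_Ioi (hint 0 le_rfl) hx hcont.continuousAt).congr_of_eventuallyEq ?_
    filter_upwards [Ioi_mem_nhds hx] with y hy using hR y (le_of_lt hy)

/-- Existence of the solution `R_x = ∫_x^∞ e^{-tA} B C e^{-tA} dt` of Lyapunov's equation for
a bounded operator `A` generating an exponentially decaying semigroup
(Lemma 2.2(i) of the paper, bounded-operator form). -/
theorem lyapunov_integral_solution
    {H : Type*} [NormedAddCommGroup H] [InnerProductSpace ℂ H] [CompleteSpace H]
    (A B C : H →L[ℂ] H) (M δ : ℝ) (hM : 0 < M) (hδ : 0 < δ)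
    (hA : ∀ t : ℝ, 0 ≤ t → ‖NormedSpace.exp (-(t • A))‖ ≤ M * Real.exp (-δ * t))
    (R : ℝ → (H →L[ℂ] H))
    (hR : ∀ x : ℝ, 0 ≤ x → R x = ∫ t in Set.Ioi x,
      NormedSpace.exp (-(t • A)) * B * C * NormedSpace.exp (-(t • A))) :
    (∀ x : ℝ, 0 ≤ x → MeasureTheory.IntegrableOn
        (fun t : ℝ => NormedSpace.exp (-(t • A)) * B * C * NormedSpace.exp (-(t • A)))
        (Set.Ioi x)) ∧
    (∀ x : ℝ, 0 ≤ x →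
        ‖R x‖ ≤ M ^ 2 * ‖B‖ * ‖C‖ / (2 * δ) * Real.exp (-(2 * δ) * x)) ∧
    (∀ x : ℝ, 0 ≤ x → A * R x + R x * A
        = NormedSpace.exp (-(x • A)) * B * C * NormedSpace.exp (-(x • A))) ∧
    (∀ x : ℝ, 0 < x → HasDerivAt R (-(A * R x + R x * A)) x) :=
  lyapunov_integral_solution_general A B C M δ hδ hA R hR
end

section
/- Let H be a complex Hilbert space and let A be a bounded linear operator on H such that ‖exp(−t•A)‖ ≤ M·e^{−δt} for all t ≥ 0, for some constants M > 0 and δ > 0. If V is a bounded linear operator on H with A ∘ V + V ∘ A = 0, then V = 0. Consequently, for any bounded operators B, C on H there is at most one bounded operator R₀ with A ∘ R₀ + R₀ ∘ A = B ∘ C. -/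
/-!
If `A` anticommutes with `V`, then `V = e^{-tA} V e^{-tA}` for every `t`, and the right-hand side
tends to `0` as `t → ∞` because `e^{-tA}` decays exponentially. Uniqueness follows by applying this
to the difference of two solutions.
-/

open Filter Topology NormedSpace

theorem eq_zero_of_mul_mul_eq_self_of_tendsto_zero {R ι : Type*} [MulZeroClass R]
    [TopologicalSpace R] [ContinuousMul R] [T2Space R] {l : Filter ι} [l.NeBot]
    {u : ι → R} {v : R} (hu : Tendsto u l (𝓝 0)) (hv : ∀ᶠ i in l, u i * v * u i = v) :
    v = 0 := by
  have hlim : Tendsto (fun i => u i * v * u i) l (𝓝 0) := by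
    simpa using (hu.mul_const v).mul hu
  exact tendsto_nhds_unique (tendsto_const_nhds.congr' (hv.mono fun _ h => h.symm)) hlim

theorem tendsto_zero_of_norm_le_mul_exp_neg {E : Type*} [SeminormedAddGroup E] {f : ℝ → E}
    {M δ : ℝ} (hδ : 0 < δ) (hf : ∀ t, 0 ≤ t → ‖f t‖ ≤ M * Real.exp (-δ * t)) :
    Tendsto f atTop (𝓝 0) := by
  have hexp : Tendsto (fun t => M * Real.exp (-δ * t)) atTop (𝓝 0) := by
    simpa using (Real.tendsto_exp_atBot.comp
      (tendsto_id.const_mul_atTop_of_neg (neg_neg_of_pos hδ))).const_mul M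
  exact squeeze_zero_norm' (eventually_ge_atTop 0 |>.mono hf) hexp

theorem exp_mul_mul_exp_eq_self_of_mul_add_mul_eq_zero {𝔸 : Type*} [NormedRing 𝔸]
    [NormedAlgebra ℚ 𝔸] [CompleteSpace 𝔸] {a v : 𝔸} (h : a * v + v * a = 0) :
    exp a * v * exp a = v := by
  have hsemi : SemiconjBy v a (-a) := by
    rw [SemiconjBy, neg_mul, eq_neg_of_add_eq_zero_right h]
  simpa using hsemi.exp_neg_mul_mul_exp_eq_self

theorem lyapunov_unique_general
    {H : Type*} [NormedAddCommGroup H] [InnerProductSpace ℂ H] [CompleteSpace H]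
    (A : H →L[ℂ] H) (M δ : ℝ) (hδ : 0 < δ)
    (hA : ∀ t : ℝ, 0 ≤ t → ‖NormedSpace.exp (-(t • A))‖ ≤ M * Real.exp (-δ * t)) :
    (∀ V : H →L[ℂ] H, A * V + V * A = 0 → V = 0) ∧
    (∀ B C R₀ R₁ : H →L[ℂ] H,
      A * R₀ + R₀ * A = B * C → A * R₁ + R₁ * A = B * C → R₀ = R₁) := by
  -- instance search does not find the `ℚ`-algebra structure that `exp` needs
  let +nondep : NormedAlgebra ℚ (H →L[ℂ] H) := .restrictScalars ℚ ℂ _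
  have hzero : ∀ V : H →L[ℂ] H, A * V + V * A = 0 → V = 0 := by
    intro V hV
    have hanti : ∀ t : ℝ, -(t • A) * V + V * -(t • A) = 0 := fun t => by
      rw [neg_mul, mul_neg, smul_mul_assoc, mul_smul_comm, ← neg_add, ← smul_add, hV,
        smul_zero, neg_zero]
    exact eq_zero_of_mul_mul_eq_self_of_tendsto_zero (tendsto_zero_of_norm_le_mul_exp_neg hδ hA)
      (.of_forall fun t => exp_mul_mul_exp_eq_self_of_mul_add_mul_eq_zero (hanti t))
  refine ⟨hzero, fun B C R₀ R₁ h₀ h₁ => sub_eq_zero.mp (hzero _ ?_)⟩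
  rw [mul_sub, sub_mul, sub_add_sub_comm, h₀, h₁, sub_self]

/-- Uniqueness of solutions of the Lyapunov equation `A R + R A = B C` when the semigroup
`e^{-tA}` decays exponentially (uniqueness part of Lemma 2.2(i) of the paper). -/
theorem lyapunov_unique
    {H : Type*} [NormedAddCommGroup H] [InnerProductSpace ℂ H] [CompleteSpace H]
    (A : H →L[ℂ] H) (M δ : ℝ) (hM : 0 < M) (hδ : 0 < δ)
    (hA : ∀ t : ℝ, 0 ≤ t → ‖NormedSpace.exp (-(t • A))‖ ≤ M * Real.exp (-δ * t)) :
    (∀ V : H →L[ℂ] H, A * V + V * A = 0 → V = 0) ∧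
    (∀ B C R₀ R₁ : H →L[ℂ] H,
      A * R₀ + R₀ * A = B * C → A * R₁ + R₁ * A = B * C → R₀ = R₁) :=
  lyapunov_unique_general A M δ hδ hA
end

section
/- Let H be a complex Hilbert space, A a bounded linear operator on H with ‖exp(−t•A)‖ ≤ M·e^{−δt} for all t ≥ 0 (M > 0, δ > 0), b ∈ H, and ℓ : H → ℂ a continuous linear functional. Define the scattering function φ(s) = ℓ(exp(−s•A) b) and the operator R_x = ∫_x^∞ exp(−t•A) ∘ (b⊗ℓ) ∘ exp(−t•A) dt (a convergent Bochner integral). Let μ ∈ ℂ and let x ≥ 0 be such that 1 + μ•R_x is invertible in B(H), and set T(x,y) = −ℓ( exp(−x•A) (1 + μ•R_x)⁻¹ exp(−y•A) b ). Then for every y ≥ 0 the integral ∫_x^∞ T(x,z)·φ(z+y) dz converges absolutely and the Gelfand–Levitan equation holds: T(x,y) + φ(x+y) + μ·∫_x^∞ T(x,z)·φ(z+y) dz = 0. -/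
/-!
The integrand of `R_x` has rank one, `(e^{-tA} (b ⊗ ℓ) e^{-tA}) v = ℓ(e^{-tA} v) • e^{-tA} b`, so
with `v = e^{-yA} b`, `P = e^{-xA} (1 + μ R_x)⁻¹` and the semigroup law, the functional
`S ↦ ℓ(P (S v))` maps it to `-T(x,t) φ(t+y)`. The bound `‖e^{-tA}‖ ≤ M e^{-δt}` makes the
integrand Bochner integrable, so `ℓ(P (R_x v)) = -∫_x^∞ T(x,z) φ(z+y) dz`, and the equation is
`ℓ` applied to `P (1 + μ R_x) v = e^{-xA} v`.
-/

open MeasureTheory NormedSpace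

section ExpSemigroup

variable {𝔸 : Type*} [NormedRing 𝔸] [NormedAlgebra ℝ 𝔸] [CompleteSpace 𝔸]

theorem exp_neg_add_smul (a : 𝔸) (s t : ℝ) :
    exp (-((s + t) • a)) = exp (-(s • a)) * exp (-(t • a)) := by
  let : NormedAlgebra ℚ 𝔸 := .restrictScalars ℚ ℝ 𝔸
  rw [add_smul, neg_add]
  exact exp_add_of_commute (((Commute.refl a).smul_left s).smul_right t).neg_left.neg_right

theorem continuous_exp_neg_smul (a : 𝔸) : Continuous fun t : ℝ => exp (-(t • a)) := by
  let : NormedAlgebra ℚ 𝔸 := .restrictScalars ℚ ℝ 𝔸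
  exact exp_continuous.comp (continuous_id.smul continuous_const).neg

end ExpSemigroup

theorem integrableOn_Ioi_mul_mul_of_norm_le_exp {𝔸 : Type*} [NormedRing 𝔸] {E : ℝ → 𝔸}
    (hE : Continuous E) {M δ : ℝ} (hδ : 0 < δ)
    (hbound : ∀ t, 0 ≤ t → ‖E t‖ ≤ M * Real.exp (-δ * t)) (K : 𝔸) {x : ℝ} (hx : 0 ≤ x) :
    IntegrableOn (fun t => E t * K * E t) (Set.Ioi x) := by
  refine Integrable.mono' ((exp_neg_integrableOn_Ioi x (by linarith : 0 < 2 * δ)).const_mul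
    (M * ‖K‖ * M)) ((hE.mul continuous_const).mul hE).aestronglyMeasurable ?_
  filter_upwards [self_mem_ae_restrict measurableSet_Ioi] with t ht
  have hEt := hbound t (hx.trans ht.le)
  calc ‖E t * K * E t‖ ≤ ‖E t‖ * ‖K‖ * ‖E t‖ := norm_mul₃_le
    _ ≤ (M * Real.exp (-δ * t)) * ‖K‖ * (M * Real.exp (-δ * t)) := by
      gcongr
      exact mul_nonneg ((norm_nonneg _).trans hEt) (norm_nonneg K)
    _ = M * ‖K‖ * M * Real.exp (-(2 * δ) * t) := by
      rw [show -(2 * δ) * t = -δ * t + -δ * t by ring, Real.exp_add]; ring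

theorem ContinuousLinearMap.mul_smulRight_mul_apply {R M : Type*} [CommSemiring R]
    [TopologicalSpace R] [TopologicalSpace M] [AddCommMonoid M] [Module R M]
    [ContinuousSMul R M] (S U : M →L[R] M) (ℓ : M →L[R] R) (b v : M) :
    (S * ℓ.smulRight b * U) v = ℓ (U v) • S b := by
  simp [mul_apply_eq_comp]

section RankOneIntegral

variable {𝕜 H : Type*} [RCLike 𝕜] [NormedAddCommGroup H] [NormedSpace 𝕜 H]
variable [NormedSpace ℝ H] [CompleteSpace H]

theorem integrableOn_and_integral_apply_mul_apply {s : Set ℝ} {S U : ℝ → H →L[𝕜] H}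
    {ℓ : H →L[𝕜] 𝕜} {b : H} (hint : IntegrableOn (fun t => S t * ℓ.smulRight b * U t) s)
    (ψ : H →L[𝕜] 𝕜) (v : H) :
    IntegrableOn (fun t => ψ (S t b) * ℓ (U t v)) s ∧
      ∫ t in s, ψ (S t b) * ℓ (U t v) = ψ ((∫ t in s, S t * ℓ.smulRight b * U t) v) := by
  set Φ : (H →L[𝕜] H) →L[𝕜] 𝕜 := ψ.comp (ContinuousLinearMap.apply 𝕜 H v)
  have hΦ : ∀ t, Φ (S t * ℓ.smulRight b * U t) = ψ (S t b) * ℓ (U t v) := fun t => by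
    simp only [Φ, ContinuousLinearMap.comp_apply, ContinuousLinearMap.apply_apply,
      ContinuousLinearMap.mul_smulRight_mul_apply, map_smul, smul_eq_mul, mul_comm]
  simp_rw [← hΦ]
  exact ⟨Φ.integrable_comp hint, Φ.integral_comp_comm hint⟩

end RankOneIntegral

theorem mul_inverse_add_smul_mul_inverse_mul {𝕜 𝔸 : Type*} [CommRing 𝕜] [Ring 𝔸] [Algebra 𝕜 𝔸]
    (S R : 𝔸) (μ : 𝕜) (h : IsUnit (1 + μ • R)) :
    S * Ring.inverse (1 + μ • R) + μ • (S * Ring.inverse (1 + μ • R) * R) = S := by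
  rw [← mul_smul_comm, ← mul_one_add .., mul_assoc, Ring.inverse_mul_cancel _ h, mul_one]

theorem gelfand_levitan_solution_general
    {H : Type*} [NormedAddCommGroup H] [InnerProductSpace ℂ H] [CompleteSpace H]
    (A : H →L[ℂ] H) (b : H) (ℓ : H →L[ℂ] ℂ) (M δ : ℝ) (hδ : 0 < δ)
    (hA : ∀ t : ℝ, 0 ≤ t → ‖NormedSpace.exp (-(t • A))‖ ≤ M * Real.exp (-δ * t))
    (φ : ℝ → ℂ) (hφ : ∀ s : ℝ, φ s = ℓ (NormedSpace.exp (-(s • A)) b))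
    (R : ℝ → (H →L[ℂ] H))
    (hR : ∀ x : ℝ, 0 ≤ x → R x = ∫ t in Set.Ioi x,
      NormedSpace.exp (-(t • A)) * ℓ.smulRight b * NormedSpace.exp (-(t • A)))
    (μ : ℂ) (x : ℝ) (hx : 0 ≤ x) (hinv : IsUnit (1 + μ • R x))
    (T : ℝ → ℂ)
    (hT : ∀ y : ℝ, T y = -ℓ ((NormedSpace.exp (-(x • A)) * Ring.inverse (1 + μ • R x)
        * NormedSpace.exp (-(y • A))) b)) :
    ∀ y : ℝ, 0 ≤ y →
      MeasureTheory.IntegrableOn (fun z : ℝ => T z * φ (z + y)) (Set.Ioi x) ∧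
      T y + φ (x + y) + μ * ∫ z in Set.Ioi x, T z * φ (z + y) = 0 := by
  intro y _
  set E : ℝ → H →L[ℂ] H := fun t => exp (-(t • A))
  set P := E x * Ring.inverse (1 + μ • R x)
  set v := E y b
  have hT' : ∀ z, T z = -(ℓ.comp P) (E z b) := hT
  have hφ' : ∀ z, φ (z + y) = ℓ (E z v) := fun z => by rw [hφ, exp_neg_add_smul]; rfl
  have hTφ : ∀ z, T z * φ (z + y) = -((ℓ.comp P) (E z b) * ℓ (E z v)) := fun z => by
    rw [hT', hφ', neg_mul]
  obtain ⟨hint, hintegral⟩ := integrableOn_and_integral_apply_mul_apply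
    (integrableOn_Ioi_mul_mul_of_norm_le_exp (continuous_exp_neg_smul A) hδ hA (ℓ.smulRight b) hx)
    (ℓ.comp P) v
  simp only [hTφ]
  refine ⟨hint.neg, ?_⟩
  have hresolvent : P + μ • (P * R x) = E x := mul_inverse_add_smul_mul_inverse_mul _ _ _ hinv
  have hresolvent_ℓ := congr(ℓ ($hresolvent v))
  simp only [add_apply, smul_apply, mul_apply_eq_comp,
    map_add, map_smul, smul_eq_mul] at hresolvent_ℓ
  rw [integral_neg, hintegral, ← hR x hx, hT', hφ' x, ContinuousLinearMap.comp_apply,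
    ContinuousLinearMap.comp_apply]
  linear_combination -hresolvent_ℓ

/-- The operator `T_μ(x,y) = -ℓ(e^{-xA}(1+μR_x)⁻¹ e^{-yA} b)` solves the Gelfand--Levitan
integral equation `T(x,y) + φ(x+y) + μ ∫_x^∞ T(x,z) φ(z+y) dz = 0`
(Proposition 2.4(i) of the paper, for bounded `A` and rank-one `BC = b ⊗ ℓ`). -/
theorem gelfand_levitan_solution
    {H : Type*} [NormedAddCommGroup H] [InnerProductSpace ℂ H] [CompleteSpace H]
    (A : H →L[ℂ] H) (b : H) (ℓ : H →L[ℂ] ℂ) (M δ : ℝ) (hM : 0 < M) (hδ : 0 < δ)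
    (hA : ∀ t : ℝ, 0 ≤ t → ‖NormedSpace.exp (-(t • A))‖ ≤ M * Real.exp (-δ * t))
    (φ : ℝ → ℂ) (hφ : ∀ s : ℝ, φ s = ℓ (NormedSpace.exp (-(s • A)) b))
    (R : ℝ → (H →L[ℂ] H))
    (hR : ∀ x : ℝ, 0 ≤ x → R x = ∫ t in Set.Ioi x,
      NormedSpace.exp (-(t • A)) * ℓ.smulRight b * NormedSpace.exp (-(t • A)))
    (μ : ℂ) (x : ℝ) (hx : 0 ≤ x) (hinv : IsUnit (1 + μ • R x))
    (T : ℝ → ℂ)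
    (hT : ∀ y : ℝ, T y = -ℓ ((NormedSpace.exp (-(x • A)) * Ring.inverse (1 + μ • R x)
        * NormedSpace.exp (-(y • A))) b)) :
    ∀ y : ℝ, 0 ≤ y →
      MeasureTheory.IntegrableOn (fun z : ℝ => T z * φ (z + y)) (Set.Ioi x) ∧
      T y + φ (x + y) + μ * ∫ z in Set.Ioi x, T z * φ (z + y) = 0 :=
  gelfand_levitan_solution_general A b ℓ M δ hδ hA φ hφ R hR μ x hx hinv T hT
end

section
/- Let A and E be n×n complex matrices, b an n×1 column vector and c a 1×n row vector, with A·E + E·A = b·c. Set R(x) = exp(−x•A)·E·exp(−x•A). Let μ ∈ ℂ and let I ⊆ ℝ be an open interval on which 1 − μ²·R(x)² is invertible, and define on I the scalar functions v(x) = −c·exp(−x•A)·(1 − μ²R(x)²)⁻¹·exp(−x•A)·b and w(x) = μ·c·exp(−x•A)·(1 − μ²R(x)²)⁻¹·R(x)·exp(−x•A)·b. Then w is differentiable on I and w′(x) = −2μ·v(x)² for all x ∈ I. -/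
/-!
Write `G = exp (-x • A)`, `K = (1 - μ² R²)⁻¹` and `T = A R + R A`. Since `A` commutes with `G`,
`R' = -T` and `T = G (A E + E A) G`. Differentiating the resolvent gives
`(K R)' = K (R' + μ² R R' R) K`, while the resolvent identity rewrites the anticommutator of `A`
with `K R` as `K (T - μ² R T R) K`; the `μ²`-terms cancel and
`(G K R G)' = -2 (G K G) (A E + E A) (G K G)`. When `A E + E A = b c` is of rank one, the functional
`M ↦ c M b` splits the right-hand side into `-2 (c G K G b)²`, that is `w' = -2 μ v²`.
-/

open scoped Matrix Ring

theorem Commute.ringInverse_right {M₀ : Type*} [MonoidWithZero M₀] {a b : M₀}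
    (h : Commute a b) : Commute a b⁻¹ʳ := by
  by_cases hb : IsUnit b
  · rw [Ring.inverse_of_isUnit hb]
    exact Commute.units_inv_right (u := hb.unit) h
  · rw [Ring.inverse_non_unit b hb]
    exact Commute.zero_right a

theorem HasDerivAt.ringInverse {𝕂 𝔸 : Type*} [NontriviallyNormedField 𝕂] [NormedRing 𝔸]
    [NormedAlgebra 𝕂 𝔸] [CompleteSpace 𝔸] {f : 𝕂 → 𝔸} {f' : 𝔸} {x : 𝕂}
    (hf : HasDerivAt f f' x) (hx : IsUnit (f x)) :
    HasDerivAt (fun y => (f y)⁻¹ʳ) (-((f x)⁻¹ʳ * f' * (f x)⁻¹ʳ)) x := by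
  obtain ⟨u, hu⟩ := hx
  have hinv := hasFDerivAt_ringInverse (𝕜 := 𝕂) u
  rw [hu] at hinv
  simpa [← hu, Ring.inverse_unit, Function.comp_def] using hinv.comp_hasDerivAt x hf

section Resolvent

variable {𝕜 𝔸 : Type*} [CommRing 𝕜] [Ring 𝔸] [Algebra 𝕜 𝔸] {s : 𝕜} {r : 𝔸}

theorem commute_inverse_one_sub_smul_sq (s : 𝕜) (r : 𝔸) : Commute r (1 - s • r ^ 2)⁻¹ʳ :=
  ((Commute.one_right r).sub_right (((Commute.refl r).pow_right 2).smul_right s)).ringInverse_right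

theorem inverse_one_sub_smul_sq_mul_mul_inverse (hr : IsUnit (1 - s • r ^ 2)) (d : 𝔸) :
    (1 - s • r ^ 2)⁻¹ʳ * (s • (d * r + r * d)) * (1 - s • r ^ 2)⁻¹ʳ * r + (1 - s • r ^ 2)⁻¹ʳ * d
      = (1 - s • r ^ 2)⁻¹ʳ * (d + s • (r * d * r)) * (1 - s • r ^ 2)⁻¹ʳ := by
  set K := (1 - s • r ^ 2)⁻¹ʳ
  have hK : K * r = r * K := (commute_inverse_one_sub_smul_sq s r).eq.symm
  have hNK : (1 - s • r ^ 2) * K = 1 := Ring.mul_inverse_cancel _ hr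
  have h1 : K * (s • (d * r + r * d)) * K * r = K * (s • (d * r + r * d) * r) * K := by
    simp only [mul_assoc, hK]
  have h2 : K * d = K * (d * (1 - s • r ^ 2)) * K := by
    simp only [mul_assoc, hNK, mul_one]
  rw [h1, h2, ← add_mul, ← mul_add]
  congr 2
  simp only [add_mul, mul_sub, mul_one, smul_add, smul_mul_assoc, mul_smul_comm, pow_two,
    mul_assoc]
  abel

theorem anticomm_inverse_one_sub_smul_sq_mul (hr : IsUnit (1 - s • r ^ 2)) (a : 𝔸) :
    a * ((1 - s • r ^ 2)⁻¹ʳ * r) + (1 - s • r ^ 2)⁻¹ʳ * r * a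
      = (1 - s • r ^ 2)⁻¹ʳ * (a * r + r * a - s • (r * (a * r + r * a) * r))
          * (1 - s • r ^ 2)⁻¹ʳ := by
  set K := (1 - s • r ^ 2)⁻¹ʳ
  have hK : K * r = r * K := (commute_inverse_one_sub_smul_sq s r).eq.symm
  have hKN : K * (1 - s • r ^ 2) = 1 := Ring.inverse_mul_cancel _ hr
  have hNK : (1 - s • r ^ 2) * K = 1 := Ring.mul_inverse_cancel _ hr
  have h1 : a * (K * r) = K * ((1 - s • r ^ 2) * a * r) * K := by
    simp only [mul_assoc, ← hK, ← mul_assoc K, hKN, one_mul]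
  have h2 : K * r * a = K * (r * a * (1 - s • r ^ 2)) * K := by
    simp only [mul_assoc, hNK, mul_one]
  rw [h1, h2, ← add_mul, ← mul_add]
  congr 2
  simp only [sub_mul, mul_sub, one_mul, mul_one, smul_mul_assoc, mul_smul_comm, smul_add,
    mul_add, add_mul, pow_two, mul_assoc]
  abel

end Resolvent

section Derivatives

variable {𝕂 𝕜 𝔸 : Type*} [NormedRing 𝔸] [CompleteSpace 𝔸]

theorem HasDerivAt.inverse_one_sub_smul_sq_mul [NontriviallyNormedField 𝕂] [NormedField 𝕜]
    [NormedAlgebra 𝕂 𝔸] [NormedAlgebra 𝕜 𝔸] [SMulCommClass 𝕂 𝕜 𝔸]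
    {r : 𝕂 → 𝔸} {d : 𝔸} {x : 𝕂} (hr : HasDerivAt r d x) (s : 𝕜)
    (hx : IsUnit (1 - s • r x ^ 2)) :
    HasDerivAt (fun y => (1 - s • r y ^ 2)⁻¹ʳ * r y)
      ((1 - s • r x ^ 2)⁻¹ʳ * (d + s • (r x * d * r x)) * (1 - s • r x ^ 2)⁻¹ʳ) x := by
  have hsq : HasDerivAt (fun y => r y ^ 2) (d * r x + r x * d) x := by
    simpa only [sq] using hr.fun_mul hr
  have hK := ((hsq.fun_const_smul s).const_sub 1).ringInverse hx
  convert hK.fun_mul hr using 1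
  rw [← inverse_one_sub_smul_sq_mul_mul_inverse hx]
  simp only [mul_neg, neg_mul, neg_neg]

variable [RCLike 𝕂] [NormedAlgebra 𝕂 𝔸]

theorem HasDerivAt.exp_neg_smul_mul_mul_exp_neg_smul (A : 𝔸) {F : 𝕂 → 𝔸} {F' : 𝔸} {x : 𝕂}
    (hF : HasDerivAt F F' x) :
    HasDerivAt (fun y => NormedSpace.exp (-(y • A)) * F y * NormedSpace.exp (-(y • A)))
      (NormedSpace.exp (-(x • A)) * (F' - (A * F x + F x * A)) * NormedSpace.exp (-(x • A))) x := by
  have hG : HasDerivAt (fun y : 𝕂 => NormedSpace.exp (-(y • A)))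
      (NormedSpace.exp (-(x • A)) * -A) x := by
    simpa only [smul_neg] using hasDerivAt_exp_smul_const (-A) x
  have hAG : A * NormedSpace.exp (-(x • A)) = NormedSpace.exp (-(x • A)) * A :=
    (((Commute.refl A).smul_right x).neg_right.exp_right).eq
  convert (hG.fun_mul hF).fun_mul hG using 1
  simp only [mul_neg, neg_mul, mul_sub, sub_mul, mul_add, add_mul, mul_assoc, hAG]
  abel

theorem hasDerivAt_exp_neg_smul_mul_inverse_one_sub_smul_sq_mul [NormedField 𝕜]
    [NormedAlgebra 𝕜 𝔸] [SMulCommClass 𝕂 𝕜 𝔸] (A E : 𝔸) {R : 𝕂 → 𝔸}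
    (hR : ∀ y, R y = NormedSpace.exp (-(y • A)) * E * NormedSpace.exp (-(y • A)))
    (s : 𝕜) {x : 𝕂} (hx : IsUnit (1 - s • R x ^ 2)) :
    HasDerivAt (fun y => NormedSpace.exp (-(y • A)) * ((1 - s • R y ^ 2)⁻¹ʳ * R y)
        * NormedSpace.exp (-(y • A)))
      (-2 * (NormedSpace.exp (-(x • A)) * (1 - s • R x ^ 2)⁻¹ʳ * NormedSpace.exp (-(x • A))
        * (A * E + E * A)
        * (NormedSpace.exp (-(x • A)) * (1 - s • R x ^ 2)⁻¹ʳ * NormedSpace.exp (-(x • A))))) x := by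
  set G := NormedSpace.exp (-(x • A)) with hG
  set K := (1 - s • R x ^ 2)⁻¹ʳ with hK
  have hAG : A * G = G * A := (((Commute.refl A).smul_right x).neg_right.exp_right).eq
  have hT : A * R x + R x * A = G * (A * E + E * A) * G := by
    calc A * R x + R x * A = A * G * E * G + G * E * (G * A) := by rw [hR]; noncomm_ring
      _ = G * A * E * G + G * E * (A * G) := by rw [hAG]
      _ = G * (A * E + E * A) * G := by noncomm_ring
  have hR' : HasDerivAt R (-(A * R x + R x * A)) x := by
    have h := (hasDerivAt_const x E).exp_neg_smul_mul_mul_exp_neg_smul A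
    rw [← funext hR] at h
    convert h using 1
    rw [hT]
    noncomm_ring
  convert (hR'.inverse_one_sub_smul_sq_mul s hx).exp_neg_smul_mul_mul_exp_neg_smul A using 1
  rw [← hG, anticomm_inverse_one_sub_smul_sq_mul hx, hT, ← hK]
  simp only [mul_neg, neg_mul, smul_neg]
  generalize s • (R x * (G * (A * E + E * A) * G) * R x) = U
  clear_value G K
  noncomm_ring

end Derivatives

namespace Matrix

theorem dotProduct_mul_vecMulVec_mul_mulVec {l m n o α : Type*} [CommSemiring α]
    [Fintype l] [Fintype m] [Fintype n] [Fintype o] (c : l → α) (X : Matrix l m α) (u : m → α)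
    (v : n → α) (Y : Matrix n o α) (w : o → α) :
    c ⬝ᵥ (X * vecMulVec u v * Y) *ᵥ w = (c ⬝ᵥ X *ᵥ u) * (v ⬝ᵥ Y *ᵥ w) := by
  rw [← mulVec_mulVec, ← mulVec_mulVec, vecMulVec_mulVec, op_smul_eq_smul, mulVec_smul,
    dotProduct_smul, smul_eq_mul, mul_comm]

theorem hasDerivAt_dotProduct_exp_neg_smul_mul_inverse_one_sub_smul_sq_mul_mulVec
    {m 𝕜 : Type*} [Fintype m] [DecidableEq m] [RCLike 𝕜] (A E : Matrix m m 𝕜) (b c : m → 𝕜)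
    (hE : A * E + E * A = vecMulVec b c) {R : ℝ → Matrix m m 𝕜}
    (hR : ∀ y : ℝ, R y = NormedSpace.exp (-(y • A)) * E * NormedSpace.exp (-(y • A)))
    (s : 𝕜) {x : ℝ} (hx : IsUnit (1 - s • R x ^ 2)) :
    HasDerivAt (fun y => c ⬝ᵥ (NormedSpace.exp (-(y • A)) * ((1 - s • R y ^ 2)⁻¹ʳ * R y)
        * NormedSpace.exp (-(y • A))) *ᵥ b)
      (-2 * (c ⬝ᵥ (NormedSpace.exp (-(x • A)) * (1 - s • R x ^ 2)⁻¹ʳ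
        * NormedSpace.exp (-(x • A))) *ᵥ b) ^ 2) x := by
  -- Any norm would do; the `L∞`-operator norm makes the matrices a Banach algebra.
  let _ : NormedRing (Matrix m m 𝕜) := Matrix.linftyOpNormedRing
  let _ : NormedAlgebra ℝ (Matrix m m 𝕜) := Matrix.linftyOpNormedAlgebra
  let _ : NormedAlgebra 𝕜 (Matrix m m 𝕜) := Matrix.linftyOpNormedAlgebra
  let φ : Matrix m m 𝕜 →L[ℝ] 𝕜 :=
    (dotProductBilin ℝ ℝ c ∘ₗ (mulVecBilin ℝ ℝ).flip b).toContinuousLinearMap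
  have hφ (X : Matrix m m 𝕜) : φ (-2 * (X * (A * E + E * A) * X)) = -2 * (c ⬝ᵥ X *ᵥ b) ^ 2 := by
    change c ⬝ᵥ (-2 * _) *ᵥ b = _
    rw [hE, neg_mul, two_mul, neg_mulVec, dotProduct_neg, add_mulVec, dotProduct_add,
      dotProduct_mul_vecMulVec_mul_mulVec]
    ring
  exact (φ.hasFDerivAt.comp_hasDerivAt x
    (hasDerivAt_exp_neg_smul_mul_inverse_one_sub_smul_sq_mul A E hR s hx)).congr_deriv (hφ _)

end Matrix

theorem diag_entries_w_deriv_general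
    {n : ℕ} (A E : Matrix (Fin n) (Fin n) ℂ) (b c : Fin n → ℂ)
    (hE : A * E + E * A = Matrix.vecMulVec b c)
    (R : ℝ → Matrix (Fin n) (Fin n) ℂ)
    (hRdef : ∀ x : ℝ, R x =
      NormedSpace.exp (-(x • A)) * E * NormedSpace.exp (-(x • A)))
    (μ : ℂ) (I : Set ℝ) (hI : IsOpen I)
    (hinv : ∀ x ∈ I, IsUnit (1 - μ ^ 2 • R x ^ 2))
    (v w : ℝ → ℂ)
    (hv : ∀ x ∈ I, v x = -(c ⬝ᵥ ((NormedSpace.exp (-(x • A))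
        * (1 - μ ^ 2 • R x ^ 2)⁻¹ * NormedSpace.exp (-(x • A))).mulVec b)))
    (hw : ∀ x ∈ I, w x = μ * (c ⬝ᵥ ((NormedSpace.exp (-(x • A))
        * (1 - μ ^ 2 • R x ^ 2)⁻¹ * R x * NormedSpace.exp (-(x • A))).mulVec b))) :
    ∀ x ∈ I, HasDerivAt w (-2 * μ * v x ^ 2) x := by
  intro x hx
  have hw' : w =ᶠ[nhds x] fun y => μ * (c ⬝ᵥ (NormedSpace.exp (-(y • A))
      * ((1 - μ ^ 2 • R y ^ 2)⁻¹ʳ * R y) * NormedSpace.exp (-(y • A))) *ᵥ b) := by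
    filter_upwards [hI.mem_nhds hx] with y hy
    rw [hw y hy, Matrix.nonsing_inv_eq_ringInverse, mul_assoc _ _ (R y)]
  refine ((Matrix.hasDerivAt_dotProduct_exp_neg_smul_mul_inverse_one_sub_smul_sq_mul_mulVec
    A E b c hE hRdef (μ ^ 2) (hinv x hx)).const_mul μ |>.congr_of_eventuallyEq hw').congr_deriv ?_
  rw [hv x hx, Matrix.nonsing_inv_eq_ringInverse]
  ring

/-- For a finite-dimensional linear system with `AE + EA = bc` and
`R(x) = e^{-xA} E e^{-xA}`, the diagonal entries
`v(x) = -c e^{-xA}(1-μ²R²)⁻¹ e^{-xA} b` and `w(x) = μ c e^{-xA}(1-μ²R²)⁻¹ R e^{-xA} b`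
of the solution of the Gelfand--Levitan equation satisfy `w' = -2 μ v²`
(equation (2.33) within Theorem 2.6 of the paper). -/
theorem diag_entries_w_deriv
    {n : ℕ} (A E : Matrix (Fin n) (Fin n) ℂ) (b c : Fin n → ℂ)
    (hE : A * E + E * A = Matrix.vecMulVec b c)
    (R : ℝ → Matrix (Fin n) (Fin n) ℂ)
    (hRdef : ∀ x : ℝ, R x =
      NormedSpace.exp (-(x • A)) * E * NormedSpace.exp (-(x • A)))
    (μ : ℂ) (I : Set ℝ) (hI : IsOpen I) (hI' : I.OrdConnected)
    (hinv : ∀ x ∈ I, IsUnit (1 - μ ^ 2 • R x ^ 2))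
    (v w : ℝ → ℂ)
    (hv : ∀ x ∈ I, v x = -(c ⬝ᵥ ((NormedSpace.exp (-(x • A))
        * (1 - μ ^ 2 • R x ^ 2)⁻¹ * NormedSpace.exp (-(x • A))).mulVec b)))
    (hw : ∀ x ∈ I, w x = μ * (c ⬝ᵥ ((NormedSpace.exp (-(x • A))
        * (1 - μ ^ 2 • R x ^ 2)⁻¹ * R x * NormedSpace.exp (-(x • A))).mulVec b))) :
    ∀ x ∈ I, HasDerivAt w (-2 * μ * v x ^ 2) x :=
  diag_entries_w_deriv_general A E b c hE R hRdef μ I hI hinv v w hv hw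
end

section
/- Let I ⊆ ℝ be an open interval and let τ₀, τ₁ : I → ℂ be twice differentiable and nowhere vanishing on I. Define v = τ₁′/τ₁ − τ₀′/τ₀ (the logarithmic derivative of τ₁/τ₀), w = τ₀′/τ₀ + τ₁′/τ₁ (the logarithmic derivative of τ₀τ₁), and u = −2·(τ₀′/τ₀)′. Then the following are equivalent on I: (a) the bilinear relation τ₀″τ₁ − 2τ₀′τ₁′ + τ₀τ₁″ = 0 holds; (b) u = v′ + v² (i.e. u is the Miura transform of v); (c) v² = −w′. -/
/-!
Writing `g₀ = τ₀'/τ₀` and `g₁ = τ₁'/τ₁`, we have `v = g₁ - g₀`, `w = g₀ + g₁` and `u = -2 g₀'`,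
so `u = v' - w'` identically; hence `u = v' + v²` is the same as `v² = -w'`. The Riccati
identity `gᵢ' = τᵢ''/τᵢ - gᵢ²` then gives `v² + w' = (τ₀''τ₁ - 2τ₀'τ₁' + τ₀τ₁'')/(τ₀τ₁)`.
-/

section LogDeriv

variable {𝕜 𝕜' : Type*} [NontriviallyNormedField 𝕜] [NontriviallyNormedField 𝕜']
  [NormedAlgebra 𝕜 𝕜'] {f g : 𝕜 → 𝕜'} {x : 𝕜}

theorem DifferentiableAt.logDeriv (hf : DifferentiableAt 𝕜 f x)
    (hf' : DifferentiableAt 𝕜 (deriv f) x) (h : f x ≠ 0) :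
    DifferentiableAt 𝕜 (logDeriv f) x :=
  hf'.div hf h

theorem deriv_logDeriv (hf : DifferentiableAt 𝕜 f x) (hf' : DifferentiableAt 𝕜 (deriv f) x)
    (h : f x ≠ 0) :
    deriv (logDeriv f) x = deriv (deriv f) x / f x - logDeriv f x ^ 2 := by
  rw [logDeriv, deriv_div hf' hf h, Pi.div_apply]
  field_simp

theorem deriv_logDeriv_sub_sub_deriv_logDeriv_add
    (hf : DifferentiableAt 𝕜 f x) (hf' : DifferentiableAt 𝕜 (deriv f) x) (h₀ : f x ≠ 0)
    (hg : DifferentiableAt 𝕜 g x) (hg' : DifferentiableAt 𝕜 (deriv g) x) (h₁ : g x ≠ 0) :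
    deriv (logDeriv g - logDeriv f) x - deriv (logDeriv f + logDeriv g) x
      = -2 * deriv (logDeriv f) x := by
  have df := hf.logDeriv hf' h₀
  have dg := hg.logDeriv hg' h₁
  rw [deriv_sub dg df, deriv_add df dg]
  ring

theorem sq_logDeriv_sub_add_deriv_logDeriv_add
    (hf : DifferentiableAt 𝕜 f x) (hf' : DifferentiableAt 𝕜 (deriv f) x) (h₀ : f x ≠ 0)
    (hg : DifferentiableAt 𝕜 g x) (hg' : DifferentiableAt 𝕜 (deriv g) x) (h₁ : g x ≠ 0) :
    (logDeriv g x - logDeriv f x) ^ 2 + deriv (logDeriv f + logDeriv g) x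
      = (deriv (deriv f) x * g x - 2 * deriv f x * deriv g x + f x * deriv (deriv g) x)
        / (f x * g x) := by
  rw [deriv_add (hf.logDeriv hf' h₀) (hg.logDeriv hg' h₁), deriv_logDeriv hf hf' h₀,
    deriv_logDeriv hg hg' h₁, logDeriv_apply, logDeriv_apply]
  field_simp
  ring

end LogDeriv

theorem miura_equivalences_general
    (I : Set ℝ)
    (τ₀ τ₁ : ℝ → ℂ)
    (h₀ : ∀ x ∈ I, τ₀ x ≠ 0) (h₁ : ∀ x ∈ I, τ₁ x ≠ 0)
    (hd₀ : ∀ x ∈ I, DifferentiableAt ℝ τ₀ x)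
    (hd₀' : ∀ x ∈ I, DifferentiableAt ℝ (deriv τ₀) x)
    (hd₁ : ∀ x ∈ I, DifferentiableAt ℝ τ₁ x)
    (hd₁' : ∀ x ∈ I, DifferentiableAt ℝ (deriv τ₁) x)
    (v w u : ℝ → ℂ)
    (hv : ∀ x : ℝ, v x = deriv τ₁ x / τ₁ x - deriv τ₀ x / τ₀ x)
    (hw : ∀ x : ℝ, w x = deriv τ₀ x / τ₀ x + deriv τ₁ x / τ₁ x)
    (hu : ∀ x : ℝ, u x = -2 * deriv (fun y => deriv τ₀ y / τ₀ y) x) :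
    ((∀ x ∈ I, deriv (deriv τ₀) x * τ₁ x - 2 * deriv τ₀ x * deriv τ₁ x
        + τ₀ x * deriv (deriv τ₁) x = 0)
      ↔ (∀ x ∈ I, u x = deriv v x + v x ^ 2)) ∧
    ((∀ x ∈ I, u x = deriv v x + v x ^ 2)
      ↔ (∀ x ∈ I, v x ^ 2 = -deriv w x)) := by
  obtain rfl : v = logDeriv τ₁ - logDeriv τ₀ := funext hv
  obtain rfl : w = logDeriv τ₀ + logDeriv τ₁ := funext hw
  obtain rfl : u = fun x => -2 * deriv (logDeriv τ₀) x := funext hu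
  refine ⟨forall₂_congr fun x hx => ?_, forall₂_congr fun x hx => ?_⟩ <;>
    dsimp only [Pi.sub_apply] <;>
    rw [← deriv_logDeriv_sub_sub_deriv_logDeriv_add
      (hd₀ x hx) (hd₀' x hx) (h₀ x hx) (hd₁ x hx) (hd₁' x hx) (h₁ x hx)]
  · have hτ := mul_ne_zero (h₀ x hx) (h₁ x hx)
    rw [← (eq_div_iff hτ).mp (sq_logDeriv_sub_add_deriv_logDeriv_add
      (hd₀ x hx) (hd₀' x hx) (h₀ x hx) (hd₁ x hx) (hd₁' x hx) (h₁ x hx)),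
      mul_eq_zero, or_iff_left hτ]
    constructor <;> intro h <;> linear_combination -h
  · constructor <;> intro h <;> linear_combination -h

/-- For nowhere-vanishing twice differentiable tau functions `τ₀, τ₁` on an open interval,
with `v = (log(τ₁/τ₀))'`, `w = (log(τ₀τ₁))'` and `u = -2 (log τ₀)''`, the bilinear relation
`τ₀'' τ₁ - 2 τ₀' τ₁' + τ₀ τ₁'' = 0` holds iff `u = v' + v²` (the Miura transform) iff
`v² = -w'` (Theorem 2.6(iii) of the paper). -/
theorem miura_equivalences
    (I : Set ℝ) (hI : IsOpen I) (hI' : I.OrdConnected)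
    (τ₀ τ₁ : ℝ → ℂ)
    (h₀ : ∀ x ∈ I, τ₀ x ≠ 0) (h₁ : ∀ x ∈ I, τ₁ x ≠ 0)
    (hd₀ : ∀ x ∈ I, DifferentiableAt ℝ τ₀ x)
    (hd₀' : ∀ x ∈ I, DifferentiableAt ℝ (deriv τ₀) x)
    (hd₁ : ∀ x ∈ I, DifferentiableAt ℝ τ₁ x)
    (hd₁' : ∀ x ∈ I, DifferentiableAt ℝ (deriv τ₁) x)
    (v w u : ℝ → ℂ)
    (hv : ∀ x : ℝ, v x = deriv τ₁ x / τ₁ x - deriv τ₀ x / τ₀ x)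
    (hw : ∀ x : ℝ, w x = deriv τ₀ x / τ₀ x + deriv τ₁ x / τ₁ x)
    (hu : ∀ x : ℝ, u x = -2 * deriv (fun y => deriv τ₀ y / τ₀ y) x) :
    ((∀ x ∈ I, deriv (deriv τ₀) x * τ₁ x - 2 * deriv τ₀ x * deriv τ₁ x
        + τ₀ x * deriv (deriv τ₁) x = 0)
      ↔ (∀ x ∈ I, u x = deriv v x + v x ^ 2)) ∧
    ((∀ x ∈ I, u x = deriv v x + v x ^ 2)
      ↔ (∀ x ∈ I, v x ^ 2 = -deriv w x)) :=
  miura_equivalences_general I τ₀ τ₁ h₀ h₁ hd₀ hd₀' hd₁ hd₁' v w u hv hw hu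
end

section
/- Let τ₀ and τ₁ be complex functions analytic on a neighbourhood of z₀ ∈ ℂ, neither identically zero near z₀, and suppose τ₀″τ₁ − 2τ₀′τ₁′ + τ₀τ₁″ = 0 on a neighbourhood of z₀. If α is the order of the zero of τ₀ at z₀ and β is the order of the zero of τ₁ at z₀ (α, β ∈ ℕ, with order 0 meaning nonvanishing), then (α − β)² = α + β. -/
/-!
Let `θ = (z - z₀) d/dz`. On `(z - z₀)ⁿ g` with `g` analytic, `θ` acts as `(z - z₀)ⁿ (n + θ) g`,
and `(z - z₀)² d²/dz² = θ² - θ`. Multiplying the bilinear relation by `(z - z₀)²` therefore gives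
`(z - z₀)^(α + β) Q(z) = 0` with `Q` analytic and
`Q(z₀) = (α (α - 1) - 2 α β + β (β - 1)) g₀(z₀) g₁(z₀)`. Hence `Q(z₀) = 0` by continuity, and
`g₀(z₀) g₁(z₀) ≠ 0` leaves `(α - β)² = α + β`.
-/

open Filter Topology

section

variable {f g : ℂ → ℂ} {z₀ : ℂ} {n : ℕ}

theorem exists_sub_mul_deriv_eq_pow_mul (hg : AnalyticAt ℂ g z₀)
    (hf : f =ᶠ[𝓝 z₀] fun z => (z - z₀) ^ n * g z) :
    ∃ h : ℂ → ℂ, AnalyticAt ℂ h z₀ ∧ h z₀ = n * g z₀ ∧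
      (fun z => (z - z₀) * deriv f z) =ᶠ[𝓝 z₀] fun z => (z - z₀) ^ n * h z := by
  refine ⟨fun z => n * g z + (z - z₀) * deriv g z, by fun_prop, by simp, ?_⟩
  filter_upwards [hf.deriv, hg.eventually_analyticAt] with z hfz hgz
  have hpow : (z - z₀) * (n * (z - z₀) ^ (n - 1)) = n * (z - z₀) ^ n := by
    rcases eq_or_ne n 0 with rfl | hn
    · simp
    · rw [mul_left_comm, mul_pow_sub_one hn]
  have hprod :=
    (((hasDerivAt_id' z).sub_const z₀).fun_pow n).fun_mul hgz.differentiableAt.hasDerivAt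
  rw [hfz, hprod.deriv]
  linear_combination g z * hpow

theorem exists_sq_mul_deriv_deriv_eq_pow_mul (hg : AnalyticAt ℂ g z₀)
    (hf : f =ᶠ[𝓝 z₀] fun z => (z - z₀) ^ n * g z) :
    ∃ h : ℂ → ℂ, AnalyticAt ℂ h z₀ ∧ h z₀ = n * (n - 1) * g z₀ ∧
      (fun z => (z - z₀) ^ 2 * deriv (deriv f) z) =ᶠ[𝓝 z₀] fun z => (z - z₀) ^ n * h z := by
  obtain ⟨h₁, hh₁, hh₁z₀, hθf⟩ := exists_sub_mul_deriv_eq_pow_mul hg hf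
  obtain ⟨h₂, hh₂, hh₂z₀, hθθf⟩ := exists_sub_mul_deriv_eq_pow_mul hh₁ hθf
  refine ⟨h₂ - h₁, hh₂.sub hh₁, by simp only [Pi.sub_apply, hh₂z₀, hh₁z₀]; ring, ?_⟩
  have hfan : AnalyticAt ℂ f z₀ :=
    (by fun_prop : AnalyticAt ℂ (fun z => (z - z₀) ^ n * g z) z₀).congr hf.symm
  filter_upwards [hθf, hθθf, hfan.eventually_analyticAt] with z hθfz hθθfz hfz
  have hderiv : deriv (fun w => (w - z₀) * deriv f w) z
      = deriv f z + (z - z₀) * deriv (deriv f) z := by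
    simpa using
      (((hasDerivAt_id' z).sub_const z₀).fun_mul hfz.deriv.differentiableAt.hasDerivAt).deriv
  simp only [Pi.sub_apply]
  linear_combination -(z - z₀) * hderiv + hθθfz - hθfz

end

theorem eq_zero_of_eventually_pow_mul_eq_zero {Q : ℂ → ℂ} {z₀ : ℂ} {m : ℕ}
    (hQ : ContinuousAt Q z₀) (h : ∀ᶠ z in 𝓝 z₀, (z - z₀) ^ m * Q z = 0) : Q z₀ = 0 := by
  have hpunct : Q =ᶠ[𝓝[≠] z₀] fun _ => 0 := by
    filter_upwards [eventually_nhdsWithin_of_eventually_nhds h, self_mem_nhdsWithin]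
      with z hz hne
    exact (mul_eq_zero.1 hz).resolve_left (pow_ne_zero _ (sub_ne_zero.2 hne))
  exact tendsto_nhds_unique hQ.continuousWithinAt.tendsto
    ((tendsto_congr' hpunct).2 tendsto_const_nhds)

theorem zero_orders_bilinear_general
    (τ₀ τ₁ : ℂ → ℂ) (z₀ : ℂ) (α β : ℕ)
    (g₀ g₁ : ℂ → ℂ)
    (hg₀ : AnalyticAt ℂ g₀ z₀) (hg₀0 : g₀ z₀ ≠ 0)
    (hfac₀ : ∀ᶠ z in nhds z₀, τ₀ z = (z - z₀) ^ α * g₀ z)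
    (hg₁ : AnalyticAt ℂ g₁ z₀) (hg₁0 : g₁ z₀ ≠ 0)
    (hfac₁ : ∀ᶠ z in nhds z₀, τ₁ z = (z - z₀) ^ β * g₁ z)
    (hbil : ∀ᶠ z in nhds z₀,
      deriv (deriv τ₀) z * τ₁ z - 2 * deriv τ₀ z * deriv τ₁ z
        + τ₀ z * deriv (deriv τ₁) z = 0) :
    ((α : ℤ) - (β : ℤ)) ^ 2 = (α : ℤ) + (β : ℤ) := by
  obtain ⟨p₀, hp₀, hp₀z₀, hθτ₀⟩ := exists_sub_mul_deriv_eq_pow_mul hg₀ hfac₀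
  obtain ⟨p₁, hp₁, hp₁z₀, hθτ₁⟩ := exists_sub_mul_deriv_eq_pow_mul hg₁ hfac₁
  obtain ⟨q₀, hq₀, hq₀z₀, hθθτ₀⟩ := exists_sq_mul_deriv_deriv_eq_pow_mul hg₀ hfac₀
  obtain ⟨q₁, hq₁, hq₁z₀, hθθτ₁⟩ := exists_sq_mul_deriv_deriv_eq_pow_mul hg₁ hfac₁
  set Q : ℂ → ℂ := fun z => q₀ z * g₁ z - 2 * p₀ z * p₁ z + g₀ z * q₁ z
  have hQ : ∀ᶠ z in 𝓝 z₀, (z - z₀) ^ (α + β) * Q z = 0 := by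
    filter_upwards [hbil, hfac₀, hfac₁, hθτ₀, hθτ₁, hθθτ₀, hθθτ₁]
      with z hb h₀ h₁ hd₀ hd₁ hdd₀ hdd₁
    calc (z - z₀) ^ (α + β) * Q z
        = (z - z₀) ^ α * q₀ z * ((z - z₀) ^ β * g₁ z)
          - 2 * ((z - z₀) ^ α * p₀ z) * ((z - z₀) ^ β * p₁ z)
          + (z - z₀) ^ α * g₀ z * ((z - z₀) ^ β * q₁ z) := by ring
      _ = (z - z₀) ^ 2 * deriv (deriv τ₀) z * τ₁ z
          - 2 * ((z - z₀) * deriv τ₀ z) * ((z - z₀) * deriv τ₁ z)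
          + τ₀ z * ((z - z₀) ^ 2 * deriv (deriv τ₁) z) := by
        rw [← hdd₀, ← hd₀, ← hd₁, ← hdd₁, ← h₀, ← h₁]
      _ = (z - z₀) ^ 2 * (deriv (deriv τ₀) z * τ₁ z - 2 * deriv τ₀ z * deriv τ₁ z
          + τ₀ z * deriv (deriv τ₁) z) := by ring
      _ = 0 := by rw [hb, mul_zero]
  have hQz₀ : Q z₀ = 0 := eq_zero_of_eventually_pow_mul_eq_zero (by fun_prop) hQ
  have key : (((α : ℂ) - β) ^ 2 - (α + β)) * (g₀ z₀ * g₁ z₀) = 0 := by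
    simp only [Q, hp₀z₀, hp₁z₀, hq₀z₀, hq₁z₀] at hQz₀
    linear_combination hQz₀
  have hC : ((α : ℂ) - β) ^ 2 = α + β :=
    sub_eq_zero.1 ((mul_eq_zero.1 key).resolve_right (mul_ne_zero hg₀0 hg₁0))
  exact_mod_cast hC

/-- If two analytic functions satisfy the bilinear relation
`τ₀'' τ₁ - 2 τ₀' τ₁' + τ₀ τ₁'' = 0` near `z₀`, and `τ₀`, `τ₁` have zeros of order `α`, `β`
at `z₀`, then `(α - β)² = α + β` (local analysis after equation (2.29) of the paper). -/
theorem zero_orders_bilinear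
    (τ₀ τ₁ : ℂ → ℂ) (z₀ : ℂ) (α β : ℕ)
    (h₀ : AnalyticAt ℂ τ₀ z₀) (h₁ : AnalyticAt ℂ τ₁ z₀)
    (g₀ g₁ : ℂ → ℂ)
    (hg₀ : AnalyticAt ℂ g₀ z₀) (hg₀0 : g₀ z₀ ≠ 0)
    (hfac₀ : ∀ᶠ z in nhds z₀, τ₀ z = (z - z₀) ^ α * g₀ z)
    (hg₁ : AnalyticAt ℂ g₁ z₀) (hg₁0 : g₁ z₀ ≠ 0)
    (hfac₁ : ∀ᶠ z in nhds z₀, τ₁ z = (z - z₀) ^ β * g₁ z)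
    (hbil : ∀ᶠ z in nhds z₀,
      deriv (deriv τ₀) z * τ₁ z - 2 * deriv τ₀ z * deriv τ₁ z
        + τ₀ z * deriv (deriv τ₁) z = 0) :
    ((α : ℤ) - (β : ℤ)) ^ 2 = (α : ℤ) + (β : ℤ) :=
  zero_orders_bilinear_general τ₀ τ₁ z₀ α β g₀ g₁ hg₀ hg₀0 hfac₀ hg₁ hg₁0 hfac₁ hbil
end

section
/- Let H be a complex Hilbert space, let A, R be bounded linear operators on H, let b ∈ H and let ℓ : H → ℂ be a continuous linear functional, and suppose A ∘ R + R ∘ A = b⊗ℓ (the rank-one operator ξ ↦ ℓ(ξ)•b). Suppose 1 + R is invertible and set F = (1 + R)⁻¹. Then F ∘ (b⊗ℓ) ∘ F = A∘F + F∘A − 2·F∘A∘F, and for all bounded operators P, Q on H the product formula holds: ℓ(F P F b) · ℓ(F Q F b) = ℓ( F P (A∘F + F∘A − 2·F∘A∘F) Q F b ). -/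
/-! Since `F` inverts `1 + R`, both `R F` and `F R` equal `1 - F`, so sandwiching the anticommutator
`A R + R A = b⊗ℓ` between two copies of `F` gives `A F + F A - 2 F A F`. The product formula is then
the rank-one identity `ℓ (X (b⊗ℓ) Y v) = ℓ (X b) · ℓ (Y v)` applied with `X = F P F` and `Y = F Q F`. -/

theorem mul_anticommutator_mul_of_one_add_inverse {S : Type*} [Ring S] {A R F : S}
    (hF1 : (1 + R) * F = 1) (hF2 : F * (1 + R) = 1) :
    F * (A * R + R * A) * F = A * F + F * A - 2 * (F * A * F) := by
  have hRF : R * F = 1 - F := by rw [← hF1]; noncomm_ring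
  have hFR : F * R = 1 - F := by rw [← hF2]; noncomm_ring
  calc F * (A * R + R * A) * F
      = F * A * (R * F) + (F * R) * (A * F) := by noncomm_ring
    _ = F * A * (1 - F) + (1 - F) * (A * F) := by rw [hRF, hFR]
    _ = A * F + F * A - 2 * (F * A * F) := by noncomm_ring

namespace ContinuousLinearMap

variable {𝕜 M : Type*} [CommSemiring 𝕜] [TopologicalSpace 𝕜]
  [AddCommMonoid M] [TopologicalSpace M] [Module 𝕜 M] [ContinuousSMul 𝕜 M]

theorem mul_smulRight_mul_apply_s7 (X Y : M →L[𝕜] M) (ℓ : M →L[𝕜] 𝕜) (b v : M) :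
    (X * ℓ.smulRight b * Y) v = ℓ (Y v) • X b :=
  map_smul X (ℓ (Y v)) b

theorem apply_mul_smulRight_mul_apply (X Y : M →L[𝕜] M) (ℓ : M →L[𝕜] 𝕜) (b v : M) :
    ℓ ((X * ℓ.smulRight b * Y) v) = ℓ (X b) * ℓ (Y v) := by
  rw [mul_smulRight_mul_apply_s7, map_smul, smul_eq_mul, mul_comm]

end ContinuousLinearMap

theorem bracket_product_formula_general
    {H : Type*} [NormedAddCommGroup H] [InnerProductSpace ℂ H]
    (A R F : H →L[ℂ] H) (b : H) (ℓ : H →L[ℂ] ℂ)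
    (hLyap : A * R + R * A = ℓ.smulRight b)
    (hF1 : (1 + R) * F = 1) (hF2 : F * (1 + R) = 1) :
    F * ℓ.smulRight b * F = A * F + F * A - 2 * (F * A * F) ∧
    ∀ P Q : H →L[ℂ] H,
      ℓ ((F * P * F) b) * ℓ ((F * Q * F) b)
        = ℓ ((F * P * (A * F + F * A - 2 * (F * A * F)) * Q * F) b) := by
  have hM : F * ℓ.smulRight b * F = A * F + F * A - 2 * (F * A * F) := by
    rw [← hLyap]; exact mul_anticommutator_mul_of_one_add_inverse hF1 hF2
  refine ⟨hM, fun P Q => ?_⟩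
  rw [← hM, ← ContinuousLinearMap.apply_mul_smulRight_mul_apply (F * P * F) (F * Q * F)]
  simp only [mul_assoc]

/-- The bracket identity `F (b⊗ℓ) F = A F + F A - 2 F A F` and the product formula
`⌊P⌋⌊Q⌋ = ⌊P (A F + F A - 2 F A F) Q⌋` for `⌊P⌋ = ℓ(F P F b)`
(Lemma 3.2 of the paper, equations (3.6) and (3.13)). -/
theorem bracket_product_formula
    {H : Type*} [NormedAddCommGroup H] [InnerProductSpace ℂ H] [CompleteSpace H]
    (A R F : H →L[ℂ] H) (b : H) (ℓ : H →L[ℂ] ℂ)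
    (hLyap : A * R + R * A = ℓ.smulRight b)
    (hF1 : (1 + R) * F = 1) (hF2 : F * (1 + R) = 1) :
    F * ℓ.smulRight b * F = A * F + F * A - 2 * (F * A * F) ∧
    ∀ P Q : H →L[ℂ] H,
      ℓ ((F * P * F) b) * ℓ ((F * Q * F) b)
        = ℓ ((F * P * (A * F + F * A - 2 * (F * A * F)) * Q * F) b) :=
  bracket_product_formula_general A R F b ℓ hLyap hF1 hF2
end

section
/- Let f : ℝ → ℂ be infinitely differentiable. For n ≥ 1 define the Hankel determinant τ_n(x) = det[ f^{(j+k−2)}(x) ]_{j,k=1}^n (the n×n matrix whose (j,k) entry is the (j+k−2)-th derivative of f at x), and set τ₀(x) = 1. Then for every n ≥ 1 and every x ∈ ℝ the bilinear Toda equation holds: τ_n″(x)·τ_n(x) − τ_n′(x)² = τ_{n+1}(x)·τ_{n−1}(x). Equivalently, (d²/dx²) log τ_n(x) = τ_{n+1}(x)τ_{n−1}(x)/τ_n(x)² wherever τ_n(x) ≠ 0. -/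
open Matrix Finset

lemma prod_eq_mul_of_pair {R : Type*} [CommRing R] {n : Type*} [DecidableEq n] [Fintype n]
    {p q : n} (hpq : p ≠ q) (f : n → R) (h : ∀ j, j ≠ p → j ≠ q → f j = 1) :
    ∏ j, f j = f p * f q := by
  rw [← Finset.mul_prod_erase Finset.univ f (Finset.mem_univ p),
    ← Finset.mul_prod_erase _ f (Finset.mem_erase.2 ⟨hpq.symm, Finset.mem_univ q⟩),
    Finset.prod_eq_one, mul_one]
  intro j hj
  simp only [Finset.mem_erase] at hj
  exact h j hj.2.1 hj.1

lemma det_one_updateColumn_updateColumn {R : Type*} [CommRing R] {n : Type*} [DecidableEq n]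
    [Fintype n] {p q : n} (hpq : p ≠ q) (u v : n → R) :
    (((1 : Matrix n n R).updateCol p u).updateCol q v).det = u p * v q - u q * v p := by
  classical
  set M := ((1 : Matrix n n R).updateCol p u).updateCol q v with hMdef
  have hM : ∀ i j, M i j = if j = q then v i else if j = p then u i else if i = j then 1 else 0 := by
    intro i j
    by_cases hq : j = q
    · subst hq; simp [hMdef, Matrix.updateCol_self]
    · by_cases hp : j = p
      · subst hp
        simp [hMdef, Matrix.updateCol_ne hq, Matrix.updateCol_self, hq]
      · simp [hMdef, Matrix.updateCol_ne hq, Matrix.updateCol_ne hp, hq, hp,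
          Matrix.one_apply]
  rw [Matrix.det_apply']
  have hsub : ({1, Equiv.swap p q} : Finset (Equiv.Perm n)) ⊆ Finset.univ :=
    Finset.subset_univ _
  rw [← Finset.sum_subset hsub]
  · rw [Finset.sum_insert (by
        simp only [Finset.mem_singleton]
        intro h
        exact hpq ((Equiv.swap_eq_one_iff).1 h.symm)), Finset.sum_singleton]
    have h1 : ∏ i, M ((1 : Equiv.Perm n) i) i = u p * v q := by
      rw [prod_eq_mul_of_pair hpq]
      · simp only [Equiv.Perm.one_apply]
        rw [hM p p, hM q q, if_neg hpq, if_pos rfl, if_pos rfl]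
      · intro j hjp hjq
        simp only [Equiv.Perm.one_apply]
        rw [hM j j, if_neg hjq, if_neg hjp, if_pos rfl]
    have h2 : ∏ i, M (Equiv.swap p q i) i = u q * v p := by
      rw [prod_eq_mul_of_pair hpq]
      · rw [Equiv.swap_apply_left, Equiv.swap_apply_right,
          hM q p, hM p q, if_neg hpq, if_pos rfl, if_pos rfl]
      · intro j hjp hjq
        rw [Equiv.swap_apply_of_ne_of_ne hjp hjq, hM j j, if_neg hjq, if_neg hjp, if_pos rfl]
    rw [h1, h2]
    simp [Equiv.Perm.sign_swap hpq]
    ring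
  · intro σ _ hσ
    simp only [Finset.mem_insert, Finset.mem_singleton] at hσ
    push_neg at hσ
    obtain ⟨hσ1, hσ2⟩ := hσ
    -- there exists j ∉ {p,q} with σ j ≠ j
    by_cases hfix : ∀ j, j ≠ p → j ≠ q → σ j = j
    · exfalso
      have hp' : σ p = p ∨ σ p = q := by
        by_contra h
        push_neg at h
        have := hfix (σ p) h.1 h.2
        exact h.1 (σ.injective this)
      have hq' : σ q = p ∨ σ q = q := by
        by_contra h
        push_neg at h
        have := hfix (σ q) h.1 h.2
        exact h.2 (σ.injective this)
      rcases hp' with hp' | hp'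
      · rcases hq' with hq' | hq'
        · exact hpq (σ.injective (hp'.trans hq'.symm))
        · exact hσ1 (Equiv.ext fun j => by
            by_cases hjp : j = p
            · subst hjp; simpa using hp'
            · by_cases hjq : j = q
              · subst hjq; simpa using hq'
              · simpa using hfix j hjp hjq)
      · rcases hq' with hq' | hq'
        · exact hσ2 (Equiv.ext fun j => by
            by_cases hjp : j = p
            · subst hjp; rw [Equiv.swap_apply_left]; exact hp'
            · by_cases hjq : j = q
              · subst hjq; rw [Equiv.swap_apply_right]; exact hq'
              · rw [Equiv.swap_apply_of_ne_of_ne hjp hjq]; exact hfix j hjp hjq)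
        · exact hpq (σ.injective (hp'.trans hq'.symm))
    · push_neg at hfix
      obtain ⟨j, hjp, hjq, hj⟩ := hfix
      have : M (σ j) j = 0 := by
        rw [hM (σ j) j, if_neg hjq, if_neg hjp, if_neg hj]
      rw [show (∏ i, M (σ i) i) = 0 from Finset.prod_eq_zero (Finset.mem_univ j) this, mul_zero]

lemma det_updateColumn_single_self {R : Type*} [CommRing R] {n : ℕ}
    (M : Matrix (Fin (n + 1)) (Fin (n + 1)) R) (j : Fin (n + 1)) :
    (M.updateCol j (Pi.single j 1)).det = (M.submatrix j.succAbove j.succAbove).det := by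
  have h1 : (M.updateCol j (Pi.single j 1)).det = (Mᵀ.updateRow j (Pi.single j 1)).det := by
    rw [← Matrix.det_transpose (M.updateCol j (Pi.single j 1)), ← Matrix.updateRow_transpose]
  rw [h1, ← Matrix.adjugate_apply, Matrix.adjugate_fin_succ_eq_det_submatrix]
  have : ((-1 : R)) ^ ((j : ℕ) + (j : ℕ)) = 1 := Even.neg_one_pow ⟨j, rfl⟩
  rw [this, one_mul, ← Matrix.det_transpose, Matrix.transpose_submatrix, Matrix.transpose_transpose]

lemma submatrix_castSucc_updateColumn {R : Type*} [CommRing R] {n : ℕ}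
    (M : Matrix (Fin (n + 1)) (Fin (n + 1)) R) (p : Fin n) (v : Fin (n + 1) → R) :
    ((M.updateCol p.castSucc v).submatrix Fin.castSucc Fin.castSucc : Matrix (Fin n) (Fin n) R)
      = (M.submatrix Fin.castSucc Fin.castSucc).updateCol p (fun i => v i.castSucc) := by
  ext i k
  simp [Matrix.updateCol_apply, Fin.castSucc_inj]

lemma det_double_single {R : Type*} [CommRing R] {n : ℕ}
    (A : Matrix (Fin (n + 2)) (Fin (n + 2)) R) :
    ((A.updateCol ((Fin.last n).castSucc) (Pi.single ((Fin.last n).castSucc) 1)).updateCol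
        (Fin.last (n + 1)) (Pi.single (Fin.last (n + 1)) 1)).det
      = (A.submatrix (fun i : Fin n => i.castSucc.castSucc)
          (fun i : Fin n => i.castSucc.castSucc)).det := by
  rw [det_updateColumn_single_self, Fin.succAbove_last, submatrix_castSucc_updateColumn]
  have hs : (fun i : Fin (n + 1) => (Pi.single ((Fin.last n).castSucc) 1 : Fin (n + 2) → R) i.castSucc)
      = (Pi.single (Fin.last n) 1 : Fin (n + 1) → R) := by
    funext i
    simp only [Pi.single_apply, Fin.castSucc_inj]
  rw [hs, det_updateColumn_single_self, Fin.succAbove_last, Matrix.submatrix_submatrix]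
  rfl

lemma updateColumn_comm {R : Type*} [CommRing R] {m : Type*} [DecidableEq m] [Fintype m]
    (M : Matrix m m R) {p q : m} (hpq : p ≠ q) {u v : m → R} :
    (M.updateCol p u).updateCol q v = (M.updateCol q v).updateCol p u := by
  ext i k
  by_cases hk : k = q
  · subst hk
    rw [Matrix.updateCol_self, Matrix.updateCol_ne hpq.symm, Matrix.updateCol_self]
  · by_cases hk' : k = p
    · subst hk'
      rw [Matrix.updateCol_ne hk, Matrix.updateCol_self, Matrix.updateCol_self]
    · rw [Matrix.updateCol_ne hk, Matrix.updateCol_ne hk', Matrix.updateCol_ne hk',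
        Matrix.updateCol_ne hk]

lemma dj_domain {R : Type*} [CommRing R] [IsDomain R] {n : ℕ}
    (A : Matrix (Fin (n + 2)) (Fin (n + 2)) R) (hA : A.det ≠ 0) :
    A.det * (A.submatrix (fun i : Fin n => i.castSucc.castSucc)
        (fun i : Fin n => i.castSucc.castSucc)).det
      = (A.submatrix ((Fin.last n).castSucc).succAbove ((Fin.last n).castSucc).succAbove).det *
          (A.submatrix (Fin.last (n + 1)).succAbove (Fin.last (n + 1)).succAbove).det
        - (A.submatrix ((Fin.last n).castSucc).succAbove (Fin.last (n + 1)).succAbove).det *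
          (A.submatrix (Fin.last (n + 1)).succAbove ((Fin.last n).castSucc).succAbove).det := by
  classical
  set p : Fin (n + 2) := (Fin.last n).castSucc with hp
  set q : Fin (n + 2) := Fin.last (n + 1) with hq
  have hpq : p ≠ q := by
    simp only [hp, hq]
    exact (Fin.castSucc_lt_last (Fin.last n)).ne
  set E : Matrix (Fin (n + 2)) (Fin (n + 2)) R :=
    ((1 : Matrix (Fin (n + 2)) (Fin (n + 2)) R).updateCol p (fun i => A.adjugate i p)).updateCol
      q (fun i => A.adjugate i q) with hE
  have hdetE : E.det = A.adjugate p p * A.adjugate q q - A.adjugate q p * A.adjugate p q :=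
    det_one_updateColumn_updateColumn hpq _ _
  have hAE : A * E = (A.updateCol p (A.det • (Pi.single p 1 : Fin (n + 2) → R))).updateCol q
      (A.det • (Pi.single q 1 : Fin (n + 2) → R)) := by
    ext i k
    rw [Matrix.mul_apply]
    by_cases hk : k = q
    · subst hk
      rw [Matrix.updateCol_self]
      have : ∀ j, E j q = A.adjugate j q := fun j => Matrix.updateCol_self ..
      simp_rw [this]
      have := congrFun (congrFun (Matrix.mul_adjugate A) i) q
      rw [Matrix.mul_apply] at this
      rw [this]
      simp [Matrix.one_apply, Pi.single_apply, mul_comm]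
    · by_cases hk' : k = p
      · subst hk'
        rw [Matrix.updateCol_ne hk, Matrix.updateCol_self]
        have : ∀ j, E j p = A.adjugate j p := fun j => by
          rw [hE, Matrix.updateCol_ne (by simpa using hpq), Matrix.updateCol_self]
        simp_rw [this]
        have := congrFun (congrFun (Matrix.mul_adjugate A) i) p
        rw [Matrix.mul_apply] at this
        rw [this]
        simp [Matrix.one_apply, Pi.single_apply, mul_comm]
      · rw [Matrix.updateCol_ne hk, Matrix.updateCol_ne hk']
        have : ∀ j, E j k = (1 : Matrix (Fin (n + 2)) (Fin (n + 2)) R) j k := fun j => by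
          rw [hE, Matrix.updateCol_ne hk, Matrix.updateCol_ne hk']
        simp_rw [this]
        simp [Matrix.one_apply, Finset.sum_ite_eq]
  have hdetAE : (A * E).det = A.det * (A.det *
      (A.submatrix (fun i : Fin n => i.castSucc.castSucc)
        (fun i : Fin n => i.castSucc.castSucc)).det) := by
    rw [hAE, Matrix.det_updateCol_smul, updateColumn_comm _ hpq, Matrix.det_updateCol_smul,
      updateColumn_comm _ hpq.symm, ← det_double_single A]
  have key : E.det = A.det * (A.submatrix (fun i : Fin n => i.castSucc.castSucc)
      (fun i : Fin n => i.castSucc.castSucc)).det := by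
    apply mul_left_cancel₀ hA
    rw [← Matrix.det_mul, hdetAE]
  rw [← key, hdetE]
  have hadj : ∀ i j : Fin (n + 2), A.adjugate i j
      = (-1) ^ ((j : ℕ) + (i : ℕ)) * (A.submatrix j.succAbove i.succAbove).det :=
    fun i j => Matrix.adjugate_fin_succ_eq_det_submatrix A i j
  rw [hadj, hadj, hadj, hadj]
  have e1 : ((-1 : R)) ^ ((p : ℕ) + (p : ℕ)) = 1 := Even.neg_one_pow ⟨p, rfl⟩
  have e2 : ((-1 : R)) ^ ((q : ℕ) + (q : ℕ)) = 1 := Even.neg_one_pow ⟨q, rfl⟩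
  have e3 : ((-1 : R)) ^ ((p : ℕ) + (q : ℕ)) * ((-1 : R)) ^ ((q : ℕ) + (p : ℕ)) = 1 := by
    rw [← pow_add]
    exact Even.neg_one_pow ⟨(p : ℕ) + (q : ℕ), by ring⟩
  rw [e1, e2, one_mul, one_mul, mul_mul_mul_comm, e3, one_mul]

lemma dj_general {R : Type*} [CommRing R] {n : ℕ}
    (A : Matrix (Fin (n + 2)) (Fin (n + 2)) R) :
    A.det * (A.submatrix (fun i : Fin n => i.castSucc.castSucc)
        (fun i : Fin n => i.castSucc.castSucc)).det
      = (A.submatrix ((Fin.last n).castSucc).succAbove ((Fin.last n).castSucc).succAbove).det *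
          (A.submatrix (Fin.last (n + 1)).succAbove (Fin.last (n + 1)).succAbove).det
        - (A.submatrix ((Fin.last n).castSucc).succAbove (Fin.last (n + 1)).succAbove).det *
          (A.submatrix (Fin.last (n + 1)).succAbove ((Fin.last n).castSucc).succAbove).det := by
  classical
  set S := MvPolynomial (Fin (n + 2) × Fin (n + 2)) ℤ
  set P : Matrix (Fin (n + 2)) (Fin (n + 2)) S :=
    Matrix.of fun i j => MvPolynomial.X (i, j) with hPdef
  have hPdet : P.det ≠ 0 := by
    intro h
    have h2 := congrArg (MvPolynomial.eval
      (fun ij : Fin (n + 2) × Fin (n + 2) => if ij.1 = ij.2 then (1 : ℤ) else 0)) h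
    rw [RingHom.map_det, RingHom.mapMatrix_apply] at h2
    have : P.map (MvPolynomial.eval
        (fun ij : Fin (n + 2) × Fin (n + 2) => if ij.1 = ij.2 then (1 : ℤ) else 0))
        = (1 : Matrix (Fin (n + 2)) (Fin (n + 2)) ℤ) := by
      ext i j
      simp [hPdef, Matrix.one_apply]
    rw [this] at h2
    simp at h2
  have hdj := dj_domain P hPdet
  set φ : S →+* R := MvPolynomial.eval₂Hom (Int.castRingHom R) (fun ij => A ij.1 ij.2) with hφ
  have hPA : P.map φ = A := by
    ext i j
    simp only [hPdef, Matrix.map_apply, Matrix.of_apply]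
    rw [MvPolynomial.eval₂Hom_X']
  have h2 := congrArg φ hdj
  simp only [_root_.map_mul, map_sub, RingHom.map_det, RingHom.mapMatrix_apply,
    ← Matrix.submatrix_map, hPA] at h2
  exact h2

lemma hasDerivAt_det_aux {n : ℕ} {A : ℝ → Matrix (Fin n) (Fin n) ℂ}
    {A' : Matrix (Fin n) (Fin n) ℂ} {x : ℝ}
    (h : ∀ i j, HasDerivAt (fun t => A t i j) (A' i j) x) :
    HasDerivAt (fun t => (A t).det)
      (∑ k, ((A x).updateCol k (fun i => A' i k)).det) x := by
  classical
  have hfun : (fun t => (A t).det)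
      = fun t => ∑ σ : Equiv.Perm (Fin n),
          ((Equiv.Perm.sign σ : ℤ) : ℂ) * ∏ i, A t (σ i) i := by
    funext t
    exact Matrix.det_apply' _
  rw [hfun]
  have H : HasDerivAt (fun t => ∑ σ : Equiv.Perm (Fin n),
        ((Equiv.Perm.sign σ : ℤ) : ℂ) * ∏ i, A t (σ i) i)
      (∑ σ : Equiv.Perm (Fin n), ((Equiv.Perm.sign σ : ℤ) : ℂ) *
        ∑ k, (∏ j ∈ Finset.univ.erase k, A x (σ j) j) • A' (σ k) k) x := by
    apply HasDerivAt.fun_sum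
    intro σ _
    exact (HasDerivAt.fun_finsetProd fun i _ => h (σ i) i).const_mul _
  convert H using 1
  simp_rw [Finset.mul_sum]
  rw [Finset.sum_comm]
  apply Finset.sum_congr rfl
  intro k _
  rw [Matrix.det_apply']
  apply Finset.sum_congr rfl
  intro σ _
  congr 1
  rw [← Finset.mul_prod_erase Finset.univ _ (Finset.mem_univ k), Matrix.updateCol_self]
  rw [smul_eq_mul, mul_comm]
  congr 1
  apply Finset.prod_congr rfl
  intro j hj
  rw [Matrix.updateCol_ne (Finset.ne_of_mem_erase hj)]
section Hankel

private noncomputable def Hmat (f : ℝ → ℂ) (n : ℕ) (x : ℝ) : Matrix (Fin n) (Fin n) ℂ :=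
  Matrix.of fun j k : Fin n => iteratedDeriv (j.1 + k.1) f x

private noncomputable def Gmat (f : ℝ → ℂ) (m : ℕ) (x : ℝ) : Matrix (Fin (m + 1)) (Fin (m + 1)) ℂ :=
  Matrix.of fun i j => iteratedDeriv (i.1 + j.1 + if j = Fin.last m then 1 else 0) f x

private noncomputable def Gmat2 (f : ℝ → ℂ) (m : ℕ) (x : ℝ) : Matrix (Fin (m + 1)) (Fin (m + 1)) ℂ :=
  Matrix.of fun i j => iteratedDeriv (i.1 + j.1 + if i = Fin.last m then 1 else 0) f x

private noncomputable def Bmat (f : ℝ → ℂ) (m : ℕ) (x : ℝ) : Matrix (Fin (m + 1)) (Fin (m + 1)) ℂ :=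
  Matrix.of fun i j => iteratedDeriv
    (i.1 + j.1 + (if i = Fin.last m then 1 else 0) + if j = Fin.last m then 1 else 0) f x

variable {f : ℝ → ℂ}

private lemma hasDerivAt_iteratedDeriv (hf : ContDiff ℝ (⊤ : ℕ∞) f) (m : ℕ) (x : ℝ) :
    HasDerivAt (iteratedDeriv m f) (iteratedDeriv (m + 1) f x) x := by
  have hd : DifferentiableAt ℝ (iteratedDeriv m f) x :=
    (hf.differentiable_iteratedDeriv m (by exact_mod_cast ENat.coe_lt_top m)).differentiableAt
  have := hd.hasDerivAt
  rwa [show deriv (iteratedDeriv m f) x = iteratedDeriv (m + 1) f x from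
    (congrFun (iteratedDeriv_succ (n := m)) x).symm] at this

private lemma hasDerivAt_detH (hf : ContDiff ℝ (⊤ : ℕ∞) f) (m : ℕ) (x : ℝ) :
    HasDerivAt (fun t => (Hmat f (m + 1) t).det) ((Gmat f m x).det) x := by
  have h := hasDerivAt_det_aux (A := fun t => Hmat f (m + 1) t)
    (A' := fun i j : Fin (m + 1) => iteratedDeriv (i.1 + j.1 + 1) f x) (x := x)
    (fun i j => hasDerivAt_iteratedDeriv hf _ x)
  have hsum : ∑ k : Fin (m + 1), ((Hmat f (m + 1) x).updateCol k
      (fun i : Fin (m + 1) => iteratedDeriv (i.1 + k.1 + 1) f x)).det = (Gmat f m x).det := by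
    rw [Finset.sum_eq_single (Fin.last m)]
    · congr 1
      ext i j
      by_cases hj : j = Fin.last m
      · subst hj
        rw [Matrix.updateCol_self]
        simp [Gmat]
      · rw [Matrix.updateCol_ne hj]
        simp only [Gmat, Hmat, Matrix.of_apply, if_neg hj, add_zero]
    · intro k _ hk
      have hklt : k.1 < m := Fin.val_lt_last hk
      have hne : k ≠ (⟨k.1 + 1, by omega⟩ : Fin (m + 1)) := by
        intro hEq
        have := congrArg Fin.val hEq
        simp only [] at this
        omega
      apply Matrix.det_zero_of_column_eq hne
      intro r
      rw [Matrix.updateCol_self, Matrix.updateCol_ne (Ne.symm hne)]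
      simp only [Hmat, Matrix.of_apply]
      congr 1 <;> omega
    · intro h
      exact absurd (Finset.mem_univ _) h
  rwa [hsum] at h

private lemma detG_eq_detG2 (m : ℕ) (x : ℝ) : (Gmat f m x).det = (Gmat2 f m x).det := by
  rw [← Matrix.det_transpose (Gmat2 f m x)]
  congr 1
  ext i j
  simp only [Gmat, Gmat2, Matrix.transpose_apply, Matrix.of_apply]
  congr 1
  omega

private lemma hasDerivAt_detG2 (hf : ContDiff ℝ (⊤ : ℕ∞) f) (m : ℕ) (x : ℝ) :
    HasDerivAt (fun t => (Gmat2 f m t).det) ((Bmat f m x).det) x := by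
  have h := hasDerivAt_det_aux (A := fun t => Gmat2 f m t)
    (A' := fun i j : Fin (m + 1) =>
      iteratedDeriv (i.1 + j.1 + (if i = Fin.last m then 1 else 0) + 1) f x) (x := x)
    (fun i j => by
      have := hasDerivAt_iteratedDeriv hf (i.1 + j.1 + (if i = Fin.last m then 1 else 0)) x
      exact this)
  have hsum : ∑ k : Fin (m + 1), ((Gmat2 f m x).updateCol k
      (fun i : Fin (m + 1) =>
        iteratedDeriv (i.1 + k.1 + (if i = Fin.last m then 1 else 0) + 1) f x)).det
      = (Bmat f m x).det := by
    rw [Finset.sum_eq_single (Fin.last m)]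
    · congr 1
      ext i j
      by_cases hj : j = Fin.last m
      · subst hj
        rw [Matrix.updateCol_self]
        simp [Bmat]
      · rw [Matrix.updateCol_ne hj]
        simp only [Gmat2, Bmat, Matrix.of_apply, if_neg hj, add_zero]
    · intro k _ hk
      have hklt : k.1 < m := Fin.val_lt_last hk
      have hne : k ≠ (⟨k.1 + 1, by omega⟩ : Fin (m + 1)) := by
        intro hEq
        have := congrArg Fin.val hEq
        simp only [] at this
        omega
      apply Matrix.det_zero_of_column_eq hne
      intro r
      rw [Matrix.updateCol_self, Matrix.updateCol_ne (Ne.symm hne)]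
      simp only [Gmat2, Matrix.of_apply]
      congr 1 <;> omega
    · intro h
      exact absurd (Finset.mem_univ _) h
  rwa [hsum] at h

private lemma succAbove_val (m : ℕ) (i : Fin (m + 1)) :
    ((((Fin.last m).castSucc : Fin (m + 2)).succAbove i) : ℕ)
      = i.1 + if i = Fin.last m then 1 else 0 := by
  by_cases hi : i = Fin.last m
  · subst hi
    rw [if_pos rfl, Fin.succAbove]
    have : ¬ ((Fin.last m).castSucc < (Fin.last m).castSucc) := lt_irrefl _
    rw [if_neg this]
    simp
  · have hilt : i.1 < m := Fin.val_lt_last hi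
    rw [if_neg hi, Fin.succAbove]
    have : (i.castSucc : Fin (m + 2)) < (Fin.last m).castSucc := by
      simp only [Fin.lt_iff_val_lt_val, Fin.coe_castSucc]
      exact hilt
    rw [if_pos this]
    simp

private lemma hankel_dj (f : ℝ → ℂ) (m : ℕ) (x : ℝ) :
    (Bmat f m x).det * (Hmat f (m + 1) x).det - (Gmat f m x).det ^ 2
      = (Hmat f (m + 2) x).det * (Hmat f m x).det := by
  have h := dj_general (Hmat f (m + 2) x)
  have hsmall : (Hmat f (m + 2) x).submatrix (fun i : Fin m => i.castSucc.castSucc)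
      (fun i : Fin m => i.castSucc.castSucc) = Hmat f m x := by
    ext i j
    simp [Hmat]
  have hqq : (Hmat f (m + 2) x).submatrix (Fin.last (m + 1)).succAbove
      (Fin.last (m + 1)).succAbove = Hmat f (m + 1) x := by
    ext i j
    simp [Hmat, Fin.succAbove_last]
  have hpp : (Hmat f (m + 2) x).submatrix ((Fin.last m).castSucc).succAbove
      ((Fin.last m).castSucc).succAbove = Bmat f m x := by
    ext i j
    simp only [Hmat, Bmat, Matrix.submatrix_apply, Matrix.of_apply]
    rw [succAbove_val, succAbove_val]
    congr 1
    split_ifs <;> omega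
  have hqp : (Hmat f (m + 2) x).submatrix (Fin.last (m + 1)).succAbove
      ((Fin.last m).castSucc).succAbove = Gmat f m x := by
    ext i j
    simp only [Hmat, Gmat, Matrix.submatrix_apply, Matrix.of_apply, Fin.succAbove_last]
    rw [succAbove_val]
    congr 1
    simp only [Fin.coe_castSucc]
    split_ifs <;> omega
  have hpq : ((Hmat f (m + 2) x).submatrix ((Fin.last m).castSucc).succAbove
      (Fin.last (m + 1)).succAbove).det = (Gmat f m x).det := by
    rw [← Matrix.det_transpose]
    congr 1
    ext i j
    simp only [Hmat, Gmat, Matrix.transpose_apply, Matrix.submatrix_apply, Matrix.of_apply,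
      Fin.succAbove_last]
    rw [succAbove_val]
    congr 1
    simp only [Fin.coe_castSucc]
    split_ifs <;> omega
  rw [hsmall, hqq, hpp, hqp] at h
  rw [hpq] at h
  rw [pow_two]
  exact h.symm

end Hankel

/-- Toda's equation `(log τ_n)'' = τ_{n+1} τ_{n-1} / τ_n²` for the Hankel determinants
`τ_n(x) = det[f^{(j+k-2)}(x)]_{j,k=1}^n` of derivatives of a smooth function
(Proposition 4.6(i) of the paper, via Darboux's formula). -/
theorem toda_hankel_determinants
    (f : ℝ → ℂ) (hf : ContDiff ℝ (⊤ : ℕ∞) f)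
    (τ : ℕ → ℝ → ℂ)
    (hτ0 : ∀ x : ℝ, τ 0 x = 1)
    (hτ : ∀ n : ℕ, 1 ≤ n → ∀ x : ℝ, τ n x =
      Matrix.det (Matrix.of fun j k : Fin n => iteratedDeriv (j.1 + k.1) f x)) :
    ∀ n : ℕ, 1 ≤ n → ∀ x : ℝ,
      (deriv (deriv (τ n)) x * τ n x - (deriv (τ n) x) ^ 2
          = τ (n + 1) x * τ (n - 1) x) ∧
      (τ n x ≠ 0 → deriv (fun y => deriv (τ n) y / τ n y) x
          = τ (n + 1) x * τ (n - 1) x / (τ n x) ^ 2) := by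
  intro n hn x
  obtain ⟨m, rfl⟩ : ∃ m, n = m + 1 := ⟨n - 1, by omega⟩
  have hτeq : τ (m + 1) = fun y => (Hmat f (m + 1) y).det := by
    funext y
    exact hτ (m + 1) (by omega) y
  have h1 : ∀ y : ℝ, HasDerivAt (τ (m + 1)) ((Gmat f m y).det) y := by
    intro y
    rw [hτeq]
    exact hasDerivAt_detH hf m y
  have h2 : deriv (τ (m + 1)) = fun y => (Gmat f m y).det := funext fun y => (h1 y).deriv
  have h3 : HasDerivAt (deriv (τ (m + 1))) ((Bmat f m x).det) x := by
    rw [h2]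
    have hGG : (fun y => (Gmat f m y).det) = fun y => (Gmat2 f m y).det :=
      funext fun y => detG_eq_detG2 m y
    rw [hGG]
    exact hasDerivAt_detG2 hf m x
  have h4 : deriv (deriv (τ (m + 1))) x = (Bmat f m x).det := h3.deriv
  have hτm : τ m x = (Hmat f m x).det := by
    rcases Nat.eq_zero_or_pos m with hm | hm
    · subst hm
      rw [hτ0 x]
      exact Matrix.det_fin_zero.symm
    · exact hτ m hm x
  have hpart1 : deriv (deriv (τ (m + 1))) x * τ (m + 1) x - deriv (τ (m + 1)) x ^ 2
      = τ (m + 1 + 1) x * τ (m + 1 - 1) x := by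
    have hτ2 : τ (m + 1 + 1) x = (Hmat f (m + 2) x).det := hτ (m + 1 + 1) (by omega) x
    rw [h4, h2, hτeq, hτ2]
    show (Bmat f m x).det * (Hmat f (m + 1) x).det - (Gmat f m x).det ^ 2
      = (Hmat f (m + 2) x).det * τ m x
    rw [hτm]
    exact hankel_dj f m x
  refine ⟨hpart1, ?_⟩
  intro hτx
  have hdiv : HasDerivAt (fun y => deriv (τ (m + 1)) y / τ (m + 1) y)
      (((Bmat f m x).det * τ (m + 1) x - deriv (τ (m + 1)) x * (Gmat f m x).det)
        / τ (m + 1) x ^ 2) x := h3.div (h1 x) hτx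
  rw [hdiv.deriv]
  congr 1
  rw [← hpart1, h4]
  simp only [h2]
  ring
end

section
/- Let I ⊆ ℝ be an open interval and let f, g, α, β, γ : I → ℂ with f and g differentiable, satisfying the 2×2 system f′ = α·f + β·g and g′ = −γ·f − α·g on I (i.e. J·(f,g)′ = Ω·(f,g) with Ω = [[γ, α],[α, β]] and J = [[0,−1],[1,0]]). Then for all x, y ∈ I with x ≠ y, the integrable kernel K(x,y) = (f(x)g(y) − f(y)g(x))/(x − y) satisfies (∂/∂x + ∂/∂y) K(x,y) = [ (α(x) − α(y))·(f(x)g(y) + f(y)g(x)) + (β(x) − β(y))·g(x)g(y) + (γ(x) − γ(y))·f(x)f(y) ] / (x − y). -/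
/-!
The kernel is symmetric, `K(x,y) = K(y,x)`, and its denominator `x - y` is annihilated by
`∂ₓ + ∂_y`. Hence `(∂ₓ + ∂_y) K` is the sum of the two partial derivatives of the numerator
divided by `x - y`, and substituting the system for `f'` and `g'` gives the formula.
-/

noncomputable section

def integrableKernel (f g : ℝ → ℂ) (x y : ℝ) : ℂ :=
  (f x * g y - f y * g x) / ((x : ℂ) - (y : ℂ))

theorem integrableKernel_comm (f g : ℝ → ℂ) (x y : ℝ) :
    integrableKernel f g x y = integrableKernel f g y x := by
  rw [integrableKernel, integrableKernel, ← neg_div_neg_eq]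
  ring_nf

theorem ofReal_sub_ofReal_ne_zero {x y : ℝ} (hxy : x ≠ y) : (x : ℂ) - (y : ℂ) ≠ 0 :=
  sub_ne_zero.mpr (Complex.ofReal_injective.ne hxy)

theorem HasDerivAt.div_ofReal_sub {F : ℝ → ℂ} {F' c : ℂ} {x : ℝ} (hF : HasDerivAt F F' x)
    (hx : (x : ℂ) - c ≠ 0) :
    HasDerivAt (fun s : ℝ => F s / ((s : ℂ) - c)) ((F' - F x / ((x : ℂ) - c)) / ((x : ℂ) - c)) x := by
  have hden : HasDerivAt (fun s : ℝ => (s : ℂ) - c) 1 x := by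
    simpa using Complex.ofRealCLM.hasDerivAt.sub_const c
  have h := hF.div hden hx
  rw [mul_one] at h
  rw [sub_div' hx, div_div, ← sq]
  exact h

theorem hasDerivAt_integrableKernel_left {f g : ℝ → ℂ} {f' g' : ℂ} {x y : ℝ}
    (hf : HasDerivAt f f' x) (hg : HasDerivAt g g' x) (hxy : x ≠ y) :
    HasDerivAt (fun s => integrableKernel f g s y)
      ((f' * g y - f y * g' - integrableKernel f g x y) / ((x : ℂ) - (y : ℂ))) x :=
  ((hf.mul_const (g y)).sub (hg.const_mul (f y))).div_ofReal_sub (ofReal_sub_ofReal_ne_zero hxy)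

theorem deriv_integrableKernel_left_add_right {f g : ℝ → ℂ} {fx' gx' fy' gy' : ℂ} {x y : ℝ}
    (hfx : HasDerivAt f fx' x) (hgx : HasDerivAt g gx' x)
    (hfy : HasDerivAt f fy' y) (hgy : HasDerivAt g gy' y) (hxy : x ≠ y) :
    deriv (fun s => integrableKernel f g s y) x + deriv (fun s => integrableKernel f g x s) y
      = (fx' * g y - f y * gx' + f x * gy' - fy' * g x) / ((x : ℂ) - (y : ℂ)) := by
  have hsymm : (fun s => integrableKernel f g x s) = fun s => integrableKernel f g s x :=
    funext fun s => integrableKernel_comm f g x s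
  rw [hsymm, (hasDerivAt_integrableKernel_left hfx hgx hxy).deriv,
    (hasDerivAt_integrableKernel_left hfy hgy hxy.symm).deriv, integrableKernel_comm f g y x]
  have hx := ofReal_sub_ofReal_ne_zero hxy
  have hy := ofReal_sub_ofReal_ne_zero hxy.symm
  field_simp
  ring

end

theorem integrable_kernel_deriv_general
    (I : Set ℝ)
    (f g a β γ : ℝ → ℂ)
    (hf : ∀ x ∈ I, HasDerivAt f (a x * f x + β x * g x) x)
    (hg : ∀ x ∈ I, HasDerivAt g (-(γ x * f x) - a x * g x) x)
    (K : ℝ → ℝ → ℂ)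
    (hK : ∀ x y : ℝ, K x y = (f x * g y - f y * g x) / ((x : ℂ) - (y : ℂ))) :
    ∀ x ∈ I, ∀ y ∈ I, x ≠ y →
      deriv (fun s => K s y) x + deriv (fun s => K x s) y
        = ((a x - a y) * (f x * g y + f y * g x)
            + (β x - β y) * (g x * g y)
            + (γ x - γ y) * (f x * f y)) / ((x : ℂ) - (y : ℂ)) := by
  intro x hx y hy hxy
  obtain rfl : K = integrableKernel f g := funext₂ hK
  rw [deriv_integrableKernel_left_add_right (hf x hx) (hg x hx) (hf y hy) (hg y hy) hxy]
  ring

/-- For solutions of the system `J (f,g)' = Ω (f,g)` with `Ω = [[γ,α],[α,β]]`, the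
integrable kernel `K(x,y) = (f(x)g(y) - f(y)g(x))/(x-y)` satisfies
`(∂ₓ + ∂_y) K(x,y) = [(α(x)-α(y))(f(x)g(y)+f(y)g(x)) + (β(x)-β(y))g(x)g(y)
+ (γ(x)-γ(y))f(x)f(y)]/(x-y)` (equation (5.6) in the proof of Theorem 5.1 of the paper). -/
theorem integrable_kernel_deriv
    (I : Set ℝ) (hI : IsOpen I)
    (f g a β γ : ℝ → ℂ)
    (hf : ∀ x ∈ I, HasDerivAt f (a x * f x + β x * g x) x)
    (hg : ∀ x ∈ I, HasDerivAt g (-(γ x * f x) - a x * g x) x)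
    (K : ℝ → ℝ → ℂ)
    (hK : ∀ x y : ℝ, K x y = (f x * g y - f y * g x) / ((x : ℂ) - (y : ℂ))) :
    ∀ x ∈ I, ∀ y ∈ I, x ≠ y →
      deriv (fun s => K s y) x + deriv (fun s => K x s) y
        = ((a x - a y) * (f x * g y + f y * g x)
            + (β x - β y) * (g x * g y)
            + (γ x - γ y) * (f x * f y)) / ((x : ℂ) - (y : ℂ)) :=
  integrable_kernel_deriv_general I f g a β γ hf hg K hK
end

section
/- Let v, w : ℝ → ℂ be differentiable and let α ∈ ℂ, and suppose v′(x) = −w(x) − v(x)² and w′(x) = (2w(x) − x)·v(x) − α for all x ∈ ℝ. Then w is three times differentiable and satisfies w‴(x) + 6·w(x)·w′(x) − 2·w(x) − x·w′(x) = 0 for all x ∈ ℝ; moreover (2w(x) − x)·(w″(x) + 2w(x)² − x·w(x)) + α(α+1) + w′(x) − w′(x)² = 0 for all x ∈ ℝ. -/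
/-!
Write `u = 2w - x`. The canonical equations give `w' = uv - α`, and differentiating once more,
`w'' = uv² - (2α + 1)v - uw`. Since `w'' + 2w² - xw = w'' + uw = uv² - (2α + 1)v`, the
identity `K₂` becomes a polynomial identity in `u`, `v`, `α`; differentiating `w''` once more
and eliminating `v'` and `w'` gives the third-order equation.
-/

lemma hasDerivAt_ofReal (x : ℝ) : HasDerivAt (fun y : ℝ => (y : ℂ)) 1 x :=
  Complex.ofRealCLM.hasDerivAt

lemma HasDerivAt.two_mul_sub_ofReal {f : ℝ → ℂ} {f' : ℂ} {x : ℝ}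
    (hf : HasDerivAt f f' x) :
    HasDerivAt (fun y => 2 * f y - y) (2 * f' - 1) x :=
  (hf.const_mul 2).sub (hasDerivAt_ofReal x)

namespace PainleveII

variable {v w : ℝ → ℂ} {α : ℂ}

lemma deriv_w_eq (hw : ∀ x : ℝ, HasDerivAt w ((2 * w x - x) * v x - α) x) :
    deriv w = fun x => (2 * w x - x) * v x - α :=
  funext fun x => (hw x).deriv

lemma hasDerivAt_deriv_w
    (hv : ∀ x : ℝ, HasDerivAt v (-w x - v x ^ 2) x)
    (hw : ∀ x : ℝ, HasDerivAt w ((2 * w x - x) * v x - α) x) (x : ℝ) :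
    HasDerivAt (deriv w)
      ((2 * w x - x) * v x ^ 2 - (2 * α + 1) * v x - (2 * w x - x) * w x) x := by
  rw [deriv_w_eq hw]
  exact (((hw x).two_mul_sub_ofReal.mul (hv x)).sub_const α).congr_deriv (by ring)

lemma deriv_deriv_w_eq
    (hv : ∀ x : ℝ, HasDerivAt v (-w x - v x ^ 2) x)
    (hw : ∀ x : ℝ, HasDerivAt w ((2 * w x - x) * v x - α) x) :
    deriv (deriv w) = fun x => (2 * w x - x) * v x ^ 2 - (2 * α + 1) * v x - (2 * w x - x) * w x :=
  funext fun x => (hasDerivAt_deriv_w hv hw x).deriv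

lemma hasDerivAt_deriv_deriv_w
    (hv : ∀ x : ℝ, HasDerivAt v (-w x - v x ^ 2) x)
    (hw : ∀ x : ℝ, HasDerivAt w ((2 * w x - x) * v x - α) x) (x : ℝ) :
    HasDerivAt (deriv (deriv w)) (-(6 * w x * deriv w x) + 2 * w x + (x : ℂ) * deriv w x) x := by
  rw [deriv_deriv_w_eq hv hw, deriv_w_eq hw]
  have hu := (hw x).two_mul_sub_ofReal
  exact (((hu.mul ((hv x).pow 2)).sub ((hv x).const_mul (2 * α + 1))).sub
    (hu.mul (hw x))).congr_deriv (by simp only [Pi.pow_apply]; ring)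

end PainleveII

/-- The canonical equations for the Painlevé II Hamiltonian imply that `w` satisfies
`w''' + 6 w w' - 2 w - x w' = 0` and the equation `K₂`:
`(2w - x)(w'' + 2w² - xw) + α(α+1) + w' - (w')² = 0`
(Proposition 6.2(ii) of the paper, with equation (6.8)). -/
theorem painleve_w_equation
    (v w : ℝ → ℂ) (α : ℂ)
    (hv : ∀ x : ℝ, HasDerivAt v (-w x - v x ^ 2) x)
    (hw : ∀ x : ℝ, HasDerivAt w ((2 * w x - x) * v x - α) x) :
    (∀ x : ℝ, HasDerivAt (deriv (deriv w))
        (-(6 * w x * deriv w x) + 2 * w x + (x : ℂ) * deriv w x) x) ∧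
    (∀ x : ℝ, (2 * w x - x) * (deriv (deriv w) x + 2 * w x ^ 2 - (x : ℂ) * w x)
        + α * (α + 1) + deriv w x - (deriv w x) ^ 2 = 0) := by
  refine ⟨PainleveII.hasDerivAt_deriv_deriv_w hv hw, fun x => ?_⟩
  rw [PainleveII.deriv_deriv_w_eq hv hw, PainleveII.deriv_w_eq hw]
  ring
end

section
/- Let φ : ℝ → ℝ be twice differentiable with φ″(u) = u·φ(u) for all u (Airy's equation), and suppose φ(u) → 0 and φ′(u) → 0 as u → +∞, and that for the given x, y ∈ ℝ the function s ↦ φ(x+s)·φ(y+s) is integrable on (0,∞). Then for x ≠ y the Airy kernel factorizes as a product of Hankel kernels: (φ(x)·φ′(y) − φ′(x)·φ(y))/(x − y) = ∫₀^∞ φ(x+s)·φ(y+s) ds. -/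
open MeasureTheory Filter Topology

/-!
For two solutions of `f'' = a f` and `g'' = b g`, the Wronskian `f g' - f' g` has derivative
`(b - a) f g`. Applied to the shifts `φ(x + ·)` and `φ(y + ·)` of a solution of Airy's equation,
where `b - a = y - x` is constant, the integrand `φ(x+s) φ(y+s)` is the derivative of the
Wronskian divided by `y - x`. The Wronskian vanishes at `+∞`, so integrating over `(0, ∞)`
leaves only its value at `0`, which is the Airy kernel up to the factor `x - y`.
-/

theorem hasDerivAt_wronskian {f g f' g' : ℝ → ℝ} {a b s : ℝ}
    (hf : HasDerivAt f (f' s) s) (hg : HasDerivAt g (g' s) s)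
    (hf' : HasDerivAt f' (a * f s) s) (hg' : HasDerivAt g' (b * g s) s) :
    HasDerivAt (fun t => f t * g' t - f' t * g t) ((b - a) * (f s * g s)) s := by
  refine ((hf.mul hg').sub (hf'.mul hg)).congr_deriv ?_
  ring

section AiryShift

variable {φ : ℝ → ℝ}

theorem hasDerivAt_airy_wronskian_shift (hφ : Differentiable ℝ φ)
    (hairy : ∀ u : ℝ, HasDerivAt (deriv φ) (u * φ u) u) (x y s : ℝ) :
    HasDerivAt (fun t => φ (x + t) * deriv φ (y + t) - deriv φ (x + t) * φ (y + t))
      ((y - x) * (φ (x + s) * φ (y + s))) s := by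
  have h := hasDerivAt_wronskian (f := fun t => φ (x + t)) (g := fun t => φ (y + t))
    (hφ (x + s)).hasDerivAt.comp_const_add (hφ (y + s)).hasDerivAt.comp_const_add
    (hairy (x + s)).comp_const_add (hairy (y + s)).comp_const_add
  rwa [add_sub_add_right_eq_sub] at h

theorem tendsto_wronskian_shift_atTop {ψ : ℝ → ℝ}
    (hφ : Tendsto φ atTop (𝓝 0)) (hψ : Tendsto ψ atTop (𝓝 0)) (x y : ℝ) :
    Tendsto (fun t => φ (x + t) * ψ (y + t) - ψ (x + t) * φ (y + t)) atTop (𝓝 0) := by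
  have shift : ∀ {F : ℝ → ℝ} (c : ℝ), Tendsto F atTop (𝓝 0) →
      Tendsto (fun t => F (c + t)) atTop (𝓝 0) :=
    fun c hF => hF.comp (tendsto_atTop_add_const_left atTop c tendsto_id)
  simpa using ((shift x hφ).mul (shift y hψ)).sub ((shift x hψ).mul (shift y hφ))

end AiryShift

/-- Factorization of the Airy kernel as a product of Hankel kernels:
`(φ(x)φ'(y) - φ'(x)φ(y))/(x - y) = ∫₀^∞ φ(x+s)φ(y+s) ds` for a solution of Airy's
equation decaying at `+∞` (equations (6.52)–(6.53) of the paper, case `ℓ = 1`). -/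
theorem airy_kernel_factorization
    (φ : ℝ → ℝ) (x y : ℝ)
    (hφ : Differentiable ℝ φ)
    (hairy : ∀ u : ℝ, HasDerivAt (deriv φ) (u * φ u) u)
    (h0 : Filter.Tendsto φ Filter.atTop (nhds 0))
    (h0' : Filter.Tendsto (deriv φ) Filter.atTop (nhds 0))
    (hint : IntegrableOn (fun s : ℝ => φ (x + s) * φ (y + s)) (Set.Ioi 0))
    (hxy : x ≠ y) :
    (φ x * deriv φ y - deriv φ x * φ y) / (x - y)
      = ∫ s in Set.Ioi (0 : ℝ), φ (x + s) * φ (y + s) := by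
  have hftc := integral_Ioi_of_hasDerivAt_of_tendsto'
    (fun s _ => hasDerivAt_airy_wronskian_shift hφ hairy x y s)
    (hint.const_mul (y - x)) (tendsto_wronskian_shift_atTop h0 h0' x y)
  rw [integral_const_mul] at hftc
  simp only [add_zero] at hftc
  rw [div_eq_iff (sub_ne_zero.mpr hxy)]
  linear_combination hftc
end

section
/- Let A be a complex unital Banach algebra, a ∈ A and ζ ∈ ℂ with ‖a‖ < |ζ|. Then ζ·1 − a is invertible, the series Σ_{j=0}^∞ (2/((2j+1)·ζ^{2j+1}))·a^{2j+1} converges absolutely in A, and exp( Σ_{j=0}^∞ (2/((2j+1)·ζ^{2j+1}))·a^{2j+1} ) = (ζ·1 + a)·(ζ·1 − a)⁻¹. -/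
/-!
The odd series is `L x - L (-x)`, where `L y = ∑ yⁿ⁺¹ / (n + 1)` is the power series of
`-log (1 - y)`. For `‖y‖ < 1` the path `s ↦ exp (L (s • y)) * (1 - s • y)` is constant: all its
values commute, so it differentiates as in the scalar case, and `d/ds L (s • y) = y (1 - s • y)⁻¹`
cancels the derivative of the second factor. Hence `exp (L y) * (1 - y) = 1`, and combining
`y = x` with `y = -x` gives `exp (L x - L (-x)) * (1 - x) = 1 + x`; the theorem is this identity
for `x = ζ⁻¹ • a`.
-/

open NormedSpace Set

theorem exists_gt_mul_lt_one {a b : ℝ} (hb : 0 ≤ b) (hab : a * b < 1) :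
    ∃ ρ, a < ρ ∧ ρ * b < 1 := by
  have hgap₀ : 0 < (1 - a * b) / (b + 1) := div_pos (by linarith) (by linarith)
  refine ⟨a + (1 - a * b) / (b + 1), by linarith, ?_⟩
  have hgap : (1 - a * b) / (b + 1) * b < 1 - a * b := by
    rw [div_mul_eq_mul_div, div_lt_iff₀ (by positivity)]
    nlinarith
  linarith [add_mul a ((1 - a * b) / (b + 1)) b]

section NegLogOneSub

variable {A : Type*} [NormedRing A] [NormedAlgebra ℝ A]

noncomputable def negLogOneSub (y : A) : A :=
  ∑' n : ℕ, ((n : ℝ) + 1)⁻¹ • y ^ (n + 1)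

theorem norm_inv_succ_smul_pow_le (y : A) (n : ℕ) :
    ‖((n : ℝ) + 1)⁻¹ • y ^ (n + 1)‖ ≤ ‖y‖ ^ (n + 1) := by
  rw [norm_smul, norm_inv, ← one_mul (‖y‖ ^ (n + 1))]
  refine mul_le_mul (inv_le_one_of_one_le₀ ?_) (norm_pow_le' y n.succ_pos) (norm_nonneg _)
    zero_le_one
  rw [Real.norm_of_nonneg (by positivity)]
  simp

theorem summable_norm_inv_succ_smul_pow {y : A} (hy : ‖y‖ < 1) :
    Summable fun n : ℕ => ‖((n : ℝ) + 1)⁻¹ • y ^ (n + 1)‖ :=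
  .of_nonneg_of_le (fun _ => norm_nonneg _) (norm_inv_succ_smul_pow_le y)
    ((summable_geometric_of_lt_one (norm_nonneg y) hy).mul_left ‖y‖ |>.congr fun n => by ring)

theorem summable_norm_two_div_smul_pow_odd {x : A} (hx : ‖x‖ < 1) :
    Summable fun j : ℕ => ‖((2 : ℝ) / (2 * j + 1)) • x ^ (2 * j + 1)‖ := by
  refine (((summable_norm_inv_succ_smul_pow hx).comp_injective
    (mul_right_injective₀ two_ne_zero)).mul_left 2).congr fun j => ?_
  rw [div_eq_mul_inv, mul_smul, norm_smul, Real.norm_two, Function.comp_apply, Nat.cast_mul,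
    Nat.cast_two]

@[simp]
theorem negLogOneSub_zero : negLogOneSub (0 : A) = 0 := by
  simp [negLogOneSub]

theorem Commute.negLogOneSub {y z : A} (h : Commute y z) :
    Commute (negLogOneSub y) (negLogOneSub z) :=
  .tsum_left _ fun _ => .tsum_right _ fun _ => ((h.pow_pow _ _).smul_left _).smul_right _

variable [CompleteSpace A]

theorem hasDerivAt_negLogOneSub_smul (y : A) {t : ℝ} (ht : |t| * ‖y‖ < 1) :
    HasDerivAt (fun s : ℝ => negLogOneSub (s • y)) (y * ∑' n : ℕ, (t • y) ^ n) t := by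
  obtain ⟨ρ, htρ, hρ⟩ := exists_gt_mul_lt_one (norm_nonneg y) ht
  have hρ₀ : 0 ≤ ρ := (abs_nonneg t).trans htρ.le
  have hterm : ∀ (n : ℕ) (s : ℝ), HasDerivAt (fun s : ℝ => ((n : ℝ) + 1)⁻¹ • (s • y) ^ (n + 1))
      (s ^ n • y ^ (n + 1)) s := fun n s => by
    simp_rw [smul_pow, smul_smul]
    refine (((hasDerivAt_pow (n + 1) s).const_mul ((n : ℝ) + 1)⁻¹).smul_const
      (y ^ (n + 1))).congr_deriv ?_
    rw [Nat.add_sub_cancel, Nat.cast_succ, inv_mul_cancel_left₀ (by positivity)]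
  have hbound : ∀ (n : ℕ), ∀ s ∈ Ioo (-ρ) ρ, ‖s ^ n • y ^ (n + 1)‖ ≤ ‖y‖ * (ρ * ‖y‖) ^ n := by
    intro n s hs
    calc ‖s ^ n • y ^ (n + 1)‖ = |s| ^ n * ‖y ^ (n + 1)‖ := by
          rw [norm_smul, norm_pow, Real.norm_eq_abs]
      _ ≤ ρ ^ n * ‖y‖ ^ (n + 1) :=
          mul_le_mul (pow_le_pow_left₀ (abs_nonneg s) (abs_lt.mpr hs).le n)
            (norm_pow_le' y n.succ_pos) (norm_nonneg _) (pow_nonneg hρ₀ n)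
      _ = ‖y‖ * (ρ * ‖y‖) ^ n := by ring
  have hsum : Summable fun n : ℕ => ‖y‖ * (ρ * ‖y‖) ^ n :=
    (summable_geometric_of_lt_one (mul_nonneg hρ₀ (norm_nonneg y)) hρ).mul_left _
  have ht' : ‖t • y‖ < 1 := by rwa [norm_smul, Real.norm_eq_abs]
  have hderiv := hasDerivAt_tsum_of_isPreconnected hsum isOpen_Ioo (convex_Ioo _ _).isPreconnected
    (fun n s _ => hterm n s) hbound (y₀ := t) (by simp [abs_lt.mp htρ])
    (summable_norm_inv_succ_smul_pow ht').of_norm (y := t) (by simp [abs_lt.mp htρ])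
  refine hderiv.congr_deriv ?_
  rw [← (summable_geometric_of_norm_lt_one ht').tsum_mul_left]
  congr 1 with n
  rw [smul_pow, mul_smul_comm, ← pow_succ']

theorem HasDerivAt.exp_of_commute {S : ℝ → A} {d : A} {t : ℝ} (hS : HasDerivAt S d t)
    (hcomm : ∀ u, Commute (S t) (S u)) :
    HasDerivAt (fun u => NormedSpace.exp (S u)) (NormedSpace.exp (S t) * d) t := by
  have hsplit : (fun u => NormedSpace.exp (S u))
      = fun u => NormedSpace.exp (S t) * NormedSpace.exp (S u - S t) := by
    funext u
    let +nondep : NormedAlgebra ℚ A := .restrictScalars ℚ ℝ A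
    rw [← exp_add_of_commute ((hcomm u).sub_right (Commute.refl _)), add_sub_cancel]
  have hexp_zero : HasFDerivAt NormedSpace.exp (1 : A →L[ℝ] A) (S t - S t) := by
    simpa using hasFDerivAt_exp_zero (𝕂 := ℝ) (𝔸 := A)
  rw [hsplit]
  exact (hexp_zero.comp_hasDerivAt t (hS.sub_const (S t))).const_mul (NormedSpace.exp (S t))

theorem exp_negLogOneSub_mul_one_sub {y : A} (hy : ‖y‖ < 1) :
    exp (negLogOneSub y) * (1 - y) = 1 := by
  obtain ⟨ρ, hρ₁, hρ⟩ := exists_gt_mul_lt_one (norm_nonneg y) (by rwa [one_mul])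
  let f : ℝ → A := fun s => exp (negLogOneSub (s • y)) * (1 - s • y)
  have hderiv : ∀ s ∈ Ioo (-ρ) ρ, HasDerivAt f 0 s := by
    intro s hs
    have hs' : |s| * ‖y‖ < 1 :=
      lt_of_le_of_lt (mul_le_mul_of_nonneg_right (abs_lt.mpr hs).le (norm_nonneg y)) hρ
    have hsy : ‖s • y‖ < 1 := by rwa [norm_smul, Real.norm_eq_abs]
    have hexp := (hasDerivAt_negLogOneSub_smul y hs').exp_of_commute
      fun u => ((Commute.refl y).smul_left s |>.smul_right u).negLogOneSub
    refine (hexp.mul (((hasDerivAt_id s).smul_const y).const_sub 1)).congr_deriv ?_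
    rw [mul_assoc, mul_assoc y, id, geom_series_mul_neg _ hsy, mul_one, one_smul, ← mul_add,
      add_neg_cancel, mul_zero]
  have hconst : f 1 = f 0 := isOpen_Ioo.is_const_of_deriv_eq_zero (convex_Ioo _ _).isPreconnected
    (fun s hs => (hderiv s hs).differentiableAt.differentiableWithinAt)
    (fun s hs => (hderiv s hs).deriv) ⟨by linarith, hρ₁⟩ ⟨by linarith, by linarith⟩
  simpa [f] using hconst

theorem negLogOneSub_sub_negLogOneSub_neg {x : A} (hx : ‖x‖ < 1) :
    negLogOneSub x - negLogOneSub (-x) = ∑' j : ℕ, ((2 : ℝ) / (2 * j + 1)) • x ^ (2 * j + 1) := by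
  let f : ℕ → A := fun n => ((n : ℝ) + 1)⁻¹ • x ^ (n + 1) - ((n : ℝ) + 1)⁻¹ • (-x) ^ (n + 1)
  have hpos := (summable_norm_inv_succ_smul_pow hx).of_norm
  have hneg := (summable_norm_inv_succ_smul_pow (y := -x) (by rwa [norm_neg])).of_norm
  have hf : Summable f := hpos.sub hneg
  have heven : ∀ k : ℕ, f (2 * k) = ((2 : ℝ) / (2 * k + 1)) • x ^ (2 * k + 1) := fun k => by
    simp only [f, Odd.neg_pow (odd_two_mul_add_one k), smul_neg, sub_neg_eq_add, ← two_smul ℝ,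
      smul_smul]
    push_cast
    ring_nf
  have hodd : ∀ k : ℕ, f (2 * k + 1) = 0 := fun k => by
    have hk : Even (2 * k + 1 + 1) := ⟨k + 1, by omega⟩
    simp only [f, hk.neg_pow, sub_self]
  calc negLogOneSub x - negLogOneSub (-x) = ∑' n, f n := (hpos.tsum_sub hneg).symm
    _ = ∑' k, f (2 * k) + ∑' k, f (2 * k + 1) := (tsum_even_add_odd
        (hf.comp_injective (mul_right_injective₀ two_ne_zero))
        (hf.comp_injective ((add_left_injective 1).comp (mul_right_injective₀ two_ne_zero)))).symm
    _ = ∑' j : ℕ, ((2 : ℝ) / (2 * j + 1)) • x ^ (2 * j + 1) := by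
        simp only [heven, hodd, tsum_zero, add_zero]

theorem exp_tsum_two_div_smul_pow_odd_mul_one_sub {x : A} (hx : ‖x‖ < 1) :
    exp (∑' j : ℕ, ((2 : ℝ) / (2 * j + 1)) • x ^ (2 * j + 1)) * (1 - x) = 1 + x := by
  let +nondep : NormedAlgebra ℚ A := .restrictScalars ℚ ℝ A
  rw [← negLogOneSub_sub_negLogOneSub_neg hx]
  set Lx := negLogOneSub x
  set Lnx := negLogOneSub (-x)
  have hplus : exp Lx * (1 - x) = 1 := exp_negLogOneSub_mul_one_sub hx
  have hminus : exp Lnx * (1 + x) = 1 := by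
    simpa using exp_negLogOneSub_mul_one_sub (y := -x) (by rwa [norm_neg])
  have hcomm : Commute (Lx - Lnx) Lnx :=
    ((Commute.refl x).neg_right.negLogOneSub).sub_left (Commute.refl _)
  calc exp (Lx - Lnx) * (1 - x) = exp (Lx - Lnx) * (exp Lnx * (1 + x)) * (1 - x) := by
        rw [hminus, mul_one]
    _ = exp Lx * (1 - x) * (1 + x) := by
        rw [← mul_assoc, ← exp_add_of_commute hcomm, sub_add_cancel, mul_assoc, mul_assoc,
          show (1 + x) * (1 - x) = (1 - x) * (1 + x) by noncomm_ring]
    _ = 1 + x := by rw [hplus, one_mul]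

end NegLogOneSub

/-- In a complex unital Banach algebra, for `‖a‖ < |ζ|` the Cayley transform is the
exponential of the odd series:
`exp(Σ_j 2 a^{2j+1}/((2j+1) ζ^{2j+1})) = (ζ + a)(ζ - a)⁻¹`
(equation (8.4) in the proof of Lemma 8.1 of the paper). -/
theorem cayley_exp_series
    {A : Type*} [NormedRing A] [NormedAlgebra ℂ A] [CompleteSpace A]
    (a : A) (ζ : ℂ) (h : ‖a‖ < ‖ζ‖) :
    IsUnit (ζ • (1 : A) - a) ∧
    Summable (fun j : ℕ =>
      ‖((2 : ℂ) / ((2 * (j : ℂ) + 1) * ζ ^ (2 * j + 1))) • a ^ (2 * j + 1)‖) ∧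
    NormedSpace.exp
        (∑' j : ℕ, ((2 : ℂ) / ((2 * (j : ℂ) + 1) * ζ ^ (2 * j + 1))) • a ^ (2 * j + 1))
      = (ζ • (1 : A) + a) * Ring.inverse (ζ • (1 : A) - a) := by
  have hζ : ζ ≠ 0 := norm_pos_iff.mp ((norm_nonneg a).trans_lt h)
  obtain ⟨x, hx, rfl⟩ : ∃ x : A, ‖x‖ < 1 ∧ ζ • x = a := by
    refine ⟨ζ⁻¹ • a, ?_, smul_inv_smul₀ hζ a⟩
    rwa [norm_smul, norm_inv, inv_mul_lt_iff₀ (norm_pos_iff.mpr hζ), mul_one]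
  have hterm : ∀ j : ℕ, ((2 : ℂ) / ((2 * (j : ℂ) + 1) * ζ ^ (2 * j + 1))) • (ζ • x) ^ (2 * j + 1)
      = ((2 : ℝ) / (2 * j + 1)) • x ^ (2 * j + 1) := fun j => by
    rw [smul_pow, smul_smul, ← Complex.coe_smul]
    congr 1
    push_cast
    field_simp
  have hsub : ζ • (1 : A) - ζ • x = ζ • (1 - x) := (smul_sub ζ 1 x).symm
  have hunit : IsUnit (ζ • (1 : A) - ζ • x) := by
    rw [hsub]
    exact (isUnit_one_sub_of_norm_lt_one hx).smul (Units.mk0 ζ hζ)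
  refine ⟨hunit, by simpa only [hterm] using summable_norm_two_div_smul_pow_odd hx, ?_⟩
  rw [tsum_congr hterm, Ring.eq_mul_inverse_iff_mul_eq _ _ _ hunit, hsub, mul_smul_comm,
    exp_tsum_two_div_smul_pow_odd_mul_one_sub hx, smul_add]
end

section
/- Let H be a complex Hilbert space, A a bounded linear operator on H, b ∈ H, ℓ : H → ℂ a continuous linear functional, and E a bounded operator on H with A ∘ E + E ∘ A = b⊗ℓ (the rank-one operator ξ ↦ ℓ(ξ)•b). Define G(x,t) = exp(−x•A − t•A³) and R(x,t) = G(x,t) ∘ E ∘ G(x,t), and let U ⊆ ℝ² be an open set on which 1 + R(x,t) is invertible; put F(x,t) = (1 + R(x,t))⁻¹ and v(x,t) = −ℓ( G(x,t) F(x,t) G(x,t) b ). Then v is smooth on U and satisfies the potential Korteweg–de Vries equation 4·∂v/∂t = ∂³v/∂x³ + 6·(∂v/∂x)² on U; consequently u := −2·∂v/∂x satisfies the Korteweg–de Vries equation 4·∂u/∂t = ∂³u/∂x³ − 6·u·∂u/∂x on U. -/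
set_option synthInstance.maxHeartbeats 1000000
set_option maxHeartbeats 4000000

section OpKdV
variable {B : Type*} [Ring B]
private lemma oC (a g f p : B) (hag : a*g = g*a)
    (hm : a*f + f*a = 2*(f*a*f) + f*(g*p*g)*f) :
    -(a*(g*f*g)) - (g*f)*(a*g) + g*(f*(g*p*g)*f)*g
    = -(g*f*a*f*g) - (g*f*a*f*g) := by
  have z1 : a*g - g*a = 0 := by rw [hag]; exact sub_self _
  have zm : a*f + f*a - (2*(f*a*f) + f*(g*p*g)*f) = 0 := by rw [hm]; exact sub_self _
  have key : -(a*(g*f*g)) - (g*f)*(a*g) + g*(f*(g*p*g)*f)*g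
      = (-(g*f*a*f*g) - (g*f*a*f*g))
        + (-((a*g - g*a)*(f*g)) - g*(a*f + f*a - (2*(f*a*f) + f*(g*p*g)*f))*g) := by noncomm_ring
  rw [key, z1, zm]; noncomm_ring

private lemma oN1 (a g f p : B) (hag : a*g = g*a)
    (hm : a*f + f*a = 2*(f*a*f) + f*(g*p*g)*f) :
    -(a*(g*f*a*f*g)) - (g*f*a*f)*(a*g) + g*(f*(g*p*g)*f)*a*f*g + g*f*a*(f*(g*p*g)*f)*g
    = (g*f*(a*a)*f*g) + (g*f*(a*a)*f*g) - (g*f*a*f*a*f*g) - (g*f*a*f*a*f*g) - (g*f*a*f*a*f*g) - (g*f*a*f*a*f*g) := by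
  have z1 : a*g - g*a = 0 := by rw [hag]; exact sub_self _
  have zm : a*f + f*a - (2*(f*a*f) + f*(g*p*g)*f) = 0 := by rw [hm]; exact sub_self _
  have key : -(a*(g*f*a*f*g)) - (g*f*a*f)*(a*g) + g*(f*(g*p*g)*f)*a*f*g + g*f*a*(f*(g*p*g)*f)*g
      = ((g*f*(a*a)*f*g) + (g*f*(a*a)*f*g) - (g*f*a*f*a*f*g) - (g*f*a*f*a*f*g) - (g*f*a*f*a*f*g) - (g*f*a*f*a*f*g))
        + (-((a*g - g*a)*(f*a*f*g)) - g*(a*f + f*a - (2*(f*a*f) + f*(g*p*g)*f))*(a*f*g) - (g*f*a)*(a*f + f*a - (2*(f*a*f) + f*(g*p*g)*f))*g) := by noncomm_ring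
  rw [key, z1, zm]; noncomm_ring

private lemma oN2 (a g f p : B) (hag : a*g = g*a)
    (hm : a*f + f*a = 2*(f*a*f) + f*(g*p*g)*f) :
    -(a*(g*f*(a*a)*f*g)) - (g*f*(a*a)*f)*(a*g) + g*(f*(g*p*g)*f)*(a*a)*f*g + g*f*(a*a)*(f*(g*p*g)*f)*g
    = (g*f*(a*a*a)*f*g) + (g*f*(a*a*a)*f*g) - (g*f*a*f*(a*a)*f*g) - (g*f*a*f*(a*a)*f*g) - (g*f*(a*a)*f*a*f*g) - (g*f*(a*a)*f*a*f*g) := by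
  have z1 : a*g - g*a = 0 := by rw [hag]; exact sub_self _
  have zm : a*f + f*a - (2*(f*a*f) + f*(g*p*g)*f) = 0 := by rw [hm]; exact sub_self _
  have key : -(a*(g*f*(a*a)*f*g)) - (g*f*(a*a)*f)*(a*g) + g*(f*(g*p*g)*f)*(a*a)*f*g + g*f*(a*a)*(f*(g*p*g)*f)*g
      = ((g*f*(a*a*a)*f*g) + (g*f*(a*a*a)*f*g) - (g*f*a*f*(a*a)*f*g) - (g*f*a*f*(a*a)*f*g) - (g*f*(a*a)*f*a*f*g) - (g*f*(a*a)*f*a*f*g))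
        + (-((a*g - g*a)*(f*(a*a)*f*g)) - g*(a*f + f*a - (2*(f*a*f) + f*(g*p*g)*f))*((a*a)*f*g) - (g*f*(a*a))*(a*f + f*a - (2*(f*a*f) + f*(g*p*g)*f))*g) := by noncomm_ring
  rw [key, z1, zm]; noncomm_ring

private lemma oN3 (a g f p : B) (hag : a*g = g*a)
    (hm : a*f + f*a = 2*(f*a*f) + f*(g*p*g)*f) :
    -(a*(g*f*(a*a*a)*f*g)) - (g*f*(a*a*a)*f)*(a*g) + g*(f*(g*p*g)*f)*(a*a*a)*f*g + g*f*(a*a*a)*(f*(g*p*g)*f)*g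
    = (g*f*(a*a*a*a)*f*g) + (g*f*(a*a*a*a)*f*g) - (g*f*a*f*(a*a*a)*f*g) - (g*f*a*f*(a*a*a)*f*g) - (g*f*(a*a*a)*f*a*f*g) - (g*f*(a*a*a)*f*a*f*g) := by
  have z1 : a*g - g*a = 0 := by rw [hag]; exact sub_self _
  have zm : a*f + f*a - (2*(f*a*f) + f*(g*p*g)*f) = 0 := by rw [hm]; exact sub_self _
  have key : -(a*(g*f*(a*a*a)*f*g)) - (g*f*(a*a*a)*f)*(a*g) + g*(f*(g*p*g)*f)*(a*a*a)*f*g + g*f*(a*a*a)*(f*(g*p*g)*f)*g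
      = ((g*f*(a*a*a*a)*f*g) + (g*f*(a*a*a*a)*f*g) - (g*f*a*f*(a*a*a)*f*g) - (g*f*a*f*(a*a*a)*f*g) - (g*f*(a*a*a)*f*a*f*g) - (g*f*(a*a*a)*f*a*f*g))
        + (-((a*g - g*a)*(f*(a*a*a)*f*g)) - g*(a*f + f*a - (2*(f*a*f) + f*(g*p*g)*f))*((a*a*a)*f*g) - (g*f*(a*a*a))*(a*f + f*a - (2*(f*a*f) + f*(g*p*g)*f))*g) := by noncomm_ring
  rw [key, z1, zm]; noncomm_ring

private lemma oM11 (a g f p : B) (hag : a*g = g*a)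
    (hm : a*f + f*a = 2*(f*a*f) + f*(g*p*g)*f) :
    -(a*(g*f*a*f*a*f*g)) - (g*f*a*f*a*f)*(a*g) + g*(f*(g*p*g)*f)*a*f*a*f*g + g*f*a*(f*(g*p*g)*f)*a*f*g + g*f*a*f*a*(f*(g*p*g)*f)*g
    = (g*f*(a*a)*f*a*f*g) + (g*f*a*f*(a*a)*f*g) - (g*f*a*f*a*f*a*f*g) - (g*f*a*f*a*f*a*f*g) - (g*f*a*f*a*f*a*f*g) - (g*f*a*f*a*f*a*f*g) + ((g*f*a*f*g)*p*(g*f*a*f*g)) := by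
  have z1 : a*g - g*a = 0 := by rw [hag]; exact sub_self _
  have zm : a*f + f*a - (2*(f*a*f) + f*(g*p*g)*f) = 0 := by rw [hm]; exact sub_self _
  have key : -(a*(g*f*a*f*a*f*g)) - (g*f*a*f*a*f)*(a*g) + g*(f*(g*p*g)*f)*a*f*a*f*g + g*f*a*(f*(g*p*g)*f)*a*f*g + g*f*a*f*a*(f*(g*p*g)*f)*g
      = ((g*f*(a*a)*f*a*f*g) + (g*f*a*f*(a*a)*f*g) - (g*f*a*f*a*f*a*f*g) - (g*f*a*f*a*f*a*f*g) - (g*f*a*f*a*f*a*f*g) - (g*f*a*f*a*f*a*f*g) + ((g*f*a*f*g)*p*(g*f*a*f*g)))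
        + (-((a*g - g*a)*(f*a*f*a*f*g)) - g*(a*f + f*a - (2*(f*a*f) + f*(g*p*g)*f))*(a*f*a*f*g) - (g*f*a*f*a)*(a*f + f*a - (2*(f*a*f) + f*(g*p*g)*f))*g) := by noncomm_ring
  rw [key, z1, zm]; noncomm_ring

private lemma oM12 (a g f p : B) (hag : a*g = g*a)
    (hm : a*f + f*a = 2*(f*a*f) + f*(g*p*g)*f) :
    -(a*(g*f*a*f*(a*a)*f*g)) - (g*f*a*f*(a*a)*f)*(a*g) + g*(f*(g*p*g)*f)*a*f*(a*a)*f*g + g*f*a*(f*(g*p*g)*f)*(a*a)*f*g + g*f*a*f*(a*a)*(f*(g*p*g)*f)*g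
    = (g*f*(a*a)*f*(a*a)*f*g) + (g*f*a*f*(a*a*a)*f*g) - (g*f*a*f*a*f*(a*a)*f*g) - (g*f*a*f*a*f*(a*a)*f*g) - (g*f*a*f*(a*a)*f*a*f*g) - (g*f*a*f*(a*a)*f*a*f*g) + ((g*f*a*f*g)*p*(g*f*(a*a)*f*g)) := by
  have z1 : a*g - g*a = 0 := by rw [hag]; exact sub_self _
  have zm : a*f + f*a - (2*(f*a*f) + f*(g*p*g)*f) = 0 := by rw [hm]; exact sub_self _
  have key : -(a*(g*f*a*f*(a*a)*f*g)) - (g*f*a*f*(a*a)*f)*(a*g) + g*(f*(g*p*g)*f)*a*f*(a*a)*f*g + g*f*a*(f*(g*p*g)*f)*(a*a)*f*g + g*f*a*f*(a*a)*(f*(g*p*g)*f)*g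
      = ((g*f*(a*a)*f*(a*a)*f*g) + (g*f*a*f*(a*a*a)*f*g) - (g*f*a*f*a*f*(a*a)*f*g) - (g*f*a*f*a*f*(a*a)*f*g) - (g*f*a*f*(a*a)*f*a*f*g) - (g*f*a*f*(a*a)*f*a*f*g) + ((g*f*a*f*g)*p*(g*f*(a*a)*f*g)))
        + (-((a*g - g*a)*(f*a*f*(a*a)*f*g)) - g*(a*f + f*a - (2*(f*a*f) + f*(g*p*g)*f))*(a*f*(a*a)*f*g) - (g*f*a*f*(a*a))*(a*f + f*a - (2*(f*a*f) + f*(g*p*g)*f))*g) := by noncomm_ring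
  rw [key, z1, zm]; noncomm_ring

private lemma oM21 (a g f p : B) (hag : a*g = g*a)
    (hm : a*f + f*a = 2*(f*a*f) + f*(g*p*g)*f) :
    -(a*(g*f*(a*a)*f*a*f*g)) - (g*f*(a*a)*f*a*f)*(a*g) + g*(f*(g*p*g)*f)*(a*a)*f*a*f*g + g*f*(a*a)*(f*(g*p*g)*f)*a*f*g + g*f*(a*a)*f*a*(f*(g*p*g)*f)*g
    = (g*f*(a*a*a)*f*a*f*g) + (g*f*(a*a)*f*(a*a)*f*g) - (g*f*a*f*(a*a)*f*a*f*g) - (g*f*a*f*(a*a)*f*a*f*g) - (g*f*(a*a)*f*a*f*a*f*g) - (g*f*(a*a)*f*a*f*a*f*g) + ((g*f*(a*a)*f*g)*p*(g*f*a*f*g)) := by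
  have z1 : a*g - g*a = 0 := by rw [hag]; exact sub_self _
  have zm : a*f + f*a - (2*(f*a*f) + f*(g*p*g)*f) = 0 := by rw [hm]; exact sub_self _
  have key : -(a*(g*f*(a*a)*f*a*f*g)) - (g*f*(a*a)*f*a*f)*(a*g) + g*(f*(g*p*g)*f)*(a*a)*f*a*f*g + g*f*(a*a)*(f*(g*p*g)*f)*a*f*g + g*f*(a*a)*f*a*(f*(g*p*g)*f)*g
      = ((g*f*(a*a*a)*f*a*f*g) + (g*f*(a*a)*f*(a*a)*f*g) - (g*f*a*f*(a*a)*f*a*f*g) - (g*f*a*f*(a*a)*f*a*f*g) - (g*f*(a*a)*f*a*f*a*f*g) - (g*f*(a*a)*f*a*f*a*f*g) + ((g*f*(a*a)*f*g)*p*(g*f*a*f*g)))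
        + (-((a*g - g*a)*(f*(a*a)*f*a*f*g)) - g*(a*f + f*a - (2*(f*a*f) + f*(g*p*g)*f))*((a*a)*f*a*f*g) - (g*f*(a*a)*f*a)*(a*f + f*a - (2*(f*a*f) + f*(g*p*g)*f))*g) := by noncomm_ring
  rw [key, z1, zm]; noncomm_ring

private lemma oM111 (a g f p : B) (hag : a*g = g*a)
    (hm : a*f + f*a = 2*(f*a*f) + f*(g*p*g)*f) :
    -(a*(g*f*a*f*a*f*a*f*g)) - (g*f*a*f*a*f*a*f)*(a*g) + g*(f*(g*p*g)*f)*a*f*a*f*a*f*g + g*f*a*(f*(g*p*g)*f)*a*f*a*f*g + g*f*a*f*a*(f*(g*p*g)*f)*a*f*g + g*f*a*f*a*f*a*(f*(g*p*g)*f)*g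
    = (g*f*(a*a)*f*a*f*a*f*g) + (g*f*a*f*a*f*(a*a)*f*g) - (g*f*a*f*a*f*a*f*a*f*g) - (g*f*a*f*a*f*a*f*a*f*g) - (g*f*a*f*a*f*a*f*a*f*g) - (g*f*a*f*a*f*a*f*a*f*g) + ((g*f*a*f*g)*p*(g*f*a*f*a*f*g)) + ((g*f*a*f*a*f*g)*p*(g*f*a*f*g)) := by
  have z1 : a*g - g*a = 0 := by rw [hag]; exact sub_self _
  have zm : a*f + f*a - (2*(f*a*f) + f*(g*p*g)*f) = 0 := by rw [hm]; exact sub_self _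
  have key : -(a*(g*f*a*f*a*f*a*f*g)) - (g*f*a*f*a*f*a*f)*(a*g) + g*(f*(g*p*g)*f)*a*f*a*f*a*f*g + g*f*a*(f*(g*p*g)*f)*a*f*a*f*g + g*f*a*f*a*(f*(g*p*g)*f)*a*f*g + g*f*a*f*a*f*a*(f*(g*p*g)*f)*g
      = ((g*f*(a*a)*f*a*f*a*f*g) + (g*f*a*f*a*f*(a*a)*f*g) - (g*f*a*f*a*f*a*f*a*f*g) - (g*f*a*f*a*f*a*f*a*f*g) - (g*f*a*f*a*f*a*f*a*f*g) - (g*f*a*f*a*f*a*f*a*f*g) + ((g*f*a*f*g)*p*(g*f*a*f*a*f*g)) + ((g*f*a*f*a*f*g)*p*(g*f*a*f*g)))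
        + (-((a*g - g*a)*(f*a*f*a*f*a*f*g)) - g*(a*f + f*a - (2*(f*a*f) + f*(g*p*g)*f))*(a*f*a*f*a*f*g) - (g*f*a*f*a*f*a)*(a*f + f*a - (2*(f*a*f) + f*(g*p*g)*f))*g) := by noncomm_ring
  rw [key, z1, zm]; noncomm_ring

private lemma oJ11 (a g f p : B)
    (hm : a*f + f*a = 2*(f*a*f) + f*(g*p*g)*f) :
    (g*f*a*f*g)*p*(g*f*a*f*g)
    = (g*f*(a*a)*f*a*f*g) + (g*f*a*f*(a*a)*f*g) - (g*f*a*f*a*f*a*f*g) - (g*f*a*f*a*f*a*f*g) := by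
  have zm : a*f + f*a - (2*(f*a*f) + f*(g*p*g)*f) = 0 := by rw [hm]; exact sub_self _
  have key : (g*f*a*f*g)*p*(g*f*a*f*g)
      = ((g*f*(a*a)*f*a*f*g) + (g*f*a*f*(a*a)*f*g) - (g*f*a*f*a*f*a*f*g) - (g*f*a*f*a*f*a*f*g))
        + (-((g*f*a)*(a*f + f*a - (2*(f*a*f) + f*(g*p*g)*f))*(a*f*g))) := by noncomm_ring
  rw [key, zm]; noncomm_ring

private lemma oJ12 (a g f p : B)
    (hm : a*f + f*a = 2*(f*a*f) + f*(g*p*g)*f) :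
    (g*f*a*f*g)*p*(g*f*(a*a)*f*g)
    = (g*f*(a*a)*f*(a*a)*f*g) + (g*f*a*f*(a*a*a)*f*g) - (g*f*a*f*a*f*(a*a)*f*g) - (g*f*a*f*a*f*(a*a)*f*g) := by
  have zm : a*f + f*a - (2*(f*a*f) + f*(g*p*g)*f) = 0 := by rw [hm]; exact sub_self _
  have key : (g*f*a*f*g)*p*(g*f*(a*a)*f*g)
      = ((g*f*(a*a)*f*(a*a)*f*g) + (g*f*a*f*(a*a*a)*f*g) - (g*f*a*f*a*f*(a*a)*f*g) - (g*f*a*f*a*f*(a*a)*f*g))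
        + (-((g*f*a)*(a*f + f*a - (2*(f*a*f) + f*(g*p*g)*f))*((a*a)*f*g))) := by noncomm_ring
  rw [key, zm]; noncomm_ring

private lemma oJ21 (a g f p : B)
    (hm : a*f + f*a = 2*(f*a*f) + f*(g*p*g)*f) :
    (g*f*(a*a)*f*g)*p*(g*f*a*f*g)
    = (g*f*(a*a*a)*f*a*f*g) + (g*f*(a*a)*f*(a*a)*f*g) - (g*f*(a*a)*f*a*f*a*f*g) - (g*f*(a*a)*f*a*f*a*f*g) := by
  have zm : a*f + f*a - (2*(f*a*f) + f*(g*p*g)*f) = 0 := by rw [hm]; exact sub_self _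
  have key : (g*f*(a*a)*f*g)*p*(g*f*a*f*g)
      = ((g*f*(a*a*a)*f*a*f*g) + (g*f*(a*a)*f*(a*a)*f*g) - (g*f*(a*a)*f*a*f*a*f*g) - (g*f*(a*a)*f*a*f*a*f*g))
        + (-((g*f*(a*a))*(a*f + f*a - (2*(f*a*f) + f*(g*p*g)*f))*(a*f*g))) := by noncomm_ring
  rw [key, zm]; noncomm_ring

private lemma oJ1m (a g f p : B)
    (hm : a*f + f*a = 2*(f*a*f) + f*(g*p*g)*f) :
    (g*f*a*f*g)*p*(g*f*a*f*a*f*g)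
    = (g*f*(a*a)*f*a*f*a*f*g) + (g*f*a*f*(a*a)*f*a*f*g) - (g*f*a*f*a*f*a*f*a*f*g) - (g*f*a*f*a*f*a*f*a*f*g) := by
  have zm : a*f + f*a - (2*(f*a*f) + f*(g*p*g)*f) = 0 := by rw [hm]; exact sub_self _
  have key : (g*f*a*f*g)*p*(g*f*a*f*a*f*g)
      = ((g*f*(a*a)*f*a*f*a*f*g) + (g*f*a*f*(a*a)*f*a*f*g) - (g*f*a*f*a*f*a*f*a*f*g) - (g*f*a*f*a*f*a*f*a*f*g))
        + (-((g*f*a)*(a*f + f*a - (2*(f*a*f) + f*(g*p*g)*f))*(a*f*a*f*g))) := by noncomm_ring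
  rw [key, zm]; noncomm_ring

private lemma oJm1 (a g f p : B)
    (hm : a*f + f*a = 2*(f*a*f) + f*(g*p*g)*f) :
    (g*f*a*f*a*f*g)*p*(g*f*a*f*g)
    = (g*f*a*f*(a*a)*f*a*f*g) + (g*f*a*f*a*f*(a*a)*f*g) - (g*f*a*f*a*f*a*f*a*f*g) - (g*f*a*f*a*f*a*f*a*f*g) := by
  have zm : a*f + f*a - (2*(f*a*f) + f*(g*p*g)*f) = 0 := by rw [hm]; exact sub_self _
  have key : (g*f*a*f*a*f*g)*p*(g*f*a*f*g)
      = ((g*f*a*f*(a*a)*f*a*f*g) + (g*f*a*f*a*f*(a*a)*f*g) - (g*f*a*f*a*f*a*f*a*f*g) - (g*f*a*f*a*f*a*f*a*f*g))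
        + (-((g*f*a*f*a)*(a*f + f*a - (2*(f*a*f) + f*(g*p*g)*f))*(a*f*g))) := by noncomm_ring
  rw [key, zm]; noncomm_ring

private lemma oCt (a g f r : B) (hag : a*g = g*a)
    (hfr : f*r = 1 - f) (hrf : r*f = 1 - f) :
    -((a*a*a)*(g*f*g)) - (g*f)*((a*a*a)*g) + g*(f*((a*a*a)*r + r*(a*a*a))*f)*g
    = -(g*f*(a*a*a)*f*g) - (g*f*(a*a*a)*f*g) := by
  have z1 : a*g - g*a = 0 := by rw [hag]; exact sub_self _
  have zfr : f*r - (1 - f) = 0 := by rw [hfr]; exact sub_self _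
  have zrf : r*f - (1 - f) = 0 := by rw [hrf]; exact sub_self _
  have key : -((a*a*a)*(g*f*g)) - (g*f)*((a*a*a)*g) + g*(f*((a*a*a)*r + r*(a*a*a))*f)*g
      = (-(g*f*(a*a*a)*f*g) - (g*f*(a*a*a)*f*g))
        + (-((a*a)*(a*g - g*a)*(f*g)) - (a*(a*g - g*a)*(a*f*g)) - ((a*g - g*a)*(a*a*f*g)) + (g*f*(a*a*a)*(r*f - (1 - f))*(g)) + (g*(f*r - (1 - f))*(a*a*a)*f*(g))) := by noncomm_ring
  rw [key, z1, zfr, zrf]; noncomm_ring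

private lemma oN1t (a g f r : B) (hag : a*g = g*a)
    (hfr : f*r = 1 - f) (hrf : r*f = 1 - f) :
    -((a*a*a)*(g*f*a*f*g)) - (g*f*a*f)*((a*a*a)*g) + g*(f*((a*a*a)*r + r*(a*a*a))*f)*a*f*g + g*f*a*(f*((a*a*a)*r + r*(a*a*a))*f)*g
    = (g*f*(a*a*a*a)*f*g) + (g*f*(a*a*a*a)*f*g) - (g*f*(a*a*a)*f*a*f*g) - (g*f*(a*a*a)*f*a*f*g) - (g*f*a*f*(a*a*a)*f*g) - (g*f*a*f*(a*a*a)*f*g) := by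
  have z1 : a*g - g*a = 0 := by rw [hag]; exact sub_self _
  have zfr : f*r - (1 - f) = 0 := by rw [hfr]; exact sub_self _
  have zrf : r*f - (1 - f) = 0 := by rw [hrf]; exact sub_self _
  have key : -((a*a*a)*(g*f*a*f*g)) - (g*f*a*f)*((a*a*a)*g) + g*(f*((a*a*a)*r + r*(a*a*a))*f)*a*f*g + g*f*a*(f*((a*a*a)*r + r*(a*a*a))*f)*g
      = ((g*f*(a*a*a*a)*f*g) + (g*f*(a*a*a*a)*f*g) - (g*f*(a*a*a)*f*a*f*g) - (g*f*(a*a*a)*f*a*f*g) - (g*f*a*f*(a*a*a)*f*g) - (g*f*a*f*(a*a*a)*f*g))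
        + (-((a*a)*(a*g - g*a)*(f*a*f*g)) - (a*(a*g - g*a)*(a*f*a*f*g)) - ((a*g - g*a)*(a*a*f*a*f*g)) + (g*f*(a*a*a)*(r*f - (1 - f))*(a*f*g)) + (g*(f*r - (1 - f))*(a*a*a)*f*(a*f*g)) + (g*f*a*f*(a*a*a)*(r*f - (1 - f))*(g)) + (g*f*a*(f*r - (1 - f))*(a*a*a)*f*(g))) := by noncomm_ring
  rw [key, z1, zfr, zrf]; noncomm_ring

end OpKdV

open Filter in
/-- For a linear system with `AE + EA = b⊗ℓ`, `G(x,t) = e^{-xA - tA³}`,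
`R = G E G`, `F = (1+R)⁻¹` and `v = -ℓ(G F G b)`, the function `v` is smooth where `1+R`
is invertible and satisfies the potential KdV equation `4 v_t = v_xxx + 6 (v_x)²`; hence
`u = -2 v_x` satisfies KdV `4 u_t = u_xxx - 6 u u_x`
(Lemma 8.3(ii) of the paper, equations (8.17)–(8.21)). -/
theorem kdv_from_linear_system
    {H : Type*} [NormedAddCommGroup H] [InnerProductSpace ℂ H] [CompleteSpace H]
    (A E : H →L[ℂ] H) (b : H) (ℓ : H →L[ℂ] ℂ)
    (hE : A * E + E * A = ℓ.smulRight b)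
    (G : ℝ → ℝ → (H →L[ℂ] H))
    (hG : ∀ x t : ℝ, G x t = NormedSpace.exp (-(x • A) - t • A ^ 3))
    (R : ℝ → ℝ → (H →L[ℂ] H))
    (hR : ∀ x t : ℝ, R x t = G x t * E * G x t)
    (U : Set (ℝ × ℝ)) (hU : IsOpen U)
    (hinv : ∀ p ∈ U, IsUnit (1 + R p.1 p.2))
    (F : ℝ → ℝ → (H →L[ℂ] H))
    (hF : ∀ x t : ℝ, F x t = Ring.inverse (1 + R x t))
    (v : ℝ → ℝ → ℂ)
    (hv : ∀ x t : ℝ, v x t = -ℓ ((G x t * F x t * G x t) b))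
    (u : ℝ → ℝ → ℂ)
    (hu : ∀ x t : ℝ, u x t = -2 * deriv (fun s => v s t) x) :
    ContDiffOn ℝ (⊤ : ℕ∞) (fun p : ℝ × ℝ => v p.1 p.2) U ∧
    (∀ p ∈ U, 4 * deriv (fun s => v p.1 s) p.2
        = iteratedDeriv 3 (fun s => v s p.2) p.1
          + 6 * (deriv (fun s => v s p.2) p.1) ^ 2) ∧
    (∀ p ∈ U, 4 * deriv (fun s => u p.1 s) p.2
        = iteratedDeriv 3 (fun s => u s p.2) p.1
          - 6 * u p.1 p.2 * deriv (fun s => u s p.2) p.1) := by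
  classical
  set P : H →L[ℂ] H := ℓ.smulRight b with hPdef
  have hps : ∀ X Y : H →L[ℂ] H, ℓ ((X * P * Y) b) = ℓ (Y b) * ℓ (X b) := by
    intro X Y
    simp [hPdef, ContinuousLinearMap.mul_apply, ContinuousLinearMap.smulRight_apply, map_smul,
      smul_eq_mul]
  have hcomp : ∀ (Θ : ℝ → (H →L[ℂ] H)) (D : H →L[ℂ] H) (x : ℝ), HasDerivAt Θ D x →
      HasDerivAt (fun s => ℓ ((Θ s) b)) (ℓ (D b)) x := by
    intro Θ D x h
    have h2 := (((ℓ.comp (ContinuousLinearMap.apply ℂ H b)).restrictScalars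
      ℝ).hasFDerivAt).comp_hasDerivAt x h
    exact h2
  have hGfact : ∀ x t : ℝ,
      G x t = NormedSpace.exp (x • (-A)) * NormedSpace.exp (t • (-(A ^ 3))) := by
    intro x t
    rw [hG, show -(x • A) - t • A ^ 3 = x • (-A) + t • (-(A ^ 3)) by
      rw [smul_neg, smul_neg]; abel]
    exact NormedSpace.exp_add_of_commute_of_mem_ball (𝕂 := ℂ)
      ((((Commute.refl A).pow_right 3).neg_left.neg_right).smul_left x |>.smul_right t)
      ((NormedSpace.expSeries_radius_eq_top ℂ (H →L[ℂ] H)).symm ▸ edist_lt_top _ _)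
      ((NormedSpace.expSeries_radius_eq_top ℂ (H →L[ℂ] H)).symm ▸ edist_lt_top _ _)
  have hAG : ∀ x t : ℝ, A * G x t = G x t * A := by
    intro x t
    rw [hG]
    exact (((((Commute.refl A).smul_right x).neg_right).sub_right
      (((Commute.refl A).pow_right 3).smul_right t)).exp_right).eq
  have hA3G : ∀ x t : ℝ, (A * A * A) * G x t = G x t * (A * A * A) := by
    intro x t
    have h := hAG x t
    calc (A * A * A) * G x t = A * (A * (A * G x t)) := by noncomm_ring
      _ = A * (A * (G x t * A)) := by rw [h]
      _ = A * ((A * G x t) * A) := by noncomm_ring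
      _ = A * ((G x t * A) * A) := by rw [h]
      _ = (A * G x t) * (A * A) := by noncomm_ring
      _ = (G x t * A) * (A * A) := by rw [h]
      _ = G x t * (A * A * A) := by noncomm_ring
  have hGx : ∀ x t : ℝ, HasDerivAt (fun s => G s t) (-(A * G x t)) x := by
    intro x t
    have hfun : (fun s : ℝ => G s t)
        = fun s => NormedSpace.exp (s • (-A)) * NormedSpace.exp (t • (-(A ^ 3))) :=
      funext fun s => hGfact s t
    rw [hfun]
    have h1 := (hasDerivAt_exp_smul_const' (𝕂 := ℝ) (-A) x).mul_const
      (NormedSpace.exp (t • (-(A ^ 3))))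
    refine h1.congr_deriv ?_
    rw [hGfact x t]
    noncomm_ring
  have hGt : ∀ x t : ℝ, HasDerivAt (fun s => G x s) (-((A * A * A) * G x t)) t := by
    intro x t
    have hfun : (fun s : ℝ => G x s)
        = fun s => NormedSpace.exp (x • (-A)) * NormedSpace.exp (s • (-(A ^ 3))) :=
      funext fun s => hGfact x s
    rw [hfun]
    have h1 := (hasDerivAt_exp_smul_const' (𝕂 := ℝ) (-(A ^ 3)) t).const_mul
      (NormedSpace.exp (x • (-A)))
    refine h1.congr_deriv ?_
    have hc : (A * A * A) * NormedSpace.exp (x • (-A))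
        = NormedSpace.exp (x • (-A)) * (A * A * A) := by
      have h3 := ((((Commute.refl A).pow_left 3).neg_right.smul_right x).exp_right).eq
      rw [show A * A * A = A ^ 3 from by noncomm_ring]
      exact h3
    rw [hGfact x t,
      show -(A * A * A * (NormedSpace.exp (x • (-A)) * NormedSpace.exp (t • (-(A ^ 3)))))
        = -(((A * A * A) * NormedSpace.exp (x • (-A))) * NormedSpace.exp (t • (-(A ^ 3))))
        from by noncomm_ring, hc]
    noncomm_ring
  have hFone : ∀ x t : ℝ, (x, t) ∈ U → F x t * (1 + R x t) = 1 := by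
    intro x t hxt
    rw [hF]
    exact Ring.inverse_mul_cancel _ (hinv (x, t) hxt)
  have honeF : ∀ x t : ℝ, (x, t) ∈ U → (1 + R x t) * F x t = 1 := by
    intro x t hxt
    rw [hF]
    exact Ring.mul_inverse_cancel _ (hinv (x, t) hxt)
  have hFR : ∀ x t : ℝ, (x, t) ∈ U → F x t * R x t = 1 - F x t := by
    intro x t hxt
    calc F x t * R x t = F x t * (1 + R x t) - F x t := by noncomm_ring
      _ = 1 - F x t := by rw [hFone x t hxt]
  have hRF : ∀ x t : ℝ, (x, t) ∈ U → R x t * F x t = 1 - F x t := by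
    intro x t hxt
    calc R x t * F x t = (1 + R x t) * F x t - F x t := by noncomm_ring
      _ = 1 - F x t := by rw [honeF x t hxt]
  have hrawx : ∀ x t : ℝ,
      -(A * G x t) * E * G x t + G x t * E * -(A * G x t) = -(G x t * P * G x t) := by
    intro x t
    rw [show -(A * G x t) * E * G x t + G x t * E * -(A * G x t)
        = -((A * G x t) * (E * G x t) + G x t * ((E * A) * G x t)) from by noncomm_ring, hAG x t]
    rw [show -((G x t * A) * (E * G x t) + G x t * ((E * A) * G x t))
        = -(G x t * ((A * E + E * A) * G x t)) from by noncomm_ring, hE]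
    noncomm_ring
  have hFx : ∀ x t : ℝ, (x, t) ∈ U →
      HasDerivAt (fun s => F s t) (F x t * (G x t * P * G x t) * F x t) x := by
    intro x t hxt
    have hu' := hinv (x, t) hxt
    have hRd : HasDerivAt (fun s => 1 + R s t)
        (-(A * G x t) * E * G x t + G x t * E * -(A * G x t)) x := by
      have h := (((hGx x t).mul_const E).mul (hGx x t)).const_add 1
      have hfun : (fun s : ℝ => 1 + R s t) = fun s => 1 + G s t * E * G s t :=
        funext fun s => by rw [hR]
      rw [hfun]; exact h
    have hfd := hasFDerivAt_ringInverse (𝕜 := ℝ) hu'.unit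
    rw [hu'.unit_spec] at hfd
    have h2 := hfd.comp_hasDerivAt x hRd
    have hiv : (↑hu'.unit⁻¹ : H →L[ℂ] H) = F x t := by
      rw [← Ring.inverse_unit hu'.unit, hF]
      exact congrArg Ring.inverse hu'.unit_spec
    have hfun2 : (Ring.inverse ∘ fun s : ℝ => 1 + R s t) = fun s => F s t := by
      funext s; rw [Function.comp_apply, hF]
    rw [hfun2] at h2
    refine h2.congr_deriv ?_
    simp only [ContinuousLinearMap.neg_apply, ContinuousLinearMap.mulLeftRight_apply, hiv]
    rw [hrawx x t]
    noncomm_ring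
  have hrawt : ∀ x t : ℝ,
      -((A * A * A) * G x t) * E * G x t + G x t * E * -((A * A * A) * G x t)
        = -((A * A * A) * R x t + R x t * (A * A * A)) := by
    intro x t
    rw [hR, show -((A * A * A) * G x t) * E * G x t + G x t * E * -((A * A * A) * G x t)
        = -((A * A * A) * (G x t * E * G x t) + (G x t * E) * ((A * A * A) * G x t))
        from by noncomm_ring, hA3G x t]
    noncomm_ring
  have hFt : ∀ x t : ℝ, (x, t) ∈ U →
      HasDerivAt (fun s => F x s)
        (F x t * ((A * A * A) * R x t + R x t * (A * A * A)) * F x t) t := by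
    intro x t hxt
    have hu' := hinv (x, t) hxt
    have hRd : HasDerivAt (fun s => 1 + R x s)
        (-((A * A * A) * G x t) * E * G x t + G x t * E * -((A * A * A) * G x t)) t := by
      have h := (((hGt x t).mul_const E).mul (hGt x t)).const_add 1
      have hfun : (fun s : ℝ => 1 + R x s) = fun s => 1 + G x s * E * G x s :=
        funext fun s => by rw [hR]
      rw [hfun]; exact h
    have hfd := hasFDerivAt_ringInverse (𝕜 := ℝ) hu'.unit
    rw [hu'.unit_spec] at hfd
    have h2 := hfd.comp_hasDerivAt t hRd
    have hiv : (↑hu'.unit⁻¹ : H →L[ℂ] H) = F x t := by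
      rw [← Ring.inverse_unit hu'.unit, hF]
      exact congrArg Ring.inverse hu'.unit_spec
    have hfun2 : (Ring.inverse ∘ fun s : ℝ => 1 + R x s) = fun s => F x s := by
      funext s; rw [Function.comp_apply, hF]
    rw [hfun2] at h2
    refine h2.congr_deriv ?_
    simp only [ContinuousLinearMap.neg_apply, ContinuousLinearMap.mulLeftRight_apply, hiv]
    rw [hrawt x t]
    noncomm_ring
  have hMaster : ∀ x t : ℝ, (x, t) ∈ U →
      A * F x t + F x t * A
        = 2 * (F x t * A * F x t) + F x t * (G x t * P * G x t) * F x t := by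
    intro x t hxt
    have h1 := hFone x t hxt
    have h2 := honeF x t hxt
    have eAR : A * R x t = G x t * ((A * E) * G x t) := by
      rw [hR, show A * (G x t * E * G x t) = (A * G x t) * (E * G x t) from by noncomm_ring,
        hAG x t]
      noncomm_ring
    have eRA : R x t * A = G x t * ((E * A) * G x t) := by
      rw [hR, show G x t * E * G x t * A = (G x t * E) * (G x t * A) from by noncomm_ring,
        ← hAG x t]
      noncomm_ring
    calc A * F x t + F x t * A
        = F x t * (1 + R x t) * (A * F x t) + F x t * A * ((1 + R x t) * F x t) := by
          rw [h1, h2]; noncomm_ring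
      _ = F x t * ((A + A + (A * R x t + R x t * A)) * F x t) := by noncomm_ring
      _ = F x t * ((A + A + (G x t * ((A * E) * G x t) + G x t * ((E * A) * G x t))) * F x t) := by
          rw [eAR, eRA]
      _ = F x t * ((A + A + G x t * ((A * E + E * A) * G x t)) * F x t) := by noncomm_ring
      _ = F x t * ((A + A + G x t * (P * G x t)) * F x t) := by rw [hE]
      _ = 2 * (F x t * A * F x t) + F x t * (G x t * P * G x t) * F x t := by noncomm_ring
  have dC : ∀ x t : ℝ, (x, t) ∈ U → HasDerivAt (fun s => ℓ ((G s t*F s t*G s t) b))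
      (-2 * ℓ ((G x t*F x t*A*F x t*G x t) b)) x := by
    intro x t hxt
    have h0 := ((hGx x t).mul (hFx x t hxt)).mul (hGx x t)
    have h1 : HasDerivAt (fun s => G s t*F s t*G s t)
        (-(G x t*F x t*A*F x t*G x t) - (G x t*F x t*A*F x t*G x t)) x := by
      refine h0.congr_deriv ?_
      rw [← oC A (G x t) (F x t) P (hAG x t) (hMaster x t hxt)]
      noncomm_ring
    have h2 := hcomp _ _ _ h1
    refine h2.congr_deriv ?_
    simp only [ContinuousLinearMap.add_apply, ContinuousLinearMap.sub_apply, ContinuousLinearMap.neg_apply, map_add, map_sub, map_neg, hps]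
    ring
  have dN1 : ∀ x t : ℝ, (x, t) ∈ U → HasDerivAt (fun s => ℓ ((G s t*F s t*A*F s t*G s t) b))
      (2 * ℓ ((G x t*F x t*(A*A)*F x t*G x t) b) - 4 * ℓ ((G x t*F x t*A*F x t*A*F x t*G x t) b)) x := by
    intro x t hxt
    have h0 := ((((hGx x t).mul (hFx x t hxt)).mul_const A).mul (hFx x t hxt)).mul (hGx x t)
    have h1 : HasDerivAt (fun s => G s t*F s t*A*F s t*G s t)
        ((G x t*F x t*(A*A)*F x t*G x t) + (G x t*F x t*(A*A)*F x t*G x t) - (G x t*F x t*A*F x t*A*F x t*G x t) - (G x t*F x t*A*F x t*A*F x t*G x t) - (G x t*F x t*A*F x t*A*F x t*G x t) - (G x t*F x t*A*F x t*A*F x t*G x t)) x := by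
      refine h0.congr_deriv ?_
      simp only [Pi.mul_apply]
      rw [← oN1 A (G x t) (F x t) P (hAG x t) (hMaster x t hxt)]
      noncomm_ring
    have h2 := hcomp _ _ _ h1
    refine h2.congr_deriv ?_
    simp only [ContinuousLinearMap.add_apply, ContinuousLinearMap.sub_apply, ContinuousLinearMap.neg_apply, map_add, map_sub, map_neg, hps]
    ring
  have dN2 : ∀ x t : ℝ, (x, t) ∈ U → HasDerivAt (fun s => ℓ ((G s t*F s t*(A*A)*F s t*G s t) b))
      (2 * ℓ ((G x t*F x t*(A*A*A)*F x t*G x t) b) - 2 * ℓ ((G x t*F x t*A*F x t*(A*A)*F x t*G x t) b) - 2 * ℓ ((G x t*F x t*(A*A)*F x t*A*F x t*G x t) b)) x := by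
    intro x t hxt
    have h0 := ((((hGx x t).mul (hFx x t hxt)).mul_const (A*A)).mul (hFx x t hxt)).mul (hGx x t)
    have h1 : HasDerivAt (fun s => G s t*F s t*(A*A)*F s t*G s t)
        ((G x t*F x t*(A*A*A)*F x t*G x t) + (G x t*F x t*(A*A*A)*F x t*G x t) - (G x t*F x t*A*F x t*(A*A)*F x t*G x t) - (G x t*F x t*A*F x t*(A*A)*F x t*G x t) - (G x t*F x t*(A*A)*F x t*A*F x t*G x t) - (G x t*F x t*(A*A)*F x t*A*F x t*G x t)) x := by
      refine h0.congr_deriv ?_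
      simp only [Pi.mul_apply]
      rw [← oN2 A (G x t) (F x t) P (hAG x t) (hMaster x t hxt)]
      noncomm_ring
    have h2 := hcomp _ _ _ h1
    refine h2.congr_deriv ?_
    simp only [ContinuousLinearMap.add_apply, ContinuousLinearMap.sub_apply, ContinuousLinearMap.neg_apply, map_add, map_sub, map_neg, hps]
    ring
  have dN3 : ∀ x t : ℝ, (x, t) ∈ U → HasDerivAt (fun s => ℓ ((G s t*F s t*(A*A*A)*F s t*G s t) b))
      (2 * ℓ ((G x t*F x t*(A*A*A*A)*F x t*G x t) b) - 2 * ℓ ((G x t*F x t*A*F x t*(A*A*A)*F x t*G x t) b) - 2 * ℓ ((G x t*F x t*(A*A*A)*F x t*A*F x t*G x t) b)) x := by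
    intro x t hxt
    have h0 := ((((hGx x t).mul (hFx x t hxt)).mul_const (A*A*A)).mul (hFx x t hxt)).mul (hGx x t)
    have h1 : HasDerivAt (fun s => G s t*F s t*(A*A*A)*F s t*G s t)
        ((G x t*F x t*(A*A*A*A)*F x t*G x t) + (G x t*F x t*(A*A*A*A)*F x t*G x t) - (G x t*F x t*A*F x t*(A*A*A)*F x t*G x t) - (G x t*F x t*A*F x t*(A*A*A)*F x t*G x t) - (G x t*F x t*(A*A*A)*F x t*A*F x t*G x t) - (G x t*F x t*(A*A*A)*F x t*A*F x t*G x t)) x := by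
      refine h0.congr_deriv ?_
      simp only [Pi.mul_apply]
      rw [← oN3 A (G x t) (F x t) P (hAG x t) (hMaster x t hxt)]
      noncomm_ring
    have h2 := hcomp _ _ _ h1
    refine h2.congr_deriv ?_
    simp only [ContinuousLinearMap.add_apply, ContinuousLinearMap.sub_apply, ContinuousLinearMap.neg_apply, map_add, map_sub, map_neg, hps]
    ring
  have dM11 : ∀ x t : ℝ, (x, t) ∈ U → HasDerivAt (fun s => ℓ ((G s t*F s t*A*F s t*A*F s t*G s t) b))
      (ℓ ((G x t*F x t*(A*A)*F x t*A*F x t*G x t) b) + ℓ ((G x t*F x t*A*F x t*(A*A)*F x t*G x t) b) - 4 * ℓ ((G x t*F x t*A*F x t*A*F x t*A*F x t*G x t) b) + ℓ ((G x t*F x t*A*F x t*G x t) b) * ℓ ((G x t*F x t*A*F x t*G x t) b)) x := by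
    intro x t hxt
    have h0 := ((((((hGx x t).mul (hFx x t hxt)).mul_const A).mul (hFx x t hxt)).mul_const A).mul (hFx x t hxt)).mul (hGx x t)
    have h1 : HasDerivAt (fun s => G s t*F s t*A*F s t*A*F s t*G s t)
        ((G x t*F x t*(A*A)*F x t*A*F x t*G x t) + (G x t*F x t*A*F x t*(A*A)*F x t*G x t) - (G x t*F x t*A*F x t*A*F x t*A*F x t*G x t) - (G x t*F x t*A*F x t*A*F x t*A*F x t*G x t) - (G x t*F x t*A*F x t*A*F x t*A*F x t*G x t) - (G x t*F x t*A*F x t*A*F x t*A*F x t*G x t) + ((G x t*F x t*A*F x t*G x t)*P*(G x t*F x t*A*F x t*G x t))) x := by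
      refine h0.congr_deriv ?_
      simp only [Pi.mul_apply]
      rw [← oM11 A (G x t) (F x t) P (hAG x t) (hMaster x t hxt)]
      noncomm_ring
    have h2 := hcomp _ _ _ h1
    refine h2.congr_deriv ?_
    simp only [ContinuousLinearMap.add_apply, ContinuousLinearMap.sub_apply, ContinuousLinearMap.neg_apply, map_add, map_sub, map_neg, hps]
    ring
  have dM12 : ∀ x t : ℝ, (x, t) ∈ U → HasDerivAt (fun s => ℓ ((G s t*F s t*A*F s t*(A*A)*F s t*G s t) b))
      (ℓ ((G x t*F x t*(A*A)*F x t*(A*A)*F x t*G x t) b) + ℓ ((G x t*F x t*A*F x t*(A*A*A)*F x t*G x t) b) - 2 * ℓ ((G x t*F x t*A*F x t*A*F x t*(A*A)*F x t*G x t) b) - 2 * ℓ ((G x t*F x t*A*F x t*(A*A)*F x t*A*F x t*G x t) b) + ℓ ((G x t*F x t*(A*A)*F x t*G x t) b) * ℓ ((G x t*F x t*A*F x t*G x t) b)) x := by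
    intro x t hxt
    have h0 := ((((((hGx x t).mul (hFx x t hxt)).mul_const A).mul (hFx x t hxt)).mul_const (A*A)).mul (hFx x t hxt)).mul (hGx x t)
    have h1 : HasDerivAt (fun s => G s t*F s t*A*F s t*(A*A)*F s t*G s t)
        ((G x t*F x t*(A*A)*F x t*(A*A)*F x t*G x t) + (G x t*F x t*A*F x t*(A*A*A)*F x t*G x t) - (G x t*F x t*A*F x t*A*F x t*(A*A)*F x t*G x t) - (G x t*F x t*A*F x t*A*F x t*(A*A)*F x t*G x t) - (G x t*F x t*A*F x t*(A*A)*F x t*A*F x t*G x t) - (G x t*F x t*A*F x t*(A*A)*F x t*A*F x t*G x t) + ((G x t*F x t*A*F x t*G x t)*P*(G x t*F x t*(A*A)*F x t*G x t))) x := by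
      refine h0.congr_deriv ?_
      simp only [Pi.mul_apply]
      rw [← oM12 A (G x t) (F x t) P (hAG x t) (hMaster x t hxt)]
      noncomm_ring
    have h2 := hcomp _ _ _ h1
    refine h2.congr_deriv ?_
    simp only [ContinuousLinearMap.add_apply, ContinuousLinearMap.sub_apply, ContinuousLinearMap.neg_apply, map_add, map_sub, map_neg, hps]
    ring
  have dM21 : ∀ x t : ℝ, (x, t) ∈ U → HasDerivAt (fun s => ℓ ((G s t*F s t*(A*A)*F s t*A*F s t*G s t) b))
      (ℓ ((G x t*F x t*(A*A*A)*F x t*A*F x t*G x t) b) + ℓ ((G x t*F x t*(A*A)*F x t*(A*A)*F x t*G x t) b) - 2 * ℓ ((G x t*F x t*A*F x t*(A*A)*F x t*A*F x t*G x t) b) - 2 * ℓ ((G x t*F x t*(A*A)*F x t*A*F x t*A*F x t*G x t) b) + ℓ ((G x t*F x t*A*F x t*G x t) b) * ℓ ((G x t*F x t*(A*A)*F x t*G x t) b)) x := by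
    intro x t hxt
    have h0 := ((((((hGx x t).mul (hFx x t hxt)).mul_const (A*A)).mul (hFx x t hxt)).mul_const A).mul (hFx x t hxt)).mul (hGx x t)
    have h1 : HasDerivAt (fun s => G s t*F s t*(A*A)*F s t*A*F s t*G s t)
        ((G x t*F x t*(A*A*A)*F x t*A*F x t*G x t) + (G x t*F x t*(A*A)*F x t*(A*A)*F x t*G x t) - (G x t*F x t*A*F x t*(A*A)*F x t*A*F x t*G x t) - (G x t*F x t*A*F x t*(A*A)*F x t*A*F x t*G x t) - (G x t*F x t*(A*A)*F x t*A*F x t*A*F x t*G x t) - (G x t*F x t*(A*A)*F x t*A*F x t*A*F x t*G x t) + ((G x t*F x t*(A*A)*F x t*G x t)*P*(G x t*F x t*A*F x t*G x t))) x := by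
      refine h0.congr_deriv ?_
      simp only [Pi.mul_apply]
      rw [← oM21 A (G x t) (F x t) P (hAG x t) (hMaster x t hxt)]
      noncomm_ring
    have h2 := hcomp _ _ _ h1
    refine h2.congr_deriv ?_
    simp only [ContinuousLinearMap.add_apply, ContinuousLinearMap.sub_apply, ContinuousLinearMap.neg_apply, map_add, map_sub, map_neg, hps]
    ring
  have dM111 : ∀ x t : ℝ, (x, t) ∈ U → HasDerivAt (fun s => ℓ ((G s t*F s t*A*F s t*A*F s t*A*F s t*G s t) b))
      (ℓ ((G x t*F x t*(A*A)*F x t*A*F x t*A*F x t*G x t) b) + ℓ ((G x t*F x t*A*F x t*A*F x t*(A*A)*F x t*G x t) b) - 4 * ℓ ((G x t*F x t*A*F x t*A*F x t*A*F x t*A*F x t*G x t) b) + ℓ ((G x t*F x t*A*F x t*A*F x t*G x t) b) * ℓ ((G x t*F x t*A*F x t*G x t) b) + ℓ ((G x t*F x t*A*F x t*G x t) b) * ℓ ((G x t*F x t*A*F x t*A*F x t*G x t) b)) x := by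
    intro x t hxt
    have h0 := ((((((((hGx x t).mul (hFx x t hxt)).mul_const A).mul (hFx x t hxt)).mul_const A).mul (hFx x t hxt)).mul_const A).mul (hFx x t hxt)).mul (hGx x t)
    have h1 : HasDerivAt (fun s => G s t*F s t*A*F s t*A*F s t*A*F s t*G s t)
        ((G x t*F x t*(A*A)*F x t*A*F x t*A*F x t*G x t) + (G x t*F x t*A*F x t*A*F x t*(A*A)*F x t*G x t) - (G x t*F x t*A*F x t*A*F x t*A*F x t*A*F x t*G x t) - (G x t*F x t*A*F x t*A*F x t*A*F x t*A*F x t*G x t) - (G x t*F x t*A*F x t*A*F x t*A*F x t*A*F x t*G x t) - (G x t*F x t*A*F x t*A*F x t*A*F x t*A*F x t*G x t) + ((G x t*F x t*A*F x t*G x t)*P*(G x t*F x t*A*F x t*A*F x t*G x t)) + ((G x t*F x t*A*F x t*A*F x t*G x t)*P*(G x t*F x t*A*F x t*G x t))) x := by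
      refine h0.congr_deriv ?_
      simp only [Pi.mul_apply]
      rw [← oM111 A (G x t) (F x t) P (hAG x t) (hMaster x t hxt)]
      noncomm_ring
    have h2 := hcomp _ _ _ h1
    refine h2.congr_deriv ?_
    simp only [ContinuousLinearMap.add_apply, ContinuousLinearMap.sub_apply, ContinuousLinearMap.neg_apply, map_add, map_sub, map_neg, hps]
    ring
  have dCt : ∀ x t : ℝ, (x, t) ∈ U → HasDerivAt (fun s => ℓ ((G x s*F x s*G x s) b))
      (-2 * ℓ ((G x t*F x t*(A*A*A)*F x t*G x t) b)) t := by
    intro x t hxt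
    have h0 := ((hGt x t).mul (hFt x t hxt)).mul (hGt x t)
    have h1 : HasDerivAt (fun s => G x s*F x s*G x s)
        (-(G x t*F x t*(A*A*A)*F x t*G x t) - (G x t*F x t*(A*A*A)*F x t*G x t)) t := by
      refine h0.congr_deriv ?_
      rw [← oCt A (G x t) (F x t) (R x t) (hAG x t) (hFR x t hxt) (hRF x t hxt)]
      noncomm_ring
    have h2 := hcomp _ _ _ h1
    refine h2.congr_deriv ?_
    simp only [ContinuousLinearMap.add_apply, ContinuousLinearMap.sub_apply, ContinuousLinearMap.neg_apply, map_add, map_sub, map_neg, hps]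
    ring
  have dN1t : ∀ x t : ℝ, (x, t) ∈ U → HasDerivAt (fun s => ℓ ((G x s*F x s*A*F x s*G x s) b))
      (2 * ℓ ((G x t*F x t*(A*A*A*A)*F x t*G x t) b) - 2 * ℓ ((G x t*F x t*(A*A*A)*F x t*A*F x t*G x t) b) - 2 * ℓ ((G x t*F x t*A*F x t*(A*A*A)*F x t*G x t) b)) t := by
    intro x t hxt
    have h0 := ((((hGt x t).mul (hFt x t hxt)).mul_const A).mul (hFt x t hxt)).mul (hGt x t)
    have h1 : HasDerivAt (fun s => G x s*F x s*A*F x s*G x s)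
        ((G x t*F x t*(A*A*A*A)*F x t*G x t) + (G x t*F x t*(A*A*A*A)*F x t*G x t) - (G x t*F x t*(A*A*A)*F x t*A*F x t*G x t) - (G x t*F x t*(A*A*A)*F x t*A*F x t*G x t) - (G x t*F x t*A*F x t*(A*A*A)*F x t*G x t) - (G x t*F x t*A*F x t*(A*A*A)*F x t*G x t)) t := by
      refine h0.congr_deriv ?_
      simp only [Pi.mul_apply]
      rw [← oN1t A (G x t) (F x t) (R x t) (hAG x t) (hFR x t hxt) (hRF x t hxt)]
      noncomm_ring
    have h2 := hcomp _ _ _ h1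
    refine h2.congr_deriv ?_
    simp only [ContinuousLinearMap.add_apply, ContinuousLinearMap.sub_apply, ContinuousLinearMap.neg_apply, map_add, map_sub, map_neg, hps]
    ring
  have hj11 : ∀ x t : ℝ, (x, t) ∈ U → ℓ ((G x t*F x t*A*F x t*G x t) b) * ℓ ((G x t*F x t*A*F x t*G x t) b)
      = ℓ ((G x t*F x t*(A*A)*F x t*A*F x t*G x t) b) + ℓ ((G x t*F x t*A*F x t*(A*A)*F x t*G x t) b) - 2 * ℓ ((G x t*F x t*A*F x t*A*F x t*A*F x t*G x t) b) := by
    intro x t hxt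
    have h := congrArg (fun T : H →L[ℂ] H => ℓ (T b)) (oJ11 A (G x t) (F x t) P (hMaster x t hxt))
    simp only [ContinuousLinearMap.add_apply, ContinuousLinearMap.sub_apply, ContinuousLinearMap.neg_apply, map_add, map_sub, map_neg, hps] at h
    linear_combination h
  have hj12 : ∀ x t : ℝ, (x, t) ∈ U → ℓ ((G x t*F x t*(A*A)*F x t*G x t) b) * ℓ ((G x t*F x t*A*F x t*G x t) b)
      = ℓ ((G x t*F x t*(A*A)*F x t*(A*A)*F x t*G x t) b) + ℓ ((G x t*F x t*A*F x t*(A*A*A)*F x t*G x t) b) - 2 * ℓ ((G x t*F x t*A*F x t*A*F x t*(A*A)*F x t*G x t) b) := by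
    intro x t hxt
    have h := congrArg (fun T : H →L[ℂ] H => ℓ (T b)) (oJ12 A (G x t) (F x t) P (hMaster x t hxt))
    simp only [ContinuousLinearMap.add_apply, ContinuousLinearMap.sub_apply, ContinuousLinearMap.neg_apply, map_add, map_sub, map_neg, hps] at h
    linear_combination h
  have hj21 : ∀ x t : ℝ, (x, t) ∈ U → ℓ ((G x t*F x t*A*F x t*G x t) b) * ℓ ((G x t*F x t*(A*A)*F x t*G x t) b)
      = ℓ ((G x t*F x t*(A*A*A)*F x t*A*F x t*G x t) b) + ℓ ((G x t*F x t*(A*A)*F x t*(A*A)*F x t*G x t) b) - 2 * ℓ ((G x t*F x t*(A*A)*F x t*A*F x t*A*F x t*G x t) b) := by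
    intro x t hxt
    have h := congrArg (fun T : H →L[ℂ] H => ℓ (T b)) (oJ21 A (G x t) (F x t) P (hMaster x t hxt))
    simp only [ContinuousLinearMap.add_apply, ContinuousLinearMap.sub_apply, ContinuousLinearMap.neg_apply, map_add, map_sub, map_neg, hps] at h
    linear_combination h
  have hj1m : ∀ x t : ℝ, (x, t) ∈ U → ℓ ((G x t*F x t*A*F x t*A*F x t*G x t) b) * ℓ ((G x t*F x t*A*F x t*G x t) b)
      = ℓ ((G x t*F x t*(A*A)*F x t*A*F x t*A*F x t*G x t) b) + ℓ ((G x t*F x t*A*F x t*(A*A)*F x t*A*F x t*G x t) b) - 2 * ℓ ((G x t*F x t*A*F x t*A*F x t*A*F x t*A*F x t*G x t) b) := by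
    intro x t hxt
    have h := congrArg (fun T : H →L[ℂ] H => ℓ (T b)) (oJ1m A (G x t) (F x t) P (hMaster x t hxt))
    simp only [ContinuousLinearMap.add_apply, ContinuousLinearMap.sub_apply, ContinuousLinearMap.neg_apply, map_add, map_sub, map_neg, hps] at h
    linear_combination h
  have hjm1 : ∀ x t : ℝ, (x, t) ∈ U → ℓ ((G x t*F x t*A*F x t*G x t) b) * ℓ ((G x t*F x t*A*F x t*A*F x t*G x t) b)
      = ℓ ((G x t*F x t*A*F x t*(A*A)*F x t*A*F x t*G x t) b) + ℓ ((G x t*F x t*A*F x t*A*F x t*(A*A)*F x t*G x t) b) - 2 * ℓ ((G x t*F x t*A*F x t*A*F x t*A*F x t*A*F x t*G x t) b) := by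
    intro x t hxt
    have h := congrArg (fun T : H →L[ℂ] H => ℓ (T b)) (oJm1 A (G x t) (F x t) P (hMaster x t hxt))
    simp only [ContinuousLinearMap.add_apply, ContinuousLinearMap.sub_apply, ContinuousLinearMap.neg_apply, map_add, map_sub, map_neg, hps] at h
    linear_combination h
  have hvx : ∀ x t : ℝ, (x, t) ∈ U →
      HasDerivAt (fun y => v y t) (2 * ℓ ((G x t*F x t*A*F x t*G x t) b)) x := by
    intro x t hxt
    have h := (dC x t hxt).neg
    have hfun : (fun y => v y t) = fun y => -ℓ ((G y t * F y t * G y t) b) :=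
      funext fun y => hv y t
    rw [hfun]
    refine h.congr_deriv ?_
    ring
  have hueq : ∀ x t : ℝ, (x, t) ∈ U → u x t = -2 * (2 * ℓ ((G x t*F x t*A*F x t*G x t) b)) := by
    intro x t hxt
    rw [hu, (hvx x t hxt).deriv]
  have hit3 : ∀ f : ℝ → ℂ, iteratedDeriv 3 f = deriv (deriv (deriv f)) := by
    intro f
    rw [show (3 : ℕ) = 2 + 1 from rfl, iteratedDeriv_succ, show (2 : ℕ) = 1 + 1 from rfl,
      iteratedDeriv_succ, iteratedDeriv_one]
  refine ⟨?_, ?_, ?_⟩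
  · -- smoothness
    have hGsm : ContDiff ℝ (⊤ : WithTop ℕ∞) (fun q : ℝ × ℝ => G q.1 q.2) := by
      have hfun : (fun q : ℝ × ℝ => G q.1 q.2)
          = (NormedSpace.exp) ∘ (fun q : ℝ × ℝ => -(q.1 • A) - q.2 • A ^ 3) := by
        funext q; rw [Function.comp_apply, hG]
      rw [hfun]
      refine ContDiff.comp ?_ ?_
      · rw [contDiff_iff_contDiffAt]
        exact fun y => ((NormedSpace.exp_analytic (𝕂 := ℂ) y).contDiffAt).restrict_scalars ℝ
      · exact ((contDiff_fst.smul contDiff_const).neg).sub (contDiff_snd.smul contDiff_const)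
    intro q hq
    have hRsm : ContDiffAt ℝ (⊤ : WithTop ℕ∞) (fun q : ℝ × ℝ => 1 + R q.1 q.2) q := by
      have hfun : (fun q : ℝ × ℝ => 1 + R q.1 q.2)
          = fun q : ℝ × ℝ => 1 + G q.1 q.2 * E * G q.1 q.2 := by
        funext q; rw [hR]
      rw [hfun]
      exact (contDiff_const.add ((hGsm.mul contDiff_const).mul hGsm)).contDiffAt
    have hFsm : ContDiffAt ℝ (⊤ : WithTop ℕ∞) (fun q : ℝ × ℝ => F q.1 q.2) q := by
      have hu' := hinv q hq
      have h1 : ContDiffAt ℝ (⊤ : WithTop ℕ∞) Ring.inverse (1 + R q.1 q.2) := by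
        have h := contDiffAt_ringInverse ℝ (n := (⊤ : WithTop ℕ∞)) hu'.unit
        rwa [hu'.unit_spec] at h
      have hfun : (fun q : ℝ × ℝ => F q.1 q.2)
          = Ring.inverse ∘ (fun q : ℝ × ℝ => 1 + R q.1 q.2) := by
        funext q; rw [Function.comp_apply, hF]
      rw [hfun]
      exact h1.comp q hRsm
    have hvfun : (fun p : ℝ × ℝ => v p.1 p.2) = fun q : ℝ × ℝ =>
        -ℓ ((G q.1 q.2 * F q.1 q.2 * G q.1 q.2) b) := by
      funext q; rw [hv]
    rw [hvfun]
    have hop : ContDiffAt ℝ (⊤ : WithTop ℕ∞) (fun q : ℝ × ℝ => G q.1 q.2 * F q.1 q.2 * G q.1 q.2) q :=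
      (hGsm.contDiffAt.mul hFsm).mul hGsm.contDiffAt
    have happ := (((ℓ.comp (ContinuousLinearMap.apply ℂ H b)).restrictScalars
      ℝ).contDiff.contDiffAt).comp q hop
    have happ' : ContDiffAt ℝ (⊤ : WithTop ℕ∞)
        (fun q : ℝ × ℝ => ℓ ((G q.1 q.2 * F q.1 q.2 * G q.1 q.2) b)) q := happ
    exact ((happ'.neg).contDiffWithinAt).of_le le_top
  · -- potential KdV
    rintro ⟨x₀, t₀⟩ hp
    show 4 * deriv (fun s => v x₀ s) t₀
        = iteratedDeriv 3 (fun s => v s t₀) x₀ + 6 * (deriv (fun s => v s t₀) x₀) ^ 2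
    have hS : IsOpen {s : ℝ | (s, t₀) ∈ U} := hU.preimage (continuous_id.prodMk continuous_const)
    have hvt : HasDerivAt (fun s => v x₀ s) (2 * ℓ ((G x₀ t₀*F x₀ t₀*(A*A*A)*F x₀ t₀*G x₀ t₀) b)) t₀ := by
      have h := (dCt x₀ t₀ hp).neg
      have hfun : (fun s => v x₀ s) = fun s => -ℓ ((G x₀ s*F x₀ s*G x₀ s) b) :=
        funext fun s => hv x₀ s
      rw [hfun]
      refine h.congr_deriv ?_
      ring
    have hd1 : ∀ s, s ∈ {s : ℝ | (s, t₀) ∈ U} →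
        deriv (fun y => v y t₀) s = 2 * ℓ ((G s t₀*F s t₀*A*F s t₀*G s t₀) b) := by
      intro s hs
      exact (hvx s t₀ hs).deriv
    have hd2 : ∀ s, s ∈ {s : ℝ | (s, t₀) ∈ U} →
        deriv (deriv (fun y => v y t₀)) s = 2 * (2 * ℓ ((G s t₀*F s t₀*(A*A)*F s t₀*G s t₀) b) - 4 * ℓ ((G s t₀*F s t₀*A*F s t₀*A*F s t₀*G s t₀) b)) := by
      intro s hs
      have he : deriv (fun y => v y t₀) =ᶠ[nhds s] (fun y => 2 * ℓ ((G y t₀*F y t₀*A*F y t₀*G y t₀) b)) :=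
        eventuallyEq_of_mem (hS.mem_nhds hs) (fun y hy => hd1 y hy)
      exact he.deriv_eq.trans ((dN1 s t₀ hs).const_mul (2 : ℂ)).deriv
    have he2 : deriv (deriv (fun y => v y t₀)) =ᶠ[nhds x₀] (fun y => 2 * (2 * ℓ ((G y t₀*F y t₀*(A*A)*F y t₀*G y t₀) b) - 4 * ℓ ((G y t₀*F y t₀*A*F y t₀*A*F y t₀*G y t₀) b))) :=
      eventuallyEq_of_mem (hS.mem_nhds hp) (fun y hy => hd2 y hy)
    have hd3 := he2.deriv_eq.trans ((((dN2 x₀ t₀ hp).const_mul (2 : ℂ)).sub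
      ((dM11 x₀ t₀ hp).const_mul (4 : ℂ))).const_mul (2 : ℂ)).deriv
    rw [hvt.deriv, hit3, hd3, (hvx x₀ t₀ hp).deriv]
    have hj := hj11 x₀ t₀ hp
    linear_combination (-16 : ℂ) * hj
  · -- KdV
    rintro ⟨x₀, t₀⟩ hp
    show 4 * deriv (fun s => u x₀ s) t₀
        = iteratedDeriv 3 (fun s => u s t₀) x₀ - 6 * u x₀ t₀ * deriv (fun s => u s t₀) x₀
    have hS : IsOpen {s : ℝ | (s, t₀) ∈ U} := hU.preimage (continuous_id.prodMk continuous_const)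
    have hT : IsOpen {s : ℝ | (x₀, s) ∈ U} := hU.preimage (continuous_const.prodMk continuous_id)
    have hut : deriv (fun s => u x₀ s) t₀ = -2 * (2 * (2 * ℓ ((G x₀ t₀*F x₀ t₀*(A*A*A*A)*F x₀ t₀*G x₀ t₀) b) - 2 * ℓ ((G x₀ t₀*F x₀ t₀*(A*A*A)*F x₀ t₀*A*F x₀ t₀*G x₀ t₀) b) - 2 * ℓ ((G x₀ t₀*F x₀ t₀*A*F x₀ t₀*(A*A*A)*F x₀ t₀*G x₀ t₀) b))) := by
      have he : (fun s => u x₀ s) =ᶠ[nhds t₀] (fun s => -2 * (2 * ℓ ((G x₀ s*F x₀ s*A*F x₀ s*G x₀ s) b))) :=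
        eventuallyEq_of_mem (hT.mem_nhds hp) (fun s hs => hueq x₀ s hs)
      exact he.deriv_eq.trans (((dN1t x₀ t₀ hp).const_mul (2 : ℂ)).const_mul (-2 : ℂ)).deriv
    have he1 : ∀ s, s ∈ {s : ℝ | (s, t₀) ∈ U} →
        deriv (fun y => u y t₀) s = -2 * (2 * (2 * ℓ ((G s t₀*F s t₀*(A*A)*F s t₀*G s t₀) b) - 4 * ℓ ((G s t₀*F s t₀*A*F s t₀*A*F s t₀*G s t₀) b))) := by
      intro s hs
      have he : (fun y => u y t₀) =ᶠ[nhds s] (fun y => -2 * (2 * ℓ ((G y t₀*F y t₀*A*F y t₀*G y t₀) b))) :=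
        eventuallyEq_of_mem (hS.mem_nhds hs) (fun y hy => hueq y t₀ hy)
      exact he.deriv_eq.trans (((dN1 s t₀ hs).const_mul (2 : ℂ)).const_mul (-2 : ℂ)).deriv
    have he2 : ∀ s, s ∈ {s : ℝ | (s, t₀) ∈ U} →
        deriv (deriv (fun y => u y t₀)) s
          = -2 * (2 * (2 * (2 * ℓ ((G s t₀*F s t₀*(A*A*A)*F s t₀*G s t₀) b) - 2 * ℓ ((G s t₀*F s t₀*A*F s t₀*(A*A)*F s t₀*G s t₀) b) - 2 * ℓ ((G s t₀*F s t₀*(A*A)*F s t₀*A*F s t₀*G s t₀) b)) - 4 * (ℓ ((G s t₀*F s t₀*(A*A)*F s t₀*A*F s t₀*G s t₀) b) + ℓ ((G s t₀*F s t₀*A*F s t₀*(A*A)*F s t₀*G s t₀) b) - 4 * ℓ ((G s t₀*F s t₀*A*F s t₀*A*F s t₀*A*F s t₀*G s t₀) b) + ℓ ((G s t₀*F s t₀*A*F s t₀*G s t₀) b) * ℓ ((G s t₀*F s t₀*A*F s t₀*G s t₀) b)))) := by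
      intro s hs
      have he : deriv (fun y => u y t₀) =ᶠ[nhds s] (fun y => -2 * (2 * (2 * ℓ ((G y t₀*F y t₀*(A*A)*F y t₀*G y t₀) b) - 4 * ℓ ((G y t₀*F y t₀*A*F y t₀*A*F y t₀*G y t₀) b)))) :=
        eventuallyEq_of_mem (hS.mem_nhds hs) (fun y hy => he1 y hy)
      exact he.deriv_eq.trans ((((((dN2 s t₀ hs).const_mul (2 : ℂ)).sub
        ((dM11 s t₀ hs).const_mul (4 : ℂ)))).const_mul (2 : ℂ)).const_mul (-2 : ℂ)).deriv
    have he3fun : deriv (deriv (fun y => u y t₀)) =ᶠ[nhds x₀]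
        (fun y => -2 * (2 * (2 * (2 * ℓ ((G y t₀*F y t₀*(A*A*A)*F y t₀*G y t₀) b) - 2 * ℓ ((G y t₀*F y t₀*A*F y t₀*(A*A)*F y t₀*G y t₀) b) - 2 * ℓ ((G y t₀*F y t₀*(A*A)*F y t₀*A*F y t₀*G y t₀) b)) - 4 * (ℓ ((G y t₀*F y t₀*(A*A)*F y t₀*A*F y t₀*G y t₀) b) + ℓ ((G y t₀*F y t₀*A*F y t₀*(A*A)*F y t₀*G y t₀) b) - 4 * ℓ ((G y t₀*F y t₀*A*F y t₀*A*F y t₀*A*F y t₀*G y t₀) b) + ℓ ((G y t₀*F y t₀*A*F y t₀*G y t₀) b) * ℓ ((G y t₀*F y t₀*A*F y t₀*G y t₀) b))))) :=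
      eventuallyEq_of_mem (hS.mem_nhds hp) (fun y hy => he2 y hy)
    have hin1 := (((dN3 x₀ t₀ hp).const_mul (2 : ℂ)).sub ((dM12 x₀ t₀ hp).const_mul (2 : ℂ))).sub
      ((dM21 x₀ t₀ hp).const_mul (2 : ℂ))
    have hin2 := (((dM21 x₀ t₀ hp).add (dM12 x₀ t₀ hp)).sub
      ((dM111 x₀ t₀ hp).const_mul (4 : ℂ))).add ((dN1 x₀ t₀ hp).mul (dN1 x₀ t₀ hp))
    have he3 := he3fun.deriv_eq.trans
      ((((hin1.const_mul (2 : ℂ)).sub (hin2.const_mul (4 : ℂ))).const_mul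
        (2 : ℂ)).const_mul (-2 : ℂ)).deriv
    rw [hut, hit3, he3, hueq x₀ t₀ hp, he1 x₀ hp]
    linear_combination (32 : ℂ) * hj12 x₀ t₀ hp + (32 : ℂ) * hj21 x₀ t₀ hp
      - (64 : ℂ) * hj1m x₀ t₀ hp - (64 : ℂ) * hjm1 x₀ t₀ hp
end
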